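/- arXiv:1104.4411 — 9 statements merged into one kernel-verified Lean document; each statement's English description precedes it below -/
import Mathlib

section
/- Let n and d be positive integers with n > 2d, and let r be a non-negative integer such that n/d < (2r+1)/r (interpreting this as always true when r = 0). Then the (2r+1)-st power of the circular complete graph K_{n/d} is isomorphic to the circular complete graph K_{n/((2r+1)d − rn)}. -/
open SimpleGraph

/-- The circular complete graph `K_{n/d}`: vertices `0,...,n-1`, with distinct `i, j`
adjacent iff `d ≤ |i - j| ≤ n - d`. -/
def circKG (n d : ℕ) : SimpleGraph (Fin n) :=
  SimpleGraph.fromRel fun i j =>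
    (d : ℤ) ≤ ((i : ℕ) : ℤ) - ((j : ℕ) : ℤ) ∧ ((i : ℕ) : ℤ) - ((j : ℕ) : ℤ) ≤ (n : ℤ) - (d : ℤ)

/-- The `k`-th power of a graph: distinct vertices are adjacent iff there is a walk of
length exactly `k` between them. -/
def graphPow {V : Type*} (G : SimpleGraph V) (k : ℕ) : SimpleGraph V :=
  SimpleGraph.fromRel fun u v => ∃ w : G.Walk u v, w.length = k

lemma circKG_adj {n d : ℕ} {u v : Fin n} :
    (circKG n d).Adj u v ↔ u ≠ v ∧
      (((d:ℤ) ≤ (u.val:ℤ) - v.val ∧ (u.val:ℤ) - v.val ≤ (n:ℤ) - d) ∨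
       ((d:ℤ) ≤ (v.val:ℤ) - u.val ∧ (v.val:ℤ) - u.val ≤ (n:ℤ) - d)) := by
  simp [circKG, SimpleGraph.fromRel_adj]

lemma graphPow_adj {V : Type*} (G : SimpleGraph V) (k : ℕ) {u v : V} :
    (graphPow G k).Adj u v ↔ u ≠ v ∧ ∃ w : G.Walk u v, w.length = k := by
  rw [graphPow, SimpleGraph.fromRel_adj]
  constructor
  · rintro ⟨h, ⟨w, hw⟩ | ⟨w, hw⟩⟩
    · exact ⟨h, w, hw⟩
    · exact ⟨h, w.reverse, by simpa using hw⟩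
  · rintro ⟨h, w, hw⟩; exact ⟨h, Or.inl ⟨w, hw⟩⟩

lemma mod_split {a n : ℕ} (hn : 0 < n) (ha : a < 2*n) :
    a % n = a ∧ a < n ∨ a % n = a - n ∧ n ≤ a := by
  rcases Nat.lt_or_ge a n with h | h
  · exact Or.inl ⟨Nat.mod_eq_of_lt h, h⟩
  · exact Or.inr ⟨by rw [Nat.mod_eq_sub_mod h, Nat.mod_eq_of_lt (by omega)], h⟩

lemma step_adj {n d : ℕ} (hd : 0 < d) (hn : 2*d < n) {s : ℕ}
    (hs1 : d ≤ s) (hs2 : s ≤ n - d) (u : Fin n) :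
    (circKG n d).Adj u ⟨(u.val + s) % n, Nat.mod_lt _ (by omega)⟩ := by
  have hu := u.isLt
  have h1 := mod_split (a := u.val + s) (n := n) (by omega) (by omega)
  rw [circKG_adj, Ne, Fin.ext_iff]
  simp only [Fin.val_mk]
  generalize hg : (u.val + s) % n = m at h1 ⊢
  omega

lemma walk_exists {n d : ℕ} (hd : 0 < d) (hn : 2*d < n) :
    ∀ (m : ℕ) (u : Fin n) (S : ℕ), m*d ≤ S → S ≤ m*(n-d) →
      ∃ w : (circKG n d).Walk u ⟨(u.val + S) % n, Nat.mod_lt _ (by omega)⟩, w.length = m := by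
  intro m
  induction m with
  | zero =>
    intro u S h1 h2
    have hS : S = 0 := by omega
    subst hS
    have he : u = (⟨(u.val + 0) % n, Nat.mod_lt _ (by omega)⟩ : Fin n) := by
      apply Fin.ext; simp [Nat.mod_eq_of_lt u.isLt]
    exact ⟨(Walk.nil).copy rfl he, by simp⟩
  | succ m ih =>
    intro u S h1 h2
    have e1 : (m+1)*d = m*d + d := by ring
    have e2 : (m+1)*(n-d) = m*(n-d) + (n-d) := by ring
    obtain ⟨P, hP⟩ : ∃ P, P = m*d := ⟨_, rfl⟩
    obtain ⟨Q, hQ⟩ : ∃ Q, Q = m*(n-d) := ⟨_, rfl⟩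
    rw [e1, ← hP] at h1; rw [e2, ← hQ] at h2
    have hPQ : P ≤ Q := by rw [hP, hQ]; exact Nat.mul_le_mul_left m (by omega)
    have hex : ∃ s, d ≤ s ∧ s ≤ n-d ∧ P ≤ S - s ∧ S - s ≤ Q ∧ s ≤ S := by
      by_cases hc : S - P ≤ n - d
      · exact ⟨S - P, by omega, by omega, by omega, by omega, by omega⟩
      · exact ⟨n - d, by omega, by omega, by omega, by omega, by omega⟩
    obtain ⟨s, hb1, hb2, hb3, hb4, hb5⟩ := hex
    rw [hP] at hb3; rw [hQ] at hb4
    set u' : Fin n := ⟨(u.val + s) % n, Nat.mod_lt _ (by omega)⟩ with hu'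
    obtain ⟨w, hw⟩ := ih u' (S - s) hb3 hb4
    have he : (⟨(u'.val + (S - s)) % n, Nat.mod_lt _ (by omega)⟩ : Fin n)
        = ⟨(u.val + S) % n, Nat.mod_lt _ (by omega)⟩ := by
      apply Fin.ext
      simp only [hu', Fin.val_mk]
      rw [Nat.mod_add_mod]
      congr 1
      omega
    exact ⟨Walk.cons (step_adj hd hn hb1 hb2 u) (w.copy rfl he), by simp [hw]⟩

lemma walk_sum {n d : ℕ} {u v : Fin n} (w : (circKG n d).Walk u v) :
    ∃ S k : ℕ, w.length * d ≤ S ∧ S ≤ w.length * (n - d) ∧ u.val + S = v.val + k * n := by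
  induction w with
  | nil => exact ⟨0, 0, by simp, by simp, by simp⟩
  | @cons u x v h p ih =>
    obtain ⟨S, k, h1, h2, h3⟩ := ih
    rw [circKG_adj] at h
    have hu := u.isLt
    have hx := x.isLt
    have hsx : ∃ s c : ℕ, d ≤ s ∧ s ≤ n - d ∧ u.val + s = x.val + c * n := by
      rcases h.2 with ⟨ha, hb⟩ | ⟨ha, hb⟩
      · exact ⟨n - (u.val - x.val), 1, by omega, by omega, by omega⟩
      · exact ⟨x.val - u.val, 0, by omega, by omega, by omega⟩
    obtain ⟨s, c, hs1, hs2, hs3⟩ := hsx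
    have e1 : (p.length + 1) * d = p.length * d + d := by ring
    have e2 : (p.length + 1) * (n - d) = p.length * (n - d) + (n - d) := by ring
    have e3 : (c + k) * n = c * n + k * n := by ring
    refine ⟨s + S, c + k, ?_, ?_, ?_⟩
    · rw [Walk.length_cons, e1]; omega
    · rw [Walk.length_cons, e2]; omega
    · omega

/-- Lemma 1(a): if `n > 2d` and `n/d < (2r+1)/r` (encoded as `r * n < (2r+1) * d`, which is
automatic when `r = 0`), then `K_{n/d}^{2r+1} ≅ K_{n/((2r+1)d - rn)}`. -/
theorem stmt_0 (n d r : ℕ) (hd : 0 < d) (hn : 2 * d < n) (hr : r * n < (2 * r + 1) * d) :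
    Nonempty (graphPow (circKG n d) (2 * r + 1) ≃g circKG n ((2 * r + 1) * d - r * n)) := by
  constructor
  refine ⟨Equiv.refl _, ?_⟩
  intro u v
  simp only [Equiv.refl_apply]
  rw [circKG_adj, graphPow_adj]
  have hu := u.isLt
  have hv := v.isLt
  obtain ⟨P, hP⟩ : ∃ P, P = (2*r+1)*d := ⟨_, rfl⟩
  obtain ⟨Q, hQ⟩ : ∃ Q, Q = r*n := ⟨_, rfl⟩
  obtain ⟨E, hEe⟩ : ∃ E, E = (2*r+1)*(n-d) := ⟨_, rfl⟩
  have hrPQ : Q < P := by rw [hP, hQ]; exact hr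
  have hEPQ : E + P = n + 2*Q := by
    rw [hP, hQ, hEe]
    have hnd : n - d + d = n := by omega
    calc (2*r+1)*(n-d) + (2*r+1)*d = (2*r+1)*((n-d)+d) := by ring
      _ = (2*r+1)*n := by rw [hnd]
      _ = n + 2*(r*n) := by ring
  rw [show (2 * r + 1) * d - r * n = P - Q by rw [hP, hQ]]
  constructor
  · -- circKG n (P-Q) adj → walk of length 2r+1
    rintro ⟨hne, hcase⟩
    refine ⟨hne, ?_⟩
    have ht : ∃ t c : ℕ, P - Q ≤ t ∧ t ≤ n - (P - Q) ∧ u.val + t = v.val + c * n := by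
      rcases hcase with ⟨ha, hb⟩ | ⟨ha, hb⟩
      · exact ⟨n - (u.val - v.val), 1, by omega, by omega, by omega⟩
      · exact ⟨v.val - u.val, 0, by omega, by omega, by omega⟩
    obtain ⟨t, c, ht1, ht2, ht3⟩ := ht
    obtain ⟨w, hw⟩ := walk_exists hd hn (2*r+1) u (t + Q)
      (by rw [← hP]; omega) (by rw [← hEe]; omega)
    have hev : ∀ hh : (u.val + (t + Q)) % n < n,
        (⟨(u.val + (t + Q)) % n, hh⟩ : Fin n) = v := by
      intro hh
      apply Fin.ext
      simp only [Fin.val_mk]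
      have hcr : u.val + (t + Q) = v.val + (c + r) * n := by
        have e : (c + r) * n = c * n + r * n := by ring
        rw [← hQ] at e
        omega
      rw [hcr, Nat.add_mul_mod_self_right, Nat.mod_eq_of_lt hv]
    exact ⟨w.copy rfl (hev _), by simp [hw]⟩
  · -- walk of length 2r+1 → circKG n (P-Q) adj
    rintro ⟨hne, w, hw⟩
    refine ⟨hne, ?_⟩
    obtain ⟨S, k, h1, h2, h3⟩ := walk_sum w
    rw [hw, ← hP] at h1
    rw [hw, ← hEe] at h2
    have hval : u.val ≠ v.val := fun h => hne (Fin.ext h)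
    have hk : k * n = Q ∨ k * n = Q + n := by
      have hS1 : Q < S := by omega
      have hS2 : S < n + Q := by omega
      have hk1 : r < k + 1 := by
        by_contra hcon
        push_neg at hcon
        have hle := Nat.mul_le_mul_right n hcon
        have e : (k+1) * n = k*n + n := by ring
        rw [← hQ] at hle
        omega
      have hk2 : k < r + 2 := by
        by_contra hcon
        push_neg at hcon
        have hle := Nat.mul_le_mul_right n hcon
        have e : (r+2) * n = r*n + 2*n := by ring
        rw [← hQ] at e
        omega
      have hkor : k = r ∨ k = r + 1 := by omega
      rcases hkor with h | h
      · left; rw [h, ← hQ]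
      · right; rw [h, show (r+1)*n = r*n + n by ring, ← hQ]
    omega
end

section
/- Let n and d be positive integers with n > 2d, and let s be a non-negative integer. Then the circular complete graph K_{n/d} is homomorphically equivalent to the (2s+1)-st power of the circular complete graph K_{(2s+1)n/(sn+d)}. -/
open SimpleGraph

private lemma circ_adj {N D : ℕ} (hD : 0 < D) (u v : Fin N) (t : ℤ)
    (h1 : (D : ℤ) ≤ t) (h2 : t ≤ (N : ℤ) - D)
    (h3 : (N : ℤ) ∣ (((v : ℕ) : ℤ) - ((u : ℕ) : ℤ) - t)) :
    (circKG N D).Adj u v := by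
  obtain ⟨q, hq⟩ := h3
  have hu : ((u : ℕ) : ℤ) < N := by exact_mod_cast u.isLt
  have hv : ((v : ℕ) : ℤ) < N := by exact_mod_cast v.isLt
  have hu0 : (0 : ℤ) ≤ ((u : ℕ) : ℤ) := Int.natCast_nonneg _
  have hv0 : (0 : ℤ) ≤ ((v : ℕ) : ℤ) := Int.natCast_nonneg _
  have hD' : (0 : ℤ) < D := by exact_mod_cast hD
  have hNpos : (0 : ℤ) < N := by linarith
  have hq1 : q < 1 := by
    have h : (N : ℤ) * q < N * 1 := by linarith
    exact lt_of_mul_lt_mul_left h hNpos.le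
  have hq2 : -2 < q := by
    have h : (N : ℤ) * (-2) < N * q := by linarith
    exact lt_of_mul_lt_mul_left h hNpos.le
  have hq0 : q = 0 ∨ q = -1 := by omega
  simp only [circKG, fromRel_adj]
  rcases hq0 with rfl | rfl
  · rw [mul_zero] at hq
    refine ⟨?_, Or.inr ⟨by linarith, by linarith⟩⟩
    intro he
    have hval := congrArg (fun x : Fin N => ((x : ℕ) : ℤ)) he
    linarith
  · rw [mul_neg_one] at hq
    refine ⟨?_, Or.inl ⟨by linarith, by linarith⟩⟩
    intro he
    have hval := congrArg (fun x : Fin N => ((x : ℕ) : ℤ)) he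
    linarith

private lemma walk_chain {V : Type*} {G : SimpleGraph V} :
    ∀ (m : ℕ) (f : ℕ → V), (∀ k < m, G.Adj (f k) (f (k + 1))) →
      ∃ w : G.Walk (f 0) (f m), w.length = m
  | 0, _, _ => ⟨.nil, rfl⟩
  | (m + 1), f, h => by
    obtain ⟨w, hw⟩ := walk_chain m (fun k => f (k + 1)) (fun k hk => h (k + 1) (by omega))
    exact ⟨.cons (h 0 (by omega)) w, by simp [hw]⟩

private lemma step_residue {n d s : ℕ} {u x : Fin ((2 * s + 1) * n)}
    (h : (circKG ((2 * s + 1) * n) (s * n + d)).Adj u x) :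
    ∃ r : ℤ, (d : ℤ) ≤ r ∧ r ≤ (n : ℤ) - d ∧
      (((2 * s + 1) * n : ℕ) : ℤ) ∣
        (((x : ℕ) : ℤ) - ((u : ℕ) : ℤ) - ((s : ℤ) * (n : ℤ) + r)) := by
  rw [circKG, fromRel_adj] at h
  obtain ⟨hne, h | h⟩ := h
  · obtain ⟨ha, hb⟩ := h
    push_cast at ha hb
    refine ⟨((2 * (s : ℤ) + 1) * n) - (((u : ℕ) : ℤ) - ((x : ℕ) : ℤ)) - (s : ℤ) * n,
      by linarith, by linarith, ⟨-1, by push_cast; ring⟩⟩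
  · obtain ⟨ha, hb⟩ := h
    push_cast at ha hb
    exact ⟨(((x : ℕ) : ℤ) - ((u : ℕ) : ℤ)) - (s : ℤ) * n,
      by linarith, by linarith, ⟨0, by push_cast; ring⟩⟩

private lemma walk_residue {n d s : ℕ} {u v : Fin ((2 * s + 1) * n)}
    (w : (circKG ((2 * s + 1) * n) (s * n + d)).Walk u v) :
    ∃ r : ℤ, (w.length : ℤ) * d ≤ r ∧ r ≤ (w.length : ℤ) * ((n : ℤ) - d) ∧
      (((2 * s + 1) * n : ℕ) : ℤ) ∣
        (((v : ℕ) : ℤ) - ((u : ℕ) : ℤ) - ((w.length : ℤ) * ((s : ℤ) * n) + r)) := by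
  induction w with
  | nil => exact ⟨0, by simp, by simp, by simp⟩
  | cons h p ih =>
    obtain ⟨r0, h0l, h0r, q0, hq0⟩ := step_residue h
    obtain ⟨r1, h1l, h1r, q1, hq1⟩ := ih
    refine ⟨r0 + r1, ?_, ?_, ⟨q0 + q1, ?_⟩⟩
    · simp only [Walk.length_cons]; push_cast; push_cast at h1l; linarith
    · simp only [Walk.length_cons]; push_cast; push_cast at h1r; linarith
    · simp only [Walk.length_cons]
      push_cast at hq0 hq1 ⊢
      linear_combination hq0 + hq1

private lemma div_adj {n d s : ℕ} (hd : 0 < d) (hn : 2 * d < n) {a b ρ : ℕ}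
    (hb : b < (2 * s + 1) * n) (hab : a + ρ = b)
    (h1 : (2 * s + 1) * d ≤ ρ) (h2 : ρ + (2 * s + 1) * d ≤ (2 * s + 1) * n)
    (ha' : a / (2 * s + 1) < n) (hb' : b / (2 * s + 1) < n) :
    (circKG n d).Adj ⟨a / (2 * s + 1), ha'⟩ ⟨b / (2 * s + 1), hb'⟩ := by
  have hm0 : 0 < 2 * s + 1 := by omega
  have h3 : a / (2 * s + 1) + d ≤ b / (2 * s + 1) := by
    have key : (a + d * (2 * s + 1)) / (2 * s + 1) ≤ b / (2 * s + 1) :=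
      Nat.div_le_div_right (by
        have e : d * (2 * s + 1) = (2 * s + 1) * d := Nat.mul_comm _ _
        omega)
    rwa [Nat.add_mul_div_right _ _ hm0] at key
  have h4 : b / (2 * s + 1) ≤ a / (2 * s + 1) + (n - d) := by
    have key : b / (2 * s + 1) ≤ (a + (n - d) * (2 * s + 1)) / (2 * s + 1) :=
      Nat.div_le_div_right (by
        have e1 : (n - d) * (2 * s + 1) = n * (2 * s + 1) - d * (2 * s + 1) :=
          Nat.sub_mul _ _ _
        have e2 : n * (2 * s + 1) = (2 * s + 1) * n := Nat.mul_comm _ _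
        have e3 : d * (2 * s + 1) = (2 * s + 1) * d := Nat.mul_comm _ _
        omega)
    rwa [Nat.add_mul_div_right _ _ hm0] at key
  simp only [circKG, fromRel_adj]
  refine ⟨?_, Or.inr ⟨?_, ?_⟩⟩
  · intro he
    have h5 : a / (2 * s + 1) = b / (2 * s + 1) := congrArg Fin.val he
    omega
  · show (d : ℤ) ≤ ((b / (2 * s + 1) : ℕ) : ℤ) - ((a / (2 * s + 1) : ℕ) : ℤ)
    omega
  · show ((b / (2 * s + 1) : ℕ) : ℤ) - ((a / (2 * s + 1) : ℕ) : ℤ) ≤ (n : ℤ) - (d : ℤ)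
    omega

private lemma hom2_aux {n d s : ℕ} (hd : 0 < d) (hn : 2 * d < n)
    (x y : Fin ((2 * s + 1) * n)) (hx : x.val / (2 * s + 1) < n)
    (hy : y.val / (2 * s + 1) < n)
    (hw : ∃ w : (circKG ((2 * s + 1) * n) (s * n + d)).Walk x y, w.length = 2 * s + 1) :
    (circKG n d).Adj ⟨x.val / (2 * s + 1), hx⟩ ⟨y.val / (2 * s + 1), hy⟩ := by
  obtain ⟨w, hwl⟩ := hw
  obtain ⟨r, hr1, hr2, q, hq⟩ := walk_residue w
  rw [hwl] at hr1 hr2 hq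
  push_cast at hr1 hr2 hq
  have hq' : ((y : ℕ) : ℤ) - ((x : ℕ) : ℤ) - r = ((2 * (s : ℤ) + 1) * n) * (q + s) := by
    linear_combination hq
  have hxlt : ((x : ℕ) : ℤ) < (2 * (s : ℤ) + 1) * n := by exact_mod_cast x.isLt
  have hylt : ((y : ℕ) : ℤ) < (2 * (s : ℤ) + 1) * n := by exact_mod_cast y.isLt
  have hx0 : (0 : ℤ) ≤ ((x : ℕ) : ℤ) := Int.natCast_nonneg _
  have hy0 : (0 : ℤ) ≤ ((y : ℕ) : ℤ) := Int.natCast_nonneg _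
  have hd' : (0 : ℤ) < d := by exact_mod_cast hd
  have hn' : 2 * (d : ℤ) < n := by exact_mod_cast hn
  have hs0 : (0 : ℤ) ≤ s := Int.natCast_nonneg _
  have hnn : (0 : ℤ) < (n : ℤ) := by linarith
  have hNpos : (0 : ℤ) < (2 * (s : ℤ) + 1) * n := by
    apply mul_pos (by linarith) hnn
  have hsd : (0 : ℤ) ≤ (s : ℤ) * (d : ℤ) := by positivity
  have hmd : (0 : ℤ) < (2 * (s : ℤ) + 1) * d := mul_pos (by linarith) hd'
  have hrpos : (0 : ℤ) < r := by linarith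
  have hrN : r ≤ (2 * (s : ℤ) + 1) * n := by nlinarith [hr2, hsd, hd', hnn]
  have hqs1 : q + s < 1 := by
    have h : ((2 * (s : ℤ) + 1) * n) * (q + s) < ((2 * (s : ℤ) + 1) * n) * 1 := by linarith
    exact lt_of_mul_lt_mul_left h hNpos.le
  have hqs2 : -2 < q + s := by
    have h : ((2 * (s : ℤ) + 1) * n) * (-2) < ((2 * (s : ℤ) + 1) * n) * (q + s) := by linarith
    exact lt_of_mul_lt_mul_left h hNpos.le
  have hqs0 : q + s = 0 ∨ q + s = -1 := by omega
  rcases hqs0 with hc | hc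
  · rw [hc, mul_zero] at hq'
    have hxy : (x : ℕ) ≤ (y : ℕ) := by
      have : ((x : ℕ) : ℤ) ≤ ((y : ℕ) : ℤ) := by linarith
      exact_mod_cast this
    have hρ : ((y : ℕ) - (x : ℕ) : ℕ) = ((y : ℕ) : ℤ) - ((x : ℕ) : ℤ) := by
      push_cast [hxy]; ring
    have hh1 : (2 * s + 1) * d ≤ (y : ℕ) - (x : ℕ) := by
      zify; rw [hρ]; push_cast; linarith
    have hh2 : ((y : ℕ) - (x : ℕ)) + (2 * s + 1) * d ≤ (2 * s + 1) * n := by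
      zify; rw [hρ]; push_cast; linarith
    exact div_adj hd hn y.isLt (by omega) hh1 hh2 hx hy
  · rw [hc, mul_neg_one] at hq'
    have hxy : (y : ℕ) ≤ (x : ℕ) := by
      have : ((y : ℕ) : ℤ) ≤ ((x : ℕ) : ℤ) := by linarith
      exact_mod_cast this
    have hρ : ((x : ℕ) - (y : ℕ) : ℕ) = ((x : ℕ) : ℤ) - ((y : ℕ) : ℤ) := by
      push_cast [hxy]; ring
    have hh1 : (2 * s + 1) * d ≤ (x : ℕ) - (y : ℕ) := by
      zify; rw [hρ]; push_cast; linarith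
    have hh2 : ((x : ℕ) - (y : ℕ)) + (2 * s + 1) * d ≤ (2 * s + 1) * n := by
      zify; rw [hρ]; push_cast; linarith
    exact (div_adj hd hn x.isLt (by omega) hh1 hh2 hy hx).symm

private lemma hom1_aux {n d s : ℕ} (hd : 0 < d) (hn : 2 * d < n) (i j : Fin n)
    (h1 : (d : ℤ) ≤ ((i : ℕ) : ℤ) - ((j : ℕ) : ℤ))
    (h2 : ((i : ℕ) : ℤ) - ((j : ℕ) : ℤ) ≤ (n : ℤ) - (d : ℤ))
    (va vb : Fin ((2 * s + 1) * n))
    (hav : (va : ℕ) = (2 * s + 1) * (j : ℕ)) (hbv : (vb : ℕ) = (2 * s + 1) * (i : ℕ)) :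
    (graphPow (circKG ((2 * s + 1) * n) (s * n + d)) (2 * s + 1)).Adj va vb := by
  have hji : (j : ℕ) < (i : ℕ) := by omega
  have hcd : d ≤ (i : ℕ) - (j : ℕ) := by omega
  have hcn : ((i : ℕ) - (j : ℕ)) + d ≤ n := by omega
  obtain ⟨c, hji'⟩ : ∃ c, (j : ℕ) + c = (i : ℕ) := ⟨(i : ℕ) - (j : ℕ), by omega⟩
  have hcd' : d ≤ c := by omega
  have hcn' : c + d ≤ n := by omega
  have hm0 : 0 < 2 * s + 1 := by omega
  have hn0 : 0 < n := by omega
  have hNpos : 0 < (2 * s + 1) * n := Nat.mul_pos hm0 hn0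
  set f : ℕ → Fin ((2 * s + 1) * n) :=
    fun k => ⟨((2 * s + 1) * (j : ℕ) + k * (s * n + c)) % ((2 * s + 1) * n),
      Nat.mod_lt _ hNpos⟩ with hf
  have key : ∀ X : ℕ, (((2 * s + 1) * n : ℕ) : ℤ) ∣
      ((X % ((2 * s + 1) * n) : ℕ) : ℤ) - (X : ℤ) := by
    intro X
    refine ⟨-((X : ℤ) / (((2 * s + 1) * n : ℕ) : ℤ)), ?_⟩
    rw [Int.natCast_mod, Int.emod_def]
    ring
  have chain : ∀ k < 2 * s + 1,
      (circKG ((2 * s + 1) * n) (s * n + d)).Adj (f k) (f (k + 1)) := by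
    intro k _
    apply circ_adj (t := ((s * n + c : ℕ) : ℤ))
    · exact Nat.add_pos_right _ hd
    · push_cast
      have : (d : ℤ) ≤ c := by exact_mod_cast hcd'
      linarith
    · push_cast
      have : (c : ℤ) + d ≤ n := by exact_mod_cast hcn'
      linarith
    · obtain ⟨p1, hp1⟩ := key ((2 * s + 1) * (j : ℕ) + (k + 1) * (s * n + c))
      obtain ⟨p2, hp2⟩ := key ((2 * s + 1) * (j : ℕ) + k * (s * n + c))
      refine ⟨p1 - p2, ?_⟩
      show ((((2 * s + 1) * (j : ℕ) + (k + 1) * (s * n + c)) % ((2 * s + 1) * n) : ℕ) : ℤ)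
          - ((((2 * s + 1) * (j : ℕ) + k * (s * n + c)) % ((2 * s + 1) * n) : ℕ) : ℤ)
          - ((s * n + c : ℕ) : ℤ) = (((2 * s + 1) * n : ℕ) : ℤ) * (p1 - p2)
      push_cast at hp1 hp2 ⊢
      linear_combination hp1 - hp2
  obtain ⟨w, hw⟩ := walk_chain (2 * s + 1) f chain
  have e0 : f 0 = va := by
    apply Fin.ext
    show ((2 * s + 1) * (j : ℕ) + 0 * (s * n + c)) % ((2 * s + 1) * n) = (va : ℕ)
    have hlt : (2 * s + 1) * (j : ℕ) < (2 * s + 1) * n := mul_lt_mul_of_pos_left j.isLt hm0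
    rw [Nat.zero_mul, Nat.add_zero, Nat.mod_eq_of_lt hlt, hav]
  have e1 : f (2 * s + 1) = vb := by
    apply Fin.ext
    show ((2 * s + 1) * (j : ℕ) + (2 * s + 1) * (s * n + c)) % ((2 * s + 1) * n) = (vb : ℕ)
    have hval : (2 * s + 1) * (j : ℕ) + (2 * s + 1) * (s * n + c)
        = ((2 * s + 1) * n) * s + (2 * s + 1) * (i : ℕ) := by
      rw [← hji']; ring
    have hlt : (2 * s + 1) * (i : ℕ) < (2 * s + 1) * n := mul_lt_mul_of_pos_left i.isLt hm0
    rw [hval, Nat.mul_add_mod, Nat.mod_eq_of_lt hlt, hbv]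
  simp only [graphPow, fromRel_adj]
  refine ⟨?_, Or.inl ⟨w.copy e0 e1, by simp [hw]⟩⟩
  intro he
  have hval := congrArg Fin.val he
  rw [hav, hbv] at hval
  have := Nat.eq_of_mul_eq_mul_left hm0 hval
  omega

/-- Lemma 1(b): for `n > 2d` and any non-negative integer `s`, the circular complete graph
`K_{n/d}` is homomorphically equivalent to `K_{(2s+1)n/(sn+d)}^{2s+1}`. -/
theorem stmt_1 (n d s : ℕ) (hd : 0 < d) (hn : 2 * d < n) :
    Nonempty (circKG n d →g graphPow (circKG ((2 * s + 1) * n) (s * n + d)) (2 * s + 1)) ∧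
    Nonempty (graphPow (circKG ((2 * s + 1) * n) (s * n + d)) (2 * s + 1) →g circKG n d) := by
  have hm0 : 0 < 2 * s + 1 := by omega
  constructor
  · refine ⟨⟨fun i => ⟨(2 * s + 1) * i.val, mul_lt_mul_of_pos_left i.isLt hm0⟩, ?_⟩⟩
    intro i j hij
    rw [circKG, fromRel_adj] at hij
    obtain ⟨hne, h | h⟩ := hij
    · exact (hom1_aux hd hn i j h.1 h.2 _ _ rfl rfl).symm
    · exact hom1_aux hd hn j i h.1 h.2 _ _ rfl rfl
  · refine ⟨⟨fun u => ⟨u.val / (2 * s + 1), Nat.div_lt_of_lt_mul u.isLt⟩, ?_⟩⟩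
    intro u v huv
    rw [graphPow, fromRel_adj] at huv
    obtain ⟨hne, h | h⟩ := huv
    · exact hom2_aux hd hn u v _ _ h
    · exact (hom2_aux hd hn v u _ _ h).symm
end

section
/- Let r and s be non-negative integers and let G be a finite non-bipartite graph with circular chromatic number χ_c(G). If (2r+1)/(2s+1) < χ_c(G)/(χ_c(G)−2), then χ_c(G^{(2r+1)/(2s+1)}) ≤ (2s+1)·χ_c(G) / ((s−r)·χ_c(G) + 2r + 1). -/
open SimpleGraph

/-- The subdivision `G^{1/k}`: every edge of `G` is replaced by a path of length `k`.
An interior point at distance `i` from `u` and `k - i` from `v` along the edge `uv`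
(`0 < i < k`) is recorded as the unordered pair `{(u, i), (v, k - i)}`. -/
def subdiv {V : Type*} (G : SimpleGraph V) (k : ℕ) :
    SimpleGraph (V ⊕ {p : Sym2 (V × ℕ) //
      ∃ u v i, G.Adj u v ∧ 0 < i ∧ i < k ∧ p = Sym2.mk (u, i) (v, k - i)}) :=
  SimpleGraph.fromRel fun x y =>
    match x, y with
    | Sum.inl a, Sum.inl b => k = 1 ∧ G.Adj a b
    | Sum.inl a, Sum.inr p => ∃ v, G.Adj a v ∧ p.1 = Sym2.mk (a, 1) (v, k - 1)
    | Sum.inr _, Sum.inl _ => False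
    | Sum.inr p, Sum.inr q => ∃ u v i, G.Adj u v ∧ 0 < i ∧ i + 1 < k ∧
        p.1 = Sym2.mk (u, i) (v, k - i) ∧ q.1 = Sym2.mk (u, i + 1) (v, k - i - 1)

/-- The circular chromatic number: the infimum (in `ℝ`) of `n / d` over all pairs
`(n, d)` with `0 < d`, `2d ≤ n`, such that `G` admits a homomorphism to `K_{n/d}`. -/
noncomputable def circChrom {V : Type*} (G : SimpleGraph V) : ℝ :=
  sInf {x : ℝ | ∃ n d : ℕ, 0 < d ∧ 2 * d ≤ n ∧ Nonempty (G →g circKG n d) ∧ x = n / d}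

namespace CircAux

lemma emod_small {a m : ℤ} (h0 : 0 ≤ a) (hm : a < m) : a % m = a := Int.emod_eq_of_lt h0 hm

lemma emod_shift (a m : ℤ) : (a + m) % m = a % m := by
  simpa using Int.add_mul_emod_self_left (a := a) (b := m) (c := 1)

lemma key_sum (n : ℤ) {A B : ℤ} (hA0 : 0 ≤ A) (hAn : A < n) (hB0 : 0 ≤ B) (hBn : B < n)
    (hne : A ≠ B) : (B - A) % n + (A - B) % n = n := by
  rcases lt_or_gt_of_ne hne with h | h
  · have h1 : (B - A) % n = B - A := emod_small (by linarith) (by linarith)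
    have h2 : (A - B) % n = A - B + n := by
      rw [← emod_shift]; exact emod_small (by linarith) (by linarith)
    linarith
  · have h1 : (A - B) % n = A - B := emod_small (by linarith) (by linarith)
    have h2 : (B - A) % n = B - A + n := by
      rw [← emod_shift]; exact emod_small (by linarith) (by linarith)
    linarith

variable {V : Type*} {G : SimpleGraph V} {n d : ℕ}

/-- cyclic displacement of an edge, in `[d, n-d]`. -/
def dlt (f : G →g circKG n d) (u v : V) : ℤ := (((f v : ℕ) : ℤ) - ((f u : ℕ) : ℤ)) % n

lemma int_ne (f : G →g circKG n d) {u v : V} (h : G.Adj u v) :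
    (((f u : ℕ) : ℤ)) ≠ ((f v : ℕ) : ℤ) := by
  have h2 := f.map_adj h
  unfold circKG at h2
  rw [SimpleGraph.fromRel_adj] at h2
  exact fun hc => h2.1 (Fin.ext (by exact_mod_cast hc))

lemma dlt_bound (hd : 0 < d) (f : G →g circKG n d) {u v : V} (h : G.Adj u v) :
    (d:ℤ) ≤ dlt f u v ∧ dlt f u v ≤ (n:ℤ) - d := by
  have h2 := f.map_adj h
  change (SimpleGraph.fromRel _).Adj _ _ at h2
  rw [SimpleGraph.fromRel_adj] at h2
  have hAn : ((f u : ℕ) : ℤ) < n := by exact_mod_cast (f u).isLt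
  have hBn : ((f v : ℕ) : ℤ) < n := by exact_mod_cast (f v).isLt
  have hA0 : (0:ℤ) ≤ ((f u : ℕ) : ℤ) := Int.ofNat_nonneg _
  have hB0 : (0:ℤ) ≤ ((f v : ℕ) : ℤ) := Int.ofNat_nonneg _
  have hd' : (0:ℤ) < d := by exact_mod_cast hd
  unfold dlt
  rcases h2.2 with ⟨h1, h2'⟩ | ⟨h1, h2'⟩
  · have he : (((f v : ℕ) : ℤ) - ((f u : ℕ) : ℤ)) % n
        = ((f v : ℕ) : ℤ) - ((f u : ℕ) : ℤ) + n := by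
      rw [← emod_shift]
      exact emod_small (by linarith) (by linarith)
    rw [he]; constructor <;> linarith
  · have he : (((f v : ℕ) : ℤ) - ((f u : ℕ) : ℤ)) % n
        = ((f v : ℕ) : ℤ) - ((f u : ℕ) : ℤ) := emod_small (by linarith) (by linarith)
    rw [he]; constructor <;> linarith

lemma dlt_add (f : G →g circKG n d) {u v : V} (h : G.Adj u v) :
    dlt f u v + dlt f v u = n := by
  have hAn : ((f u : ℕ) : ℤ) < n := by exact_mod_cast (f u).isLt
  have hBn : ((f v : ℕ) : ℤ) < n := by exact_mod_cast (f v).isLt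
  exact key_sum n (Int.ofNat_nonneg _) hAn (Int.ofNat_nonneg _) hBn (int_ne f h)

/-- value of the interior point at distance `i` from `u` on edge `uv` -/
def gval (f : G →g circKG n d) (s : ℕ) (u v : V) (i : ℕ) : ℤ :=
  (2*s+1) * ((f u : ℕ) : ℤ) + (i : ℤ) * (dlt f u v + s * n)

lemma gval_swap (f : G →g circKG n d) (s : ℕ) {u v : V} (huv : G.Adj u v) {i : ℕ}
    (hik : i ≤ 2*s+1) :
    gval f s u v i ≡ gval f s v u (2*s+1-i) [ZMOD ((2*s+1)*n : ℕ)] := by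
  have hsum := dlt_add f huv
  have hq : dlt f u v = ((f v : ℕ) : ℤ) - ((f u : ℕ) : ℤ)
      - n * ((((f v : ℕ) : ℤ) - ((f u : ℕ) : ℤ))/n) := Int.emod_def _ _
  rw [Int.modEq_iff_dvd]
  refine ⟨((((f v : ℕ) : ℤ) - ((f u : ℕ) : ℤ))/n) + (s:ℤ) + 1 - i, ?_⟩
  have hcast : ((2*s+1-i : ℕ) : ℤ) = 2*(s:ℤ)+1 - i := by push_cast [hik]; ring
  unfold gval
  rw [hcast]
  have hδ' : dlt f v u = n - dlt f u v := by linarith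
  rw [hδ']
  push_cast
  linear_combination (-(2*(s:ℤ)+1)) * hq


lemma gval_congr (f : G →g circKG n d) (s : ℕ) {u v u' v' : V} {i i' : ℕ}
    (huv : G.Adj u v) (hik : i < 2*s+1) (hik' : i' < 2*s+1)
    (heq : Sym2.mk (u,i) (v,2*s+1-i) = Sym2.mk (u',i') (v',2*s+1-i')) :
    gval f s u v i ≡ gval f s u' v' i' [ZMOD ((2*s+1)*n : ℕ)] := by
  rw [Sym2.eq_iff] at heq
  simp only [Prod.mk.injEq] at heq
  rcases heq with ⟨⟨hu, hi⟩, ⟨hv, _⟩⟩ | ⟨⟨hu, hi⟩, ⟨hv, hj⟩⟩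
  · subst hu; subst hi; subst hv; exact Int.ModEq.refl _
  · have hi' : i' = 2*s+1-i := by omega
    subst hv; subst hu; subst hi'
    exact gval_swap f s huv (le_of_lt hik)


variable {V : Type*} {G : SimpleGraph V} {n d : ℕ}

abbrev SV {V : Type*} (G : SimpleGraph V) (k : ℕ) :=
  V ⊕ {p : Sym2 (V × ℕ) //
      ∃ u v i, G.Adj u v ∧ 0 < i ∧ i < k ∧ p = Sym2.mk (u, i) (v, k - i)}

noncomputable def psi (f : G →g circKG n d) (s : ℕ) : SV G (2*s+1) → ℤ
  | Sum.inl u => (2*s+1) * ((f u : ℕ) : ℤ)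
  | Sum.inr p => gval f s p.2.choose p.2.choose_spec.choose p.2.choose_spec.choose_spec.choose

lemma psi_spec (f : G →g circKG n d) (s : ℕ) (p : {p : Sym2 (V × ℕ) //
      ∃ u v i, G.Adj u v ∧ 0 < i ∧ i < 2*s+1 ∧ p = Sym2.mk (u, i) (v, 2*s+1 - i)})
    {u v : V} {i : ℕ} (huv : G.Adj u v) (hik : i < 2*s+1)
    (hp : p.1 = Sym2.mk (u,i) (v,2*s+1-i)) :
    psi f s (Sum.inr p) ≡ gval f s u v i [ZMOD ((2*s+1)*n : ℕ)] := by
  have hc := p.2.choose_spec.choose_spec.choose_spec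
  have h1 : psi f s (Sum.inr p) = gval f s p.2.choose p.2.choose_spec.choose
      p.2.choose_spec.choose_spec.choose := rfl
  rw [h1]
  exact gval_congr f s hc.1 hc.2.2.1 hik ((hc.2.2.2).symm.trans hp)

lemma modeq_flip {N a b δ0 : ℤ} (h : b ≡ a + δ0 [ZMOD N]) : a ≡ b + (N - δ0) [ZMOD N] := by
  rw [Int.modEq_iff_dvd] at h ⊢
  obtain ⟨c, hc⟩ := h
  exact ⟨1 - c, by linarith [hc]⟩

lemma edge_step (hd : 0 < d) (f : G →g circKG n d) (s : ℕ) {x y : SV G (2*s+1)}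
    (hxy : (subdiv G (2*s+1)).Adj x y) :
    ∃ δ : ℤ, (s:ℤ)*n + d ≤ δ ∧ δ ≤ ((s:ℤ)+1)*n - d ∧
      psi f s y ≡ psi f s x + δ [ZMOD ((2*s+1)*n : ℕ)] := by
  have hNc : (((2*s+1)*n : ℕ) : ℤ) = (2*(s:ℤ)+1)*n := by push_cast; ring
  have hmk : ∀ {x y : SV G (2*s+1)} {u v : V}, G.Adj u v →
      (psi f s y ≡ psi f s x + (dlt f u v + s*n) [ZMOD ((2*s+1)*n : ℕ)]) →
      ∃ δ : ℤ, (s:ℤ)*n + d ≤ δ ∧ δ ≤ ((s:ℤ)+1)*n - d ∧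
        psi f s y ≡ psi f s x + δ [ZMOD ((2*s+1)*n : ℕ)] := by
    intro x y u v huv hm
    exact ⟨dlt f u v + s*n, by have := (dlt_bound hd f huv).1; linarith,
      by have := (dlt_bound hd f huv).2; linarith, hm⟩
  have hflip : ∀ {x y : SV G (2*s+1)},
      (∃ δ : ℤ, (s:ℤ)*n + d ≤ δ ∧ δ ≤ ((s:ℤ)+1)*n - d ∧
        psi f s y ≡ psi f s x + δ [ZMOD ((2*s+1)*n : ℕ)]) →
      ∃ δ : ℤ, (s:ℤ)*n + d ≤ δ ∧ δ ≤ ((s:ℤ)+1)*n - d ∧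
        psi f s x ≡ psi f s y + δ [ZMOD ((2*s+1)*n : ℕ)] := by
    rintro x y ⟨δ0, h1, h2, h3⟩
    refine ⟨(((2*s+1)*n : ℕ) : ℤ) - δ0, ?_, ?_, modeq_flip h3⟩
    · rw [hNc]; linarith
    · rw [hNc]; linarith
  -- the two basic forward computations
  have hlin : ∀ (a b : V), G.Adj a b → s = 0 →
      psi f s (Sum.inl b) ≡ psi f s (Sum.inl a) + (dlt f a b + s*n)
        [ZMOD ((2*s+1)*n : ℕ)] := by
    intro a b hab hs
    show ((2*s+1) * ((f b : ℕ) : ℤ)) ≡ ((2*s+1) * ((f a : ℕ) : ℤ)) + _ [ZMOD _]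
    subst hs
    rw [Int.modEq_iff_dvd]
    refine ⟨-((((f b : ℕ) : ℤ) - ((f a : ℕ) : ℤ))/n), ?_⟩
    have := Int.emod_def (((f b : ℕ) : ℤ) - ((f a : ℕ) : ℤ)) n
    unfold dlt
    push_cast
    push_cast at this
    linarith
  have hint : ∀ (a : V) (q : {p : Sym2 (V × ℕ) //
      ∃ u v i, G.Adj u v ∧ 0 < i ∧ i < 2*s+1 ∧ p = Sym2.mk (u, i) (v, 2*s+1 - i)}),
      (∃ v, G.Adj a v ∧ q.1 = Sym2.mk (a, 1) (v, 2*s+1 - 1)) →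
      ∃ δ : ℤ, (s:ℤ)*n + d ≤ δ ∧ δ ≤ ((s:ℤ)+1)*n - d ∧
        psi f s (Sum.inr q) ≡ psi f s (Sum.inl a) + δ [ZMOD ((2*s+1)*n : ℕ)] := by
    rintro a q ⟨v, hav, hq⟩
    rcases Nat.eq_zero_or_pos s with hs | hs
    · exfalso; obtain ⟨_, _, i0, _, h1, h2, _⟩ := q.2; omega
    have h1 := psi_spec f s q hav (by omega) hq
    refine hmk hav ?_
    have hgv : gval f s a v 1 = psi f s (Sum.inl a) + (dlt f a v + s*n) := by
      show _ = (2*s+1) * ((f a : ℕ) : ℤ) + _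
      unfold gval; push_cast; ring
    rw [hgv] at h1
    exact h1
  have hintint : ∀ (p q : {p : Sym2 (V × ℕ) //
      ∃ u v i, G.Adj u v ∧ 0 < i ∧ i < 2*s+1 ∧ p = Sym2.mk (u, i) (v, 2*s+1 - i)}),
      (∃ u v i, G.Adj u v ∧ 0 < i ∧ i + 1 < 2*s+1 ∧
        p.1 = Sym2.mk (u, i) (v, 2*s+1 - i) ∧
        q.1 = Sym2.mk (u, i + 1) (v, 2*s+1 - i - 1)) →
      ∃ δ : ℤ, (s:ℤ)*n + d ≤ δ ∧ δ ≤ ((s:ℤ)+1)*n - d ∧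
        psi f s (Sum.inr q) ≡ psi f s (Sum.inr p) + δ [ZMOD ((2*s+1)*n : ℕ)] := by
    rintro p q ⟨u, v, i, huv, hi0, hik, hp, hq⟩
    have hre : 2*s+1-i-1 = 2*s+1-(i+1) := by omega
    rw [hre] at hq
    have h1 := psi_spec f s p huv (by omega) hp
    have h2 := psi_spec f s q huv (by omega) hq
    refine hmk huv ?_
    have hgv : gval f s u v (i+1) = gval f s u v i + (dlt f u v + s*n) := by
      unfold gval; push_cast; ring
    rw [hgv] at h2
    exact h2.trans (Int.ModEq.add_right _ h1.symm)
  unfold subdiv at hxy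
  rw [SimpleGraph.fromRel_adj] at hxy
  obtain ⟨hne, hrel⟩ := hxy
  rcases x with a | p <;> rcases y with b | q
  · rcases hrel with ⟨hk, hab⟩ | ⟨hk, hab⟩
    · exact hmk hab (hlin a b hab (by omega))
    · exact hmk hab.symm (hlin a b hab.symm (by omega))
  · rcases hrel with hr | hr
    · exact hint a q hr
    · exact hr.elim
  · rcases hrel with hr | hr
    · exact hr.elim
    · exact hflip (hint b p hr)
  · rcases hrel with hr | hr
    · exact hintint p q hr
    · exact hflip (hintint q p hr)


lemma walk_disp (hd : 0 < d) (f : G →g circKG n d) (s : ℕ) {x y : SV G (2*s+1)}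
    (w : (subdiv G (2*s+1)).Walk x y) :
    ∃ T : ℤ, (w.length : ℤ) * ((s:ℤ)*n + d) ≤ T ∧ T ≤ (w.length : ℤ) * (((s:ℤ)+1)*n - d) ∧
      psi f s y ≡ psi f s x + T [ZMOD ((2*s+1)*n : ℕ)] := by
  induction w with
  | nil => exact ⟨0, by simp, by simp, by simpa using Int.ModEq.refl _⟩
  | @cons u v z h w ih =>
    obtain ⟨δ, h1, h2, h3⟩ := edge_step hd f s h
    obtain ⟨T, g1, g2, g3⟩ := ih
    refine ⟨δ + T, ?_, ?_, ?_⟩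
    · simp only [SimpleGraph.Walk.length_cons]; push_cast; linarith
    · simp only [SimpleGraph.Walk.length_cons]; push_cast; linarith
    · have h4 := h3.add_right T
      rw [add_assoc] at h4
      exact g3.trans h4

lemma landing {N D t T q : ℤ} (R : ℤ) (hN : 0 < N)
    (hD2pos : 0 < (2*R+1)*D - R*N)
    (ht0 : 0 ≤ t) (htN : t < N) (hT1 : (2*R+1)*D ≤ T) (hT2 : T ≤ (2*R+1)*(N-D))
    (hq : T = t + N*q) :
    (2*R+1)*D - R*N ≤ t ∧ t ≤ N - ((2*R+1)*D - R*N) := by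
  constructor
  · by_contra hcon
    push_neg at hcon
    have hq0 : 0 < q - R := by nlinarith
    have hq1 : R + 1 ≤ q := by linarith [Int.add_one_le_iff.mpr (by linarith : R < q)]
    nlinarith [mul_le_mul_of_nonneg_left hq1 hN.le]
  · by_contra hcon
    push_neg at hcon
    have h1 : N*q < N*R := by nlinarith
    have h2 : q < R := lt_of_mul_lt_mul_left h1 hN.le
    have h3 : q ≤ R - 1 := by linarith [Int.add_one_le_iff.mpr h2]
    nlinarith [mul_le_mul_of_nonneg_left h3 hN.le]

/-- The vertex map of the homomorphism. -/
noncomputable def phi (hn : 0 < n) (f : G →g circKG n d) (s : ℕ) (z : SV G (2*s+1)) :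
    Fin ((2*s+1)*n) :=
  ⟨(psi f s z % (((2*s+1)*n : ℕ) : ℤ)).toNat, by
    have hN : (0:ℤ) < (((2*s+1)*n : ℕ) : ℤ) := by
      have : 0 < (2*s+1)*n := by positivity
      exact_mod_cast this
    have h1 := Int.emod_nonneg (psi f s z) (ne_of_gt hN)
    have h2 := Int.emod_lt_of_pos (psi f s z) hN
    omega⟩

lemma phi_val (hn : 0 < n) (f : G →g circKG n d) (s : ℕ) (z : SV G (2*s+1)) :
    ((phi hn f s z : ℕ) : ℤ) = psi f s z % (((2*s+1)*n : ℕ) : ℤ) := by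
  have hN : (0:ℤ) < (((2*s+1)*n : ℕ) : ℤ) := by
    have : 0 < (2*s+1)*n := by positivity
    exact_mod_cast this
  exact Int.toNat_of_nonneg (Int.emod_nonneg _ (ne_of_gt hN))


lemma main_adj (hd : 0 < d) (hn : 0 < n) (f : G →g circKG n d) (r s : ℕ) (D2 : ℕ)
    (hD2 : (D2:ℤ) = (2*(r:ℤ)+1)*((s:ℤ)*n+d) - r*(((2*s+1)*n : ℕ) : ℤ))
    (hD2pos : 0 < D2)
    {x y : SV G (2*s+1)} (hxy : (graphPow (subdiv G (2*s+1)) (2*r+1)).Adj x y) :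
    (circKG ((2*s+1)*n) D2).Adj (phi hn f s x) (phi hn f s y) := by
  have hNpos : 0 < (2*s+1)*n := by positivity
  have hN : (0:ℤ) < (((2*s+1)*n : ℕ) : ℤ) := by exact_mod_cast hNpos
  have hNexp : (((2*s+1)*n : ℕ) : ℤ) = (2*(s:ℤ)+1)*n := by push_cast; ring
  unfold graphPow at hxy
  rw [SimpleGraph.fromRel_adj] at hxy
  obtain ⟨hne, hw⟩ := hxy
  have hwxy : ∃ w : (subdiv G (2*s+1)).Walk x y, w.length = 2*r+1 := by
    rcases hw with ⟨w, hwl⟩ | ⟨w, hwl⟩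
    · exact ⟨w, hwl⟩
    · exact ⟨w.reverse, by rw [SimpleGraph.Walk.length_reverse]; exact hwl⟩
  obtain ⟨w, hwl⟩ := hwxy
  obtain ⟨T, g1, g2, g3⟩ := walk_disp hd f s w
  rw [hwl] at g1 g2
  push_cast at g1 g2
  set t : ℤ := (psi f s y - psi f s x) % (((2*s+1)*n : ℕ) : ℤ) with htdef
  have ht0 : 0 ≤ t := Int.emod_nonneg _ (ne_of_gt hN)
  have htN : t < (((2*s+1)*n : ℕ) : ℤ) := Int.emod_lt_of_pos _ hN
  rw [Int.modEq_iff_dvd] at g3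
  obtain ⟨c, hc⟩ := g3
  obtain ⟨q, hTq⟩ : ∃ q : ℤ, T = t + (((2*s+1)*n : ℕ) : ℤ) * q := by
    refine ⟨c + (psi f s y - psi f s x)/(((2*s+1)*n : ℕ) : ℤ), ?_⟩
    have h5 : psi f s y - psi f s x
        - (((2*s+1)*n : ℕ) : ℤ) * ((psi f s y - psi f s x)/(((2*s+1)*n : ℕ) : ℤ)) = t :=
      (Int.emod_def _ _).symm
    have h6 : psi f s x + T - psi f s y = (((2*s+1)*n : ℕ) : ℤ) * c := hc
    linarith [h5, h6, mul_add ((((2*s+1)*n : ℕ)) : ℤ) c ((psi f s y - psi f s x)/(((2*s+1)*n : ℕ) : ℤ))]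
  have hD2posZ : (0:ℤ) < (D2:ℤ) := by exact_mod_cast hD2pos
  have hland : (D2:ℤ) ≤ t ∧ t ≤ (((2*s+1)*n : ℕ) : ℤ) - D2 := by
    have := landing (r:ℤ) hN (by rw [← hD2] at *; linarith)
      ht0 htN (by linarith) (by rw [hNexp]; linarith) hTq
    rw [← hD2] at this
    exact this
  have ha := phi_val hn f s x
  have hb := phi_val hn f s y
  have ha0 : (0:ℤ) ≤ ((phi hn f s x : ℕ) : ℤ) := Int.ofNat_nonneg _
  have hb0 : (0:ℤ) ≤ ((phi hn f s y : ℕ) : ℤ) := Int.ofNat_nonneg _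
  have haN : ((phi hn f s x : ℕ) : ℤ) < (((2*s+1)*n : ℕ) : ℤ) := by
    exact_mod_cast (phi hn f s x).isLt
  have hbN : ((phi hn f s y : ℕ) : ℤ) < (((2*s+1)*n : ℕ) : ℤ) := by
    exact_mod_cast (phi hn f s y).isLt
  obtain ⟨M, hm⟩ : ∃ M : ℤ, ((phi hn f s y : ℕ) : ℤ) - ((phi hn f s x : ℕ) : ℤ) - t
      = (((2*s+1)*n : ℕ) : ℤ) * M := by
    refine ⟨psi f s x / (((2*s+1)*n : ℕ) : ℤ) - psi f s y / (((2*s+1)*n : ℕ) : ℤ)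
      + (psi f s y - psi f s x)/(((2*s+1)*n : ℕ) : ℤ), ?_⟩
    rw [ha, hb, htdef, Int.emod_def, Int.emod_def, Int.emod_def]
    ring
  have hM1 : M < 1 := by
    have h7 : (((2*s+1)*n : ℕ) : ℤ) * M < (((2*s+1)*n : ℕ) : ℤ) * 1 := by linarith
    exact lt_of_mul_lt_mul_left h7 hN.le
  have hM2 : -2 < M := by
    have h7 : (((2*s+1)*n : ℕ) : ℤ) * (-2) < (((2*s+1)*n : ℕ) : ℤ) * M := by linarith
    exact lt_of_mul_lt_mul_left h7 hN.le
  have hM3 : M = 0 ∨ M = -1 := by omega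
  unfold circKG
  rw [SimpleGraph.fromRel_adj]
  constructor
  · intro hEq
    have hab : ((phi hn f s y : ℕ) : ℤ) = ((phi hn f s x : ℕ) : ℤ) := by rw [hEq]
    rcases hM3 with h0 | h0 <;> rw [h0] at hm <;>
      [linarith [hland.1]; linarith [hland.2]]
  · rcases hM3 with h0 | h0
    · right
      rw [h0] at hm
      exact ⟨by linarith [hland.1], by linarith [hland.2]⟩
    · left
      rw [h0] at hm
      exact ⟨by linarith [hland.2], by linarith [hland.1]⟩


lemma core_hom {V : Type*} (G : SimpleGraph V) (n d r s : ℕ) (hd : 0 < d) (hdn : 2*d ≤ n)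
    (f : G →g circKG n d) (D2 : ℕ)
    (hD2 : (D2:ℤ) = ((s:ℤ)-r)*n + (2*r+1)*d) (hD2pos : 0 < D2) :
    Nonempty (graphPow (subdiv G (2*s+1)) (2*r+1) →g circKG ((2*s+1)*n) D2) := by
  have hn : 0 < n := by omega
  have hD2' : (D2:ℤ) = (2*(r:ℤ)+1)*((s:ℤ)*n+d) - r*(((2*s+1)*n : ℕ) : ℤ) := by
    rw [hD2]; push_cast; ring
  exact ⟨⟨phi hn f s, fun hxy => main_adj hd hn f r s D2 hD2' hD2pos hxy⟩⟩


lemma bddBelow_S {V : Type*} (G : SimpleGraph V) :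
    BddBelow {x : ℝ | ∃ n d : ℕ, 0 < d ∧ 2 * d ≤ n ∧ Nonempty (G →g circKG n d) ∧ x = n / d} := by
  refine ⟨0, fun x hx => ?_⟩
  obtain ⟨n, d, hd, _, _, hx⟩ := hx
  rw [hx]; positivity

end CircAux

open CircAux in
/-- If `G` is a finite non-bipartite graph and `(2r+1)/(2s+1) < χ_c(G)/(χ_c(G) - 2)`, then
`χ_c(G^{(2r+1)/(2s+1)}) ≤ (2s+1)χ_c(G) / ((s-r)χ_c(G) + 2r + 1)`. -/
theorem stmt_2 {V : Type*} [Fintype V] (G : SimpleGraph V) (hG : ¬ G.Colorable 2) (r s : ℕ)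
    (h : (2 * r + 1 : ℝ) / (2 * s + 1) < circChrom G / (circChrom G - 2)) :
    circChrom (graphPow (subdiv G (2 * s + 1)) (2 * r + 1)) ≤
      (2 * s + 1 : ℝ) * circChrom G / (((s : ℝ) - (r : ℝ)) * circChrom G + (2 * r + 1)) := by
  classical
  set S : Set ℝ := {x : ℝ | ∃ n d : ℕ, 0 < d ∧ 2 * d ≤ n ∧ Nonempty (G →g circKG n d) ∧ x = n / d}
    with hSdef
  have hSinf : circChrom G = sInf S := rfl
  have hbdd : BddBelow S := bddBelow_S G
  have hχ0 : 0 ≤ circChrom G := by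
    rw [hSinf]
    refine Real.sInf_nonneg fun x hx => ?_
    obtain ⟨n, d, hd, _, _, hx⟩ := hx
    rw [hx]; positivity
  have hpos : (0:ℝ) < (2 * r + 1 : ℝ) / (2 * s + 1) := by positivity
  have hχ2 : 2 < circChrom G := by
    by_contra hle
    push_neg at hle
    have hnp : circChrom G / (circChrom G - 2) ≤ 0 := by
      rcases eq_or_lt_of_le hle with he | hlt
      · rw [← he]; simp
      · exact div_nonpos_of_nonneg_of_nonpos hχ0 (by linarith)
    linarith
  have hSne : S.Nonempty := by
    by_contra hne
    rw [Set.not_nonempty_iff_eq_empty] at hne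
    have : circChrom G = 0 := by rw [hSinf, hne, Real.sInf_empty]
    linarith
  -- abbreviations
  have hkpos : (0:ℝ) < 2*(s:ℝ)+1 := by positivity
  have hcpos : (0:ℝ) < 2*(r:ℝ)+1 := by positivity
  have hden : 0 < ((s:ℝ)-r) * circChrom G + (2*(r:ℝ)+1) := by
    rw [div_lt_div_iff₀ hkpos (by linarith)] at h
    nlinarith
  refine le_of_forall_gt_imp_ge_of_dense fun z hz => ?_
  -- continuity argument
  have hcont : ContinuousAt (fun y : ℝ => (2*(s:ℝ)+1)*y/(((s:ℝ)-r)*y + (2*(r:ℝ)+1)))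
      (circChrom G) := by
    apply ContinuousAt.div
    · fun_prop
    · fun_prop
    · exact hden.ne'
  have hz' : (2*(s:ℝ)+1)*circChrom G/(((s:ℝ)-r)*circChrom G + (2*(r:ℝ)+1)) < z := by
    calc (2*(s:ℝ)+1)*circChrom G/(((s:ℝ)-r)*circChrom G + (2*(r:ℝ)+1))
        = (2 * s + 1 : ℝ) * circChrom G / (((s : ℝ) - (r : ℝ)) * circChrom G + (2 * r + 1)) := by
          norm_num
      _ < z := hz
  have hev : ∀ᶠ y in nhds (circChrom G),
      (2*(s:ℝ)+1)*y/(((s:ℝ)-r)*y + (2*(r:ℝ)+1)) < z ∧ 0 < ((s:ℝ)-r)*y + (2*(r:ℝ)+1) := by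
    have h1 := hcont.tendsto.eventually_lt_const hz'
    have h2 : ContinuousAt (fun y : ℝ => ((s:ℝ)-r)*y + (2*(r:ℝ)+1)) (circChrom G) := by fun_prop
    have h3 := h2.tendsto.eventually_const_lt hden
    exact h1.and h3
  rw [Metric.eventually_nhds_iff] at hev
  obtain ⟨ε, hε, hball⟩ := hev
  obtain ⟨y, hyS, hylt⟩ : ∃ y ∈ S, y < circChrom G + ε := by
    refine exists_lt_of_csInf_lt hSne ?_
    rw [← hSinf]; linarith
  have hyge : circChrom G ≤ y := by rw [hSinf]; exact csInf_le hbdd hyS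
  have hdist : dist y (circChrom G) < ε := by
    rw [Real.dist_eq, abs_of_nonneg (by linarith)]; linarith
  obtain ⟨hFy, hdeny⟩ := hball hdist
  obtain ⟨n, d, hd, hdn, ⟨f⟩, hy⟩ := hyS
  have hd0 : (0:ℝ) < d := by exact_mod_cast hd
  -- positivity of the new denominator
  have hreal : (0:ℝ) < ((s:ℝ)-r)*n + (2*(r:ℝ)+1)*d := by
    have h9 : (((s:ℝ)-r)*y + (2*(r:ℝ)+1))*d = ((s:ℝ)-r)*n + (2*(r:ℝ)+1)*d := by
      rw [hy]; field_simp
    nlinarith [mul_pos hdeny hd0]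
  have hD2Zpos : (0:ℤ) < ((s:ℤ)-r)*n + (2*r+1)*d := by
    have : ((((s:ℤ)-r)*n + (2*r+1)*d : ℤ) : ℝ) = ((s:ℝ)-r)*n + (2*(r:ℝ)+1)*d := by
      push_cast; ring
    exact_mod_cast this ▸ hreal
  set D2 : ℕ := (((s:ℤ)-r)*n + (2*r+1)*d).toNat with hD2def
  have hD2cast : (D2:ℤ) = ((s:ℤ)-r)*n + (2*r+1)*d := Int.toNat_of_nonneg hD2Zpos.le
  have hD2pos : 0 < D2 := by
    have : (0:ℤ) < (D2:ℤ) := by rw [hD2cast]; exact hD2Zpos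
    exact_mod_cast this
  obtain ⟨F⟩ := core_hom G n d r s hd hdn f D2 hD2cast hD2pos
  have h2D2 : 2 * D2 ≤ (2*s+1)*n := by
    have : 2 * (D2:ℤ) ≤ ((2*s+1)*n : ℕ) := by
      rw [hD2cast]
      push_cast
      nlinarith [(by exact_mod_cast hdn : 2*(d:ℤ) ≤ n)]
    exact_mod_cast this
  have hmem : ((((2*s+1)*n : ℕ) : ℝ)/(D2:ℝ)) ∈
      {x : ℝ | ∃ n' d' : ℕ, 0 < d' ∧ 2 * d' ≤ n' ∧
        Nonempty (graphPow (subdiv G (2 * s + 1)) (2 * r + 1) →g circKG n' d') ∧ x = n' / d'} :=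
    ⟨(2*s+1)*n, D2, hD2pos, h2D2, ⟨F⟩, rfl⟩
  have hle : circChrom (graphPow (subdiv G (2 * s + 1)) (2 * r + 1)) ≤
      ((((2*s+1)*n : ℕ) : ℝ)/(D2:ℝ)) :=
    csInf_le (bddBelow_S _) hmem
  have hD2r : (D2:ℝ) = ((s:ℝ)-r)*n + (2*(r:ℝ)+1)*d := by
    have : ((D2:ℤ):ℝ) = ((((s:ℤ)-r)*n + (2*r+1)*d : ℤ) : ℝ) := by exact_mod_cast hD2cast
    push_cast at this
    push_cast
    linarith
  have heq : ((((2*s+1)*n : ℕ) : ℝ)/(D2:ℝ)) = (2*(s:ℝ)+1)*y/(((s:ℝ)-r)*y + (2*(r:ℝ)+1)) := by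
    rw [hy, hD2r]
    push_cast
    rw [div_eq_div_iff (by nlinarith) (by rw [hy] at hdeny; exact hdeny.ne')]
    field_simp
    try ring
  linarith [heq ▸ hle]
end

section
/- Let G be a finite non-bipartite graph and s a non-negative integer. Then the circular chromatic number of the subdivision G^{1/(2s+1)} equals (2s+1)·χ_c(G) / (s·χ_c(G) + 1). -/
open SimpleGraph

def toFinN (N : ℕ) (hN : 0 < N) (z : ℤ) : Fin N :=
  ⟨(z % N).toNat, by
    have h1 : 0 ≤ z % N := Int.emod_nonneg z (by exact_mod_cast hN.ne')
    have h2 : z % N < N := Int.emod_lt_of_pos z (by exact_mod_cast hN)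
    omega⟩

lemma toFinN_coe (N : ℕ) (hN : 0 < N) (z : ℤ) : ((toFinN N hN z : ℕ) : ℤ) = z % N := by
  have h1 : 0 ≤ z % N := Int.emod_nonneg z (by exact_mod_cast hN.ne')
  simp [toFinN, Int.toNat_of_nonneg h1]

lemma toFinN_congr (N : ℕ) (hN : 0 < N) {z w : ℤ} (h : (N:ℤ) ∣ (z - w)) :
    toFinN N hN z = toFinN N hN w := by
  have h2 : z % N = w % N :=
    Int.emod_eq_emod_iff_emod_sub_eq_zero.2 (Int.emod_eq_zero_of_dvd h)
  simp [toFinN, h2]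

lemma circ_adj_of (m D : ℕ) (hD : 0 < D) (x y : Fin m) (w : ℤ)
    (h1 : (D:ℤ) ≤ w) (h2 : w ≤ (m:ℤ) - D)
    (hc : (m:ℤ) ∣ (((y:ℕ):ℤ) - ((x:ℕ):ℤ) - w)) : (circKG m D).Adj x y := by
  have hx : ((x:ℕ):ℤ) < m := by exact_mod_cast x.isLt
  have hy : ((y:ℕ):ℤ) < m := by exact_mod_cast y.isLt
  have hx0 : (0:ℤ) ≤ ((x:ℕ):ℤ) := by positivity
  have hy0 : (0:ℤ) ≤ ((y:ℕ):ℤ) := by positivity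
  have hm : (0:ℤ) < m := by linarith
  obtain ⟨q, hq⟩ := hc
  have hq01 : q = 0 ∨ q = -1 := by
    rcases lt_trichotomy q 0 with h | h | h
    · right
      by_contra hne
      have hq2 : q ≤ -2 := by omega
      have : (m:ℤ) * q ≤ (m:ℤ) * (-2) := by
        apply mul_le_mul_of_nonneg_left hq2 (le_of_lt hm)
      linarith
    · left; exact h
    · have hq1 : 1 ≤ q := h
      have : (m:ℤ) * 1 ≤ (m:ℤ) * q := by
        apply mul_le_mul_of_nonneg_left hq1 (le_of_lt hm)
      linarith
  have hne : x ≠ y := by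
    intro hxy
    subst hxy
    rcases hq01 with h | h <;> subst h <;> simp at hq <;> omega
  rw [circKG, SimpleGraph.fromRel_adj]
  refine ⟨hne, ?_⟩
  rcases hq01 with h | h
  · subst h
    simp at hq
    right
    constructor <;> linarith [hq]
  · subst h
    left
    constructor <;> linarith [hq]

lemma circ_adj_resid {m e : ℕ} (hm : 0 < m) (he : 0 < e) {x y : Fin m} (h : (circKG m e).Adj x y) :
    (e:ℤ) ≤ (((y:ℕ):ℤ) - ((x:ℕ):ℤ)) % m ∧ (((y:ℕ):ℤ) - ((x:ℕ):ℤ)) % m ≤ (m:ℤ) - e := by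
  have hx : ((x:ℕ):ℤ) < m := by exact_mod_cast x.isLt
  have hy : ((y:ℕ):ℤ) < m := by exact_mod_cast y.isLt
  have hx0 : (0:ℤ) ≤ ((x:ℕ):ℤ) := by positivity
  have hy0 : (0:ℤ) ≤ ((y:ℕ):ℤ) := by positivity
  have hmz : (0:ℤ) < m := by exact_mod_cast hm
  have hez : (0:ℤ) < e := by exact_mod_cast he
  rw [circKG, SimpleGraph.fromRel_adj] at h
  obtain ⟨hne, hrel⟩ := h
  rcases hrel with ⟨h1, h2⟩ | ⟨h1, h2⟩
  · -- e ≤ x - y ≤ m - e, so y - x ∈ [-(m-e), -e], residue y - x + m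
    have h0 : ((((y:ℕ):ℤ) - ((x:ℕ):ℤ)) + (m:ℤ) * 1) % m = (((y:ℕ):ℤ) - ((x:ℕ):ℤ)) % m :=
      Int.add_mul_emod_self_left ..
    rw [mul_one] at h0
    rw [← h0, Int.emod_eq_of_lt (by linarith) (by linarith)]
    constructor <;> linarith
  · -- e ≤ y - x ≤ m - e
    rw [Int.emod_eq_of_lt (by linarith) (by linarith)]
    exact ⟨h1, h2⟩

lemma walk_sum_s4 (m e : ℕ) (hm : 0 < m) (he : 0 < e) (k : ℕ) (f : ℕ → Fin m)
    (hf : ∀ i < k, (circKG m e).Adj (f i) (f (i+1))) :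
    ∃ S : ℤ, (k:ℤ) * e ≤ S ∧ S ≤ (k:ℤ) * ((m:ℤ) - e) ∧
      (m:ℤ) ∣ (((f k : ℕ):ℤ) - ((f 0 : ℕ):ℤ) - S) := by
  induction k with
  | zero => exact ⟨0, by simp⟩
  | succ k ih =>
    obtain ⟨S, h1, h2, h3⟩ := ih (fun i hi => hf i (by omega))
    set δ : ℤ := (((f (k+1) : ℕ):ℤ) - ((f k : ℕ):ℤ)) % m with hδ
    obtain ⟨hd1, hd2⟩ := circ_adj_resid hm he (hf k (by omega))
    refine ⟨S + δ, by push_cast; nlinarith, by push_cast; nlinarith, ?_⟩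
    have h4 : (m:ℤ) ∣ ((((f (k+1) : ℕ):ℤ) - ((f k : ℕ):ℤ)) - δ) := Int.dvd_self_sub_of_emod_eq rfl
    have := dvd_add h3 h4
    convert this using 1
    · rfl
    · ring

def rab (n : ℕ) (a b : Fin n) : ℤ := (((b:ℕ):ℤ) - ((a:ℕ):ℤ)) % n

def posZ (n s : ℕ) (a b : Fin n) (i : ℕ) : ℤ :=
  (2*(s:ℤ)+1) * ((a:ℕ):ℤ) + (i:ℤ) * rab n a b
    + (n:ℤ) * ((s:ℤ) * ((i % 2 : ℕ):ℤ) - ((i / 2 : ℕ):ℤ))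

lemma rab_dvd (n : ℕ) (a b : Fin n) : (n:ℤ) ∣ (((b:ℕ):ℤ) - ((a:ℕ):ℤ) - rab n a b) :=
  Int.dvd_self_sub_of_emod_eq rfl

lemma rab_add (n : ℕ) (hn : 0 < n) (a b : Fin n) (hab : a ≠ b) :
    rab n a b + rab n b a = n := by
  have hx : ((a:ℕ):ℤ) < n := by exact_mod_cast a.isLt
  have hy : ((b:ℕ):ℤ) < n := by exact_mod_cast b.isLt
  have hx0 : (0:ℤ) ≤ ((a:ℕ):ℤ) := by positivity
  have hy0 : (0:ℤ) ≤ ((b:ℕ):ℤ) := by positivity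
  have hmz : (0:ℤ) < n := by exact_mod_cast hn
  have hne : ((a:ℕ):ℤ) ≠ ((b:ℕ):ℤ) := by
    intro h
    exact hab (Fin.ext (by exact_mod_cast h))
  have h1 : 0 ≤ rab n a b := Int.emod_nonneg _ (by exact hmz.ne')
  have h2 : rab n a b < n := Int.emod_lt_of_pos _ hmz
  have h3 : 0 ≤ rab n b a := Int.emod_nonneg _ (by exact hmz.ne')
  have h4 : rab n b a < n := Int.emod_lt_of_pos _ hmz
  have h5 : rab n a b ≠ 0 := by
    intro h
    have := rab_dvd n a b
    rw [h, sub_zero] at this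
    obtain ⟨c, hc⟩ := this
    have hc0 : c = 0 := by nlinarith
    rw [hc0, mul_zero, sub_eq_zero] at hc
    exact hne hc.symm
  have h6 : (n:ℤ) ∣ (rab n a b + rab n b a) := by
    have d1 := rab_dvd n a b
    have d2 := rab_dvd n b a
    have := dvd_add d1 d2
    have h7 : ((b:ℕ):ℤ) - ((a:ℕ):ℤ) - rab n a b + (((a:ℕ):ℤ) - ((b:ℕ):ℤ) - rab n b a)
        = -(rab n a b + rab n b a) := by ring
    rw [h7] at this
    exact (dvd_neg.mp this)
  obtain ⟨c, hc⟩ := h6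
  have h5' : 0 < rab n a b := lt_of_le_of_ne h1 (Ne.symm h5)
  have hcl : 1 ≤ c := by
    by_contra h
    push_neg at h
    have h0 : c ≤ 0 := by omega
    have := mul_le_mul_of_nonneg_left h0 (le_of_lt hmz)
    simp at this
    linarith
  have hcu : c < 2 := by
    by_contra h
    push_neg at h
    have := mul_le_mul_of_nonneg_left h (le_of_lt hmz)
    linarith
  have hc1 : c = 1 := by omega
  rw [hc1, mul_one] at hc
  linarith [hc]

lemma posZ_symm (n s : ℕ) (hn : 0 < n) (a b : Fin n) (hab : a ≠ b) (i j : ℕ)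
    (hij : i + j = 2*s+1) :
    ((2*(s:ℤ)+1) * n) ∣ (posZ n s a b i - posZ n s b a j) := by
  have hr' : rab n b a = (n:ℤ) - rab n a b := by
    have := rab_add n hn a b hab; linarith
  have hdvd1 : ((2*(s:ℤ)+1) * n) ∣ ((2*(s:ℤ)+1) * (((a:ℕ):ℤ) - ((b:ℕ):ℤ) + rab n a b)) := by
    apply mul_dvd_mul_left
    have := rab_dvd n a b
    obtain ⟨c, hc⟩ := this
    exact ⟨-c, by linarith [hc]⟩
  rcases Nat.even_or_odd i with ⟨t, ht⟩ | ⟨t, ht⟩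
  · -- i = 2t even, j odd
    have hj : j = 2*(s-t)+1 := by omega
    have hts : t ≤ s := by omega
    have e1 : (i % 2 : ℕ) = 0 := by omega
    have e2 : (i / 2 : ℕ) = t := by omega
    have e3 : (j % 2 : ℕ) = 1 := by omega
    have e4 : (j / 2 : ℕ) = s - t := by omega
    have e5 : ((s - t : ℕ) : ℤ) = (s:ℤ) - t := by
      have : (t:ℤ) ≤ s := by exact_mod_cast hts
      omega
    have key : posZ n s a b i - posZ n s b a j
        = (2*(s:ℤ)+1) * (((a:ℕ):ℤ) - ((b:ℕ):ℤ) + rab n a b) + ((2*(s:ℤ)+1) * n) * (-1) := by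
      unfold posZ
      rw [hr', e1, e2, e3, e4, ht, hj]
      push_cast [e5]
      ring
    rw [key]
    exact dvd_add hdvd1 (Dvd.intro _ rfl)
  · -- i = 2t+1 odd, j even
    have ht' : i = 2*t+1 := ht
    have hj : j = 2*(s-t) := by omega
    have hts : t ≤ s := by omega
    have e1 : (i % 2 : ℕ) = 1 := by omega
    have e2 : (i / 2 : ℕ) = t := by omega
    have e3 : (j % 2 : ℕ) = 0 := by omega
    have e4 : (j / 2 : ℕ) = s - t := by omega
    have e5 : ((s - t : ℕ) : ℤ) = (s:ℤ) - t := by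
      have : (t:ℤ) ≤ s := by exact_mod_cast hts
      omega
    have key : posZ n s a b i - posZ n s b a j
        = (2*(s:ℤ)+1) * (((a:ℕ):ℤ) - ((b:ℕ):ℤ) + rab n a b) := by
      unfold posZ
      rw [hr', e1, e2, e3, e4, ht', hj]
      push_cast [e5]
      ring
    rw [key]
    exact hdvd1

lemma posZ_step (n s : ℕ) (a b : Fin n) (i : ℕ) :
    ((2*(s:ℤ)+1) * n) ∣ (posZ n s a b (i+1) - posZ n s a b i - ((s:ℤ)*n + rab n a b)) := by
  rcases Nat.even_or_odd i with ⟨t, ht⟩ | ⟨t, ht⟩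
  · have e1 : (i % 2 : ℕ) = 0 := by omega
    have e2 : (i / 2 : ℕ) = t := by omega
    have e3 : ((i+1) % 2 : ℕ) = 1 := by omega
    have e4 : ((i+1) / 2 : ℕ) = t := by omega
    have key : posZ n s a b (i+1) - posZ n s a b i - ((s:ℤ)*n + rab n a b) = 0 := by
      unfold posZ
      rw [e1, e2, e3, e4, ht]
      push_cast
      ring
    rw [key]
    exact dvd_zero _
  · have ht' : i = 2*t+1 := ht
    have e1 : (i % 2 : ℕ) = 1 := by omega
    have e2 : (i / 2 : ℕ) = t := by omega
    have e3 : ((i+1) % 2 : ℕ) = 0 := by omega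
    have e4 : ((i+1) / 2 : ℕ) = t+1 := by omega
    have key : posZ n s a b (i+1) - posZ n s a b i - ((s:ℤ)*n + rab n a b)
        = ((2*(s:ℤ)+1) * n) * (-1) := by
      unfold posZ
      rw [e1, e2, e3, e4, ht']
      push_cast
      ring
    rw [key]
    exact Dvd.intro _ rfl

lemma posZ_zero (n s : ℕ) (a b : Fin n) : posZ n s a b 0 = (2*(s:ℤ)+1) * ((a:ℕ):ℤ) := by
  unfold posZ
  norm_num

lemma dvd_emod_sub (N : ℕ) (z : ℤ) : (N:ℤ) ∣ (z - z % N) :=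
  Int.dvd_self_sub_of_emod_eq rfl

lemma circ_step_adj (n d s : ℕ) (hd : 0 < d) (hnd : 2*d ≤ n) {a b : Fin n}
    (hab : (circKG n d).Adj a b) (i : ℕ) (hN : 0 < (2*s+1)*n) :
    (circKG ((2*s+1)*n) (s*n+d)).Adj
      (toFinN _ hN (posZ n s a b i)) (toFinN _ hN (posZ n s a b (i+1))) := by
  have hn : 0 < n := by omega
  obtain ⟨hr1, hr2⟩ := circ_adj_resid (x := a) (y := b) hn hd hab
  have hrr : rab n a b = (((b:ℕ):ℤ) - ((a:ℕ):ℤ)) % n := rfl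
  rw [← hrr] at hr1 hr2
  have hcast : (((2*s+1)*n : ℕ):ℤ) = (2*(s:ℤ)+1) * n := by push_cast; ring
  apply circ_adj_of _ _ (by omega) _ _ ((s:ℤ)*n + rab n a b)
  · push_cast; linarith
  · rw [hcast]; push_cast; linarith
  · rw [toFinN_coe, toFinN_coe]
    have d1 := dvd_emod_sub ((2*s+1)*n) (posZ n s a b (i+1))
    have d2 := dvd_emod_sub ((2*s+1)*n) (posZ n s a b i)
    have d3 := posZ_step n s a b i
    rw [← hcast] at d3
    have key : posZ n s a b (i+1) % ((2*s+1)*n : ℕ) - posZ n s a b i % ((2*s+1)*n : ℕ)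
          - ((s:ℤ)*n + rab n a b)
        = -(posZ n s a b (i+1) - posZ n s a b (i+1) % ((2*s+1)*n : ℕ))
          + (posZ n s a b i - posZ n s a b i % ((2*s+1)*n : ℕ))
          + (posZ n s a b (i+1) - posZ n s a b i - ((s:ℤ)*n + rab n a b)) := by ring
    rw [key]
    exact dvd_add (dvd_add (dvd_neg.mpr d1) d2) d3

lemma upper {V : Type*} (G : SimpleGraph V) (n d s : ℕ) (hd : 0 < d) (hnd : 2*d ≤ n)
    (g : G →g circKG n d) :
    Nonempty (subdiv G (2*s+1) →g circKG ((2*s+1)*n) (s*n+d)) := by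
  classical
  have hn : 0 < n := by omega
  have hN : 0 < (2*s+1)*n := by positivity
  -- the function on pairs
  set f2 : V × ℕ → V × ℕ → Fin ((2*s+1)*n) := fun p q =>
    if h : G.Adj p.1 q.1 ∧ p.2 + q.2 = 2*s+1 then
      toFinN _ hN (posZ n s (g p.1) (g q.1) p.2)
    else ⟨0, hN⟩ with hf2def
  have hf2 : ∀ p q, f2 p q = f2 q p := by
    intro p q
    by_cases h : G.Adj p.1 q.1 ∧ p.2 + q.2 = 2*s+1
    · have h' : G.Adj q.1 p.1 ∧ q.2 + p.2 = 2*s+1 := ⟨h.1.symm, by omega⟩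
      rw [hf2def]
      simp only [dif_pos h, dif_pos h']
      apply toFinN_congr
      have hne : g p.1 ≠ g q.1 := (g.map_adj h.1).ne
      have := posZ_symm n s hn (g p.1) (g q.1) hne p.2 q.2 h.2
      have hcast : (((2*s+1)*n : ℕ):ℤ) = (2*(s:ℤ)+1) * n := by push_cast; ring
      rw [hcast]
      exact this
    · have h' : ¬(G.Adj q.1 p.1 ∧ q.2 + p.2 = 2*s+1) := by
        intro h'
        exact h ⟨h'.1.symm, by omega⟩
      rw [hf2def]
      simp only [dif_neg h, dif_neg h']
  set F : (V ⊕ {p : Sym2 (V × ℕ) //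
      ∃ u v i, G.Adj u v ∧ 0 < i ∧ i < 2*s+1 ∧ p = Sym2.mk (u, i) (v, 2*s+1 - i)}) →
      Fin ((2*s+1)*n) :=
    Sum.elim (fun u => toFinN _ hN ((2*(s:ℤ)+1) * ((g u : ℕ):ℤ)))
      (fun p => Sym2.lift ⟨f2, hf2⟩ p.1) with hF
  refine ⟨⟨F, ?_⟩⟩
  intro x y hxy
  rw [subdiv, SimpleGraph.fromRel_adj] at hxy
  obtain ⟨-, hrel⟩ := hxy
  -- helper: evaluate F on interior points
  have hev : ∀ (p : {p : Sym2 (V × ℕ) //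
      ∃ u v i, G.Adj u v ∧ 0 < i ∧ i < 2*s+1 ∧ p = Sym2.mk (u, i) (v, 2*s+1 - i)})
      (u v : V) (i j : ℕ), G.Adj u v → i + j = 2*s+1 → p.1 = Sym2.mk (u, i) (v, j) →
      F (Sum.inr p) = toFinN _ hN (posZ n s (g u) (g v) i) := by
    intro p u v i j hadj hij hp
    rw [hF]
    simp only [Sum.elim_inr, hp, Sym2.lift_mk]
    rw [hf2def]
    exact dif_pos ⟨hadj, hij⟩
  have hev0 : ∀ (u : V) (b : Fin n),
      F (Sum.inl u) = toFinN _ hN (posZ n s (g u) b 0) := by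
    intro u b
    rw [hF]
    simp only [Sum.elim_inl, posZ_zero]
  -- main case analysis
  rcases x with a | p <;> rcases y with b | q
  · -- inl / inl : k = 1
    have hone : 2*s+1 = 1 ∧ G.Adj a b := by
      rcases hrel with h | h
      · exact h
      · exact ⟨h.1, h.2.symm⟩
    obtain ⟨h1, hadj⟩ := hone
    have hs : s = 0 := by omega
    subst hs
    rw [hev0 a (g b), hev0 b (g a)]
    have heq : toFinN _ hN (posZ n 0 (g b) (g a) 0) = toFinN _ hN (posZ n 0 (g a) (g b) 1) := by
      apply toFinN_congr
      rw [posZ_zero]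
      have hdvd := rab_dvd n (g a) (g b)
      have hcast : (((2*0+1)*n : ℕ):ℤ) = (n:ℤ) := by push_cast; ring
      rw [hcast]
      have key : posZ n 0 (g a) (g b) 1 =
          (2*(0:ℤ)+1) * ((g a : ℕ):ℤ) + rab n (g a) (g b) := by
        unfold posZ
        norm_num
      rw [key]
      obtain ⟨c, hc⟩ := hdvd
      exact ⟨c, by push_cast; linarith⟩
    rw [heq]
    exact circ_step_adj n d 0 hd hnd (g.map_adj hadj) 0 hN
  · -- inl / inr
    have hex : ∃ v, G.Adj a v ∧ q.1 = Sym2.mk (a, 1) (v, 2*s+1 - 1) := by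
      rcases hrel with h | h
      · exact h
      · exact h.elim
    obtain ⟨v, hadj, hq⟩ := hex
    rw [hev q a v 1 (2*s+1-1) hadj (by omega) hq, hev0 a (g v)]
    exact circ_step_adj n d s hd hnd (g.map_adj hadj) 0 hN
  · -- inr / inl
    have hex : ∃ v, G.Adj b v ∧ p.1 = Sym2.mk (b, 1) (v, 2*s+1 - 1) := by
      rcases hrel with h | h
      · exact h.elim
      · exact h
    obtain ⟨v, hadj, hp⟩ := hex
    rw [hev p b v 1 (2*s+1-1) hadj (by omega) hp, hev0 b (g v)]
    exact (circ_step_adj n d s hd hnd (g.map_adj hadj) 0 hN).symm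
  · -- inr / inr
    rcases hrel with h | h
    · obtain ⟨u, v, i, h1, h2, h3, h4, h5⟩ := h
      rw [hev p u v i (2*s+1-i) h1 (by omega) h4, hev q u v (i+1) (2*s+1-i-1) h1 (by omega) h5]
      exact circ_step_adj n d s hd hnd (g.map_adj h1) i hN
    · obtain ⟨u, v, i, h1, h2, h3, h4, h5⟩ := h
      rw [hev q u v i (2*s+1-i) h1 (by omega) h4, hev p u v (i+1) (2*s+1-i-1) h1 (by omega) h5]
      exact (circ_step_adj n d s hd hnd (g.map_adj h1) i hN).symm

lemma lower {V : Type*} (G : SimpleGraph V) (m e s : ℕ) (hm : 0 < m) (he : 0 < e)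
    (hse : s*m + 1 ≤ (2*s+1)*e) (h : subdiv G (2*s+1) →g circKG m e) :
    Nonempty (G →g circKG m ((2*s+1)*e - s*m)) := by
  classical
  refine ⟨⟨fun u => h (Sum.inl u), ?_⟩⟩
  intro u v hadj
  -- build the walk through the subdivision path
  set W : ℕ → (V ⊕ {p : Sym2 (V × ℕ) //
      ∃ u' v' i, G.Adj u' v' ∧ 0 < i ∧ i < 2*s+1 ∧ p = Sym2.mk (u', i) (v', 2*s+1 - i)}) :=
    fun i => if hi : 0 < i ∧ i < 2*s+1 then
        Sum.inr ⟨Sym2.mk (u, i) (v, 2*s+1 - i), ⟨u, v, i, hadj, hi.1, hi.2, rfl⟩⟩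
      else if i = 0 then Sum.inl u else Sum.inl v with hW
  have hW0 : W 0 = Sum.inl u := by simp [hW]
  have hWk : W (2*s+1) = Sum.inl v := by simp [hW]
  have hWi : ∀ i (h1 : 0 < i) (h2 : i < 2*s+1),
      W i = Sum.inr ⟨Sym2.mk (u, i) (v, 2*s+1 - i), ⟨u, v, i, hadj, h1, h2, rfl⟩⟩ := by
    intro i h1 h2
    simp only [hW]
    rw [dif_pos ⟨h1, h2⟩]
  have hadjW : ∀ i < 2*s+1, (subdiv G (2*s+1)).Adj (W i) (W (i+1)) := by
    intro i hi
    rw [subdiv, SimpleGraph.fromRel_adj]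
    rcases Nat.eq_zero_or_pos i with h0 | h0
    · subst h0
      rcases Nat.eq_zero_or_pos s with hs | hs
      · -- s = 0 : inl u -- inl v
        subst hs
        rw [hW0]
        have h1 : W 1 = Sum.inl v := by simp [hW]
        rw [h1]
        refine ⟨?_, Or.inl ⟨rfl, hadj⟩⟩
        simp only [ne_eq, Sum.inl.injEq]
        exact hadj.ne
      · -- inl u -- first interior vertex
        rw [hW0, hWi 1 (by omega) (by omega)]
        refine ⟨by simp, Or.inl ⟨v, hadj, rfl⟩⟩
    · rcases Nat.lt_or_ge (i+1) (2*s+1) with h2 | h2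
      · -- interior -- interior
        rw [hWi i h0 (by omega), hWi (i+1) (by omega) h2]
        constructor
        · simp only [ne_eq, Sum.inr.injEq, Subtype.mk.injEq]
          intro hc
          rw [Sym2.eq_iff] at hc
          rcases hc with ⟨hc1, hc2⟩ | ⟨hc1, hc2⟩
          · simp only [Prod.mk.injEq] at hc1
            omega
          · simp only [Prod.mk.injEq] at hc1
            exact hadj.ne hc1.1
        · refine Or.inl ⟨u, v, i, hadj, h0, h2, rfl, ?_⟩
          have : 2*s+1 - i - 1 = 2*s+1 - (i+1) := by omega
          rw [this]
      · -- last interior vertex -- inl v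
        have hieq : i + 1 = 2*s+1 := by omega
        have hWv : W (i+1) = Sum.inl v := by rw [hieq]; exact hWk
        rw [hWi i h0 (by omega), hWv]
        constructor
        · simp
        · refine Or.inr ⟨u, hadj.symm, ?_⟩
          simp only
          have h3 : 2*s+1 - i = 1 := by omega
          have h4 : 2*s+1 - 1 = i := by omega
          rw [h3, h4]
          exact Sym2.eq_swap
  -- apply the walk sum
  obtain ⟨S, hS1, hS2, hS3⟩ := walk_sum_s4 m e hm he (2*s+1) (fun i => h (W i))
    (fun i hi => h.map_adj (hadjW i hi))
  rw [hW0, hWk] at hS3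
  have hsub : (((2*s+1)*e - s*m : ℕ) : ℤ) = (2*(s:ℤ)+1)*e - s*m := by
    have : s*m ≤ (2*s+1)*e := by omega
    push_cast [this]
    ring
  apply circ_adj_of m _ (by omega) _ _ (S - (s:ℤ)*m)
  · rw [hsub]
    push_cast at hS1 ⊢
    linarith
  · rw [hsub]
    push_cast at hS2 ⊢
    linarith
  · obtain ⟨c, hc⟩ := hS3
    exact ⟨c + s, by push_cast at hc ⊢; linear_combination hc⟩

lemma adj_complete (n : ℕ) (hn : 0 < n) (x y : Fin n) (hxy : x ≠ y) : (circKG n 1).Adj x y := by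
  have hnz : ((n:ℤ)) ≠ 0 := by exact_mod_cast hn.ne'
  have hnz' : (0:ℤ) < n := by exact_mod_cast hn
  have h0 : 0 ≤ (((y:ℕ):ℤ) - ((x:ℕ):ℤ)) % n := Int.emod_nonneg _ hnz
  have h1 : (((y:ℕ):ℤ) - ((x:ℕ):ℤ)) % n < n := Int.emod_lt_of_pos _ hnz'
  have hne : (((y:ℕ):ℤ) - ((x:ℕ):ℤ)) % n ≠ 0 := by
    intro hz
    have hd := Int.dvd_of_emod_eq_zero hz
    have hx : ((x:ℕ):ℤ) < n := by exact_mod_cast x.isLt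
    have hy : ((y:ℕ):ℤ) < n := by exact_mod_cast y.isLt
    have hx0 : (0:ℤ) ≤ ((x:ℕ):ℤ) := by positivity
    have hy0 : (0:ℤ) ≤ ((y:ℕ):ℤ) := by positivity
    have := Int.eq_zero_of_abs_lt_dvd hd (by rw [abs_lt]; constructor <;> linarith)
    exact hxy (Fin.ext (by omega)).symm
  apply circ_adj_of n 1 one_pos x y ((((y:ℕ):ℤ) - ((x:ℕ):ℤ)) % n)
  · push_cast; omega
  · push_cast; omega
  · exact dvd_emod_sub n _

lemma exists_edge {V : Type*} (G : SimpleGraph V) (hG : ¬ G.Colorable 2) :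
    ∃ u v, G.Adj u v := by
  by_contra hc
  push_neg at hc
  exact hG ⟨SimpleGraph.Coloring.mk (fun _ => (0 : Fin 2))
    (fun {a b} hab => absurd hab (hc a b))⟩

noncomputable def fR (s : ℕ) (x : ℝ) : ℝ := (2 * (s:ℝ) + 1) * x / ((s:ℝ) * x + 1)

lemma fR_mono (s : ℕ) {x y : ℝ} (hx : 0 ≤ x) (hxy : x ≤ y) : fR s x ≤ fR s y := by
  have hs : (0:ℝ) ≤ s := Nat.cast_nonneg s
  have hx1 : (0:ℝ) < s * x + 1 := by nlinarith
  have hy1 : (0:ℝ) < s * y + 1 := by nlinarith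
  rw [fR, fR, div_le_div_iff₀ hx1 hy1]
  nlinarith

lemma fR_diff (s : ℕ) {x y : ℝ} (hx : 0 ≤ x) (hxy : x ≤ y) :
    fR s y ≤ fR s x + (2 * (s:ℝ) + 1) * (y - x) := by
  have hs : (0:ℝ) ≤ s := Nat.cast_nonneg s
  have hx1 : (0:ℝ) < s * x + 1 := by nlinarith
  have hy1 : (0:ℝ) < s * y + 1 := by nlinarith
  have key : fR s y - fR s x = (2 * (s:ℝ) + 1) * (y - x) / ((s * x + 1) * (s * y + 1)) := by
    rw [fR, fR]
    field_simp
    ring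
  have hb : (2 * (s:ℝ) + 1) * (y - x) / ((s * x + 1) * (s * y + 1)) ≤ (2 * (s:ℝ) + 1) * (y - x) := by
    apply div_le_self (by nlinarith) (by nlinarith [mul_nonneg (mul_nonneg hs hx) (mul_nonneg hs (hx.trans hxy))])
  linarith [key ▸ hb]


/-- For a finite non-bipartite graph `G` and any non-negative integer `s`,
`χ_c(G^{1/(2s+1)}) = (2s+1)χ_c(G) / (sχ_c(G) + 1)`. -/
theorem stmt_4 {V : Type*} [Fintype V] (G : SimpleGraph V) (hG : ¬ G.Colorable 2) (s : ℕ) :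
    circChrom (subdiv G (2 * s + 1)) =
      (2 * s + 1 : ℝ) * circChrom G / ((s : ℝ) * circChrom G + 1) := by
  classical
  obtain ⟨u0, v0, he0⟩ := exists_edge G hG
  have hnt : Nontrivial V := ⟨⟨u0, v0, he0.ne⟩⟩
  have hcard : 2 ≤ Fintype.card V := Fintype.one_lt_card
  set n0 := Fintype.card V with hn0
  have g0 : G →g circKG n0 1 :=
    ⟨fun u => Fintype.equivFin V u, fun {u v} hadj =>
      adj_complete n0 (by omega) _ _ (fun hc => hadj.ne ((Fintype.equivFin V).injective hc))⟩
  set A := {x : ℝ | ∃ n d : ℕ, 0 < d ∧ 2 * d ≤ n ∧ Nonempty (G →g circKG n d) ∧ x = n / d}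
    with hA
  set B := {x : ℝ | ∃ n d : ℕ, 0 < d ∧ 2 * d ≤ n ∧
      Nonempty (subdiv G (2 * s + 1) →g circKG n d) ∧ x = n / d} with hB
  have hA_lb : ∀ x ∈ A, (2:ℝ) ≤ x := by
    rintro x ⟨n, d, hd, hnd, -, rfl⟩
    have hd' : (0:ℝ) < d := by exact_mod_cast hd
    rw [le_div_iff₀ hd']
    exact_mod_cast hnd
  have hA_ne : A.Nonempty := ⟨_, n0, 1, one_pos, by omega, ⟨g0⟩, rfl⟩
  have hA_bdd : BddBelow A := ⟨2, hA_lb⟩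
  have ha2 : (2:ℝ) ≤ sInf A := le_csInf hA_ne hA_lb
  have ha0 : (0:ℝ) ≤ sInf A := by linarith
  have hB_mem : ∀ n d : ℕ, 0 < d → 2*d ≤ n → (G →g circKG n d) →
      ((((2*s+1)*n : ℕ):ℝ)/(((s*n+d : ℕ)):ℝ)) ∈ B := by
    intro n d hd hnd g
    refine ⟨(2*s+1)*n, s*n+d, by omega, by nlinarith, upper G n d s hd hnd g, rfl⟩
  have hB_ne : B.Nonempty := ⟨_, hB_mem n0 1 one_pos (by omega) g0⟩
  have hB_lb : ∀ x ∈ B, (0:ℝ) ≤ x := by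
    rintro x ⟨n, d, hd, hnd, -, rfl⟩
    positivity
  have hB_bdd : BddBelow B := ⟨0, hB_lb⟩
  show sInf B = fR s (sInf A)
  apply le_antisymm
  · apply le_of_forall_pos_le_add
    intro ε hε
    have hεp : 0 < ε / (2*(s:ℝ)+1) := by positivity
    obtain ⟨x, hxA, hxlt⟩ := exists_lt_of_csInf_lt hA_ne (lt_add_of_pos_right (sInf A) hεp)
    obtain ⟨n, d, hd, hnd, ⟨g⟩, rfl⟩ := hxA
    have hmem := hB_mem n d hd hnd g
    have hle1 : sInf B ≤ (((2*s+1)*n : ℕ):ℝ)/(((s*n+d : ℕ)):ℝ) := csInf_le hB_bdd hmem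
    have hd' : (0:ℝ) < d := by exact_mod_cast hd
    have hsd : (0:ℝ) < (s:ℝ)*(n:ℝ)+(d:ℝ) := by positivity
    have h3 : (s:ℝ)*((n:ℝ)/(d:ℝ))+1 ≠ 0 := by positivity
    have heq : (((2*s+1)*n : ℕ):ℝ)/(((s*n+d : ℕ)):ℝ) = fR s ((n:ℝ)/(d:ℝ)) := by
      rw [fR]
      push_cast
      field_simp
    rw [heq] at hle1
    have hax : sInf A ≤ (n:ℝ)/(d:ℝ) := csInf_le hA_bdd ⟨n, d, hd, hnd, ⟨g⟩, rfl⟩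
    have hdiff := fR_diff s ha0 hax
    have hpos : (0:ℝ) < 2*(s:ℝ)+1 := by positivity
    have h2 : (2*(s:ℝ)+1) * ((n:ℝ)/(d:ℝ) - sInf A) ≤ ε := by
      have hb : (n:ℝ)/(d:ℝ) - sInf A ≤ ε/(2*(s:ℝ)+1) := by linarith
      calc (2*(s:ℝ)+1) * ((n:ℝ)/(d:ℝ) - sInf A) ≤ (2*(s:ℝ)+1) * (ε/(2*(s:ℝ)+1)) :=
            mul_le_mul_of_nonneg_left hb (le_of_lt hpos)
        _ = ε := by field_simp
    linarith
  · apply le_csInf hB_ne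
    rintro y ⟨m, e, he, hem, ⟨h⟩, rfl⟩
    have her : (0:ℝ) < e := by exact_mod_cast he
    by_cases hse : s*m + 1 ≤ (2*s+1)*e
    · obtain ⟨g'⟩ := lower G m e s (by omega) he hse h
      set D' := (2*s+1)*e - s*m with hD'
      have hle : s*m ≤ (2*s+1)*e := by omega
      have hD'pos : 0 < D' := Nat.sub_pos_of_lt hse
      have hD'c : (D':ℝ) = (2*(s:ℝ)+1)*(e:ℝ) - (s:ℝ)*(m:ℝ) := by
        rw [hD']
        push_cast [hle]
        ring
      have h2D : 2*D' ≤ m := by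
        have key : 2*((2*s+1)*e) ≤ (2*s+1)*m := by
          calc 2*((2*s+1)*e) = (2*s+1)*(2*e) := by ring
            _ ≤ (2*s+1)*m := Nat.mul_le_mul_left _ hem
        have hD'z : (D':ℤ) = (2*(s:ℤ)+1)*(e:ℤ) - (s:ℤ)*(m:ℤ) := by
          rw [hD']
          push_cast [hle]
          ring
        zify
        zify at key
        linarith [hD'z, key]
      have hmemA : ((m:ℝ)/(D':ℝ)) ∈ A := ⟨m, D', hD'pos, h2D, ⟨g'⟩, rfl⟩
      have hax : sInf A ≤ (m:ℝ)/(D':ℝ) := csInf_le hA_bdd hmemA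
      have hmono := fR_mono s ha0 hax
      have hD'r : (0:ℝ) < (D':ℝ) := by exact_mod_cast hD'pos
      have hq : (s:ℝ)*((m:ℝ)/(D':ℝ))+1 ≠ 0 := by positivity
      have hfeq : fR s ((m:ℝ)/(D':ℝ)) = (m:ℝ)/(e:ℝ) := by
        rw [fR]
        field_simp
        rw [hD'c]
        ring
      rw [hfeq] at hmono
      exact hmono
    · push_neg at hse
      have hs1 : 1 ≤ s := by
        by_contra hs0
        have hs0' : s = 0 := by omega
        subst hs0'
        simp at hse
        omega
      have hsr : (0:ℝ) < s := by exact_mod_cast hs1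
      have h1 : fR s (sInf A) ≤ (2*(s:ℝ)+1)/(s:ℝ) := by
        rw [fR, div_le_div_iff₀ (by nlinarith) hsr]
        nlinarith
      have h2 : (2*(s:ℝ)+1)/(s:ℝ) ≤ (m:ℝ)/(e:ℝ) := by
        rw [div_le_div_iff₀ hsr her]
        have hnat : (2*s+1)*e ≤ s*m := by omega
        have := (Nat.cast_le (α := ℝ)).mpr hnat
        push_cast at this
        linarith
      linarith
end

section
/- Let k be a positive integer and let e be any edge of K_{3k+1}^{1/3}. Then there exists a homomorphism from K_{3k+1}^{1/3} − e (the graph obtained by deleting the edge e) to K_{3k}^{1/3}. Consequently, every proper subgraph H of K_{3k+1}^{1/3} satisfies χ_c(H) ≤ 9k/(3k+1). -/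
open SimpleGraph

abbrev SV (m : ℕ) := {p : Sym2 (Fin m × ℕ) //
  ∃ u v i, (⊤ : SimpleGraph (Fin m)).Adj u v ∧ 0 < i ∧ i < 3 ∧ p = Sym2.mk (u, i) (v, 3 - i)}

def Pv {m : ℕ} (u v : Fin m) (h : u ≠ v) : SV m :=
  ⟨Sym2.mk (u, 1) (v, 2), u, v, 1, by simp [h], one_pos, by norm_num, rfl⟩

lemma exists_canon {m : ℕ} (p : SV m) :
    ∃ q : Fin m × Fin m, q.1 ≠ q.2 ∧ p.1 = Sym2.mk (q.1, 1) (q.2, 2) := by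
  obtain ⟨u, v, i, huv, h0, h3, hp⟩ := p.2
  have hne : u ≠ v := by simpa using huv
  interval_cases i
  · exact ⟨(u, v), hne, by simpa using hp⟩
  · refine ⟨(v, u), hne.symm, ?_⟩
    norm_num at hp
    rw [hp]
    exact Sym2.eq_swap

noncomputable def ends {m : ℕ} (p : SV m) : Fin m × Fin m := (exists_canon p).choose

lemma ends_ne {m : ℕ} (p : SV m) : (ends p).1 ≠ (ends p).2 := (exists_canon p).choose_spec.1

lemma ends_spec {m : ℕ} (p : SV m) :
    p.1 = Sym2.mk ((ends p).1, 1) ((ends p).2, 2) := (exists_canon p).choose_spec.2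

lemma canon_inj {m : ℕ} {x y x' y' : Fin m}
    (h : Sym2.mk (x, 1) (y, 2) = Sym2.mk (x', (1:ℕ)) (y', 2)) : x = x' ∧ y = y' := by
  rw [Sym2.eq_iff] at h
  rcases h with ⟨h1, h2⟩ | ⟨h1, h2⟩
  · exact ⟨(Prod.ext_iff.mp h1).1, (Prod.ext_iff.mp h2).1⟩
  · exact absurd (Prod.ext_iff.mp h1).2 (by norm_num)

lemma ends_eq {m : ℕ} {p : SV m} {x y : Fin m}
    (h : p.1 = Sym2.mk (x, 1) (y, 2)) : ends p = (x, y) := by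
  have h2 := ends_spec p
  rw [h] at h2
  obtain ⟨ha, hb⟩ := canon_inj h2.symm
  exact Prod.ext ha hb

lemma ends_Pv {m : ℕ} (u v : Fin m) (h : u ≠ v) : ends (Pv u v h) = (u, v) := ends_eq rfl

lemma adj_inl_Pv {m : ℕ} (u v : Fin m) (h : u ≠ v) :
    (subdiv (⊤ : SimpleGraph (Fin m)) 3).Adj (Sum.inl u) (Sum.inr (Pv u v h)) := by
  rw [subdiv, SimpleGraph.fromRel_adj]
  exact ⟨by simp, Or.inl ⟨v, by simp [h], rfl⟩⟩

lemma adj_Pv_Pv {m : ℕ} (u v : Fin m) (h : u ≠ v) :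
    (subdiv (⊤ : SimpleGraph (Fin m)) 3).Adj (Sum.inr (Pv u v h)) (Sum.inr (Pv v u h.symm)) := by
  rw [subdiv, SimpleGraph.fromRel_adj]
  refine ⟨?_, Or.inl ⟨u, v, 1, by simp [h], one_pos, by norm_num, rfl, ?_⟩⟩
  · intro hc
    have : (Pv u v h).1 = (Pv v u h.symm).1 := by rw [Sum.inr.injEq] at hc; rw [hc]
    obtain ⟨h1, h2⟩ := canon_inj this
    exact h (h1.trans rfl)
  · show (Pv v u h.symm).1 = Sym2.mk (u, 1 + 1) (v, 3 - 1 - 1)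
    norm_num
    exact Sym2.eq_swap

lemma adj_cases {m : ℕ} {a b : Fin m ⊕ SV m}
    (h : (subdiv (⊤ : SimpleGraph (Fin m)) 3).Adj a b) :
    (∃ (u v : Fin m) (huv : u ≠ v), a = Sum.inl u ∧ b = Sum.inr (Pv u v huv)) ∨
    (∃ (u v : Fin m) (huv : u ≠ v), a = Sum.inr (Pv u v huv) ∧ b = Sum.inl u) ∨
    (∃ (u v : Fin m) (huv : u ≠ v), a = Sum.inr (Pv u v huv) ∧ b = Sum.inr (Pv v u huv.symm)) := by
  rw [subdiv, SimpleGraph.fromRel_adj] at h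
  obtain ⟨hne, h | h⟩ := h
  · rcases a with x | p <;> rcases b with y | q
    · exact absurd h.1 (by norm_num)
    · obtain ⟨v, hv, hq⟩ := h
      have hv' : x ≠ v := by simpa using hv
      exact Or.inl ⟨x, v, hv', rfl, by rw [Sum.inr.injEq]; exact Subtype.ext hq⟩
    · exact h.elim
    · obtain ⟨u, v, i, huv, h0, h3, hp, hq⟩ := h
      have hi : i = 1 := by omega
      subst hi
      have huv' : u ≠ v := by simpa using huv
      refine Or.inr (Or.inr ⟨u, v, huv', ?_, ?_⟩)
      · rw [Sum.inr.injEq]; exact Subtype.ext (by simpa [Pv] using hp)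
      · rw [Sum.inr.injEq]
        refine Subtype.ext ?_
        have h2 : q.1 = Sym2.mk (u, 2) (v, 1) := by simpa using hq
        rw [h2]
        exact Sym2.eq_swap
  · rcases a with x | p <;> rcases b with y | q
    · exact absurd h.1 (by norm_num)
    · exact h.elim
    · obtain ⟨v, hv, hq⟩ := h
      have hv' : y ≠ v := by simpa using hv
      exact Or.inr (Or.inl ⟨y, v, hv', by rw [Sum.inr.injEq]; exact Subtype.ext hq, rfl⟩)
    · obtain ⟨u, v, i, huv, h0, h3, hp, hq⟩ := h
      have hi : i = 1 := by omega
      subst hi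
      have huv' : u ≠ v := by simpa using huv
      refine Or.inr (Or.inr ⟨v, u, huv'.symm, ?_, ?_⟩)
      · rw [Sum.inr.injEq]
        refine Subtype.ext ?_
        have h2 : p.1 = Sym2.mk (u, 2) (v, 1) := by simpa using hq
        rw [h2]
        exact Sym2.eq_swap
      · rw [Sum.inr.injEq]; exact Subtype.ext (by simpa [Pv] using hp)

def cval (m : ℕ) (x y : Fin m) : ℕ :=
  if 3 * x.val + m + (if x.val < y.val then y.val - x.val else y.val + m - x.val) < 3 * m
  then 3 * x.val + m + (if x.val < y.val then y.val - x.val else y.val + m - x.val)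
  else 3 * x.val + m + (if x.val < y.val then y.val - x.val else y.val + m - x.val) - 3 * m

lemma cval_lt {m : ℕ} (x y : Fin m) (h : x ≠ y) : cval m x y < 3 * m := by
  have hx := x.isLt
  have hy := y.isLt
  have hxy : x.val ≠ y.val := fun hh => h (Fin.ext hh)
  unfold cval
  split_ifs <;> omega

lemma circ_adj_A {m : ℕ} (hm : 2 ≤ m) (i j : Fin (3 * m)) (x y : Fin m) (h : x ≠ y)
    (hi : i.val = 3 * x.val) (hj : j.val = cval m x y) :
    (circKG (3 * m) (m + 1)).Adj i j := by
  have hx := x.isLt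
  have hy := y.isLt
  have hxy : x.val ≠ y.val := fun hh => h (Fin.ext hh)
  rw [circKG, SimpleGraph.fromRel_adj]
  rw [ne_eq, Fin.ext_iff]
  rw [hi, hj]
  unfold cval
  split_ifs <;> omega

lemma circ_adj_B {m : ℕ} (hm : 2 ≤ m) (i j : Fin (3 * m)) (x y : Fin m) (h : x ≠ y)
    (hi : i.val = cval m x y) (hj : j.val = cval m y x) :
    (circKG (3 * m) (m + 1)).Adj i j := by
  have hx := x.isLt
  have hy := y.isLt
  have hxy : x.val ≠ y.val := fun hh => h (Fin.ext hh)
  rw [circKG, SimpleGraph.fromRel_adj]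
  rw [ne_eq, Fin.ext_iff]
  rw [hi, hj]
  unfold cval
  split_ifs <;> omega

lemma hom_circ (m : ℕ) (hm : 2 ≤ m) :
    Nonempty (subdiv (⊤ : SimpleGraph (Fin m)) 3 →g circKG (3 * m) (m + 1)) := by
  classical
  refine ⟨⟨fun z => Sum.rec (fun x => ⟨3 * x.val, by have := x.isLt; omega⟩)
    (fun p => ⟨cval m (ends p).1 (ends p).2, cval_lt _ _ (ends_ne p)⟩) z, ?_⟩⟩
  intro a b hab
  rcases adj_cases hab with ⟨u, v, huv, rfl, rfl⟩ | ⟨u, v, huv, rfl, rfl⟩ | ⟨u, v, huv, rfl, rfl⟩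
  · exact circ_adj_A hm _ _ u v huv rfl (by simp [ends_Pv])
  · exact (circ_adj_A hm _ _ u v huv rfl (by simp [ends_Pv])).symm
  · exact circ_adj_B hm _ _ u v huv (by simp [ends_Pv]) (by simp [ends_Pv])

def rhoF (m : ℕ) (u v : Fin (m + 1)) (huv : u ≠ v) (x : Fin (m + 1)) : Fin m :=
  ⟨if (if x = v then u.val else x.val) < v.val then (if x = v then u.val else x.val)
    else (if x = v then u.val else x.val) - 1, by
    have hu := u.isLt; have hx := x.isLt; have hv := v.isLt
    have h1 : u.val ≠ v.val := fun hh => huv (Fin.ext hh)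
    by_cases hxv : x = v
    · rw [if_pos hxv]; split_ifs <;> omega
    · have h2 : x.val ≠ v.val := fun hh => hxv (Fin.ext hh)
      rw [if_neg hxv]; split_ifs <;> omega⟩

lemma rhoF_inj (m : ℕ) (u v : Fin (m + 1)) (huv : u ≠ v) (x y : Fin (m + 1))
    (hxy : x ≠ y) (h1 : ¬(x = u ∧ y = v)) (h2 : ¬(x = v ∧ y = u)) :
    rhoF m u v huv x ≠ rhoF m u v huv y := by
  intro he
  have hval := congrArg Fin.val he
  simp only [rhoF] at hval
  have hu := u.isLt; have hx := x.isLt; have hy := y.isLt; have hv := v.isLt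
  have h1' : ¬(x.val = u.val ∧ y.val = v.val) := fun hh => h1 ⟨Fin.ext hh.1, Fin.ext hh.2⟩
  have h2' : ¬(x.val = v.val ∧ y.val = u.val) := fun hh => h2 ⟨Fin.ext hh.1, Fin.ext hh.2⟩
  have hxy' : x.val ≠ y.val := fun hh => hxy (Fin.ext hh)
  have huv' : u.val ≠ v.val := fun hh => huv (Fin.ext hh)
  by_cases hxv : x = v
  · by_cases hyv : y = v
    · exact hxy (hxv.trans hyv.symm)
    · rw [if_pos hxv, if_neg hyv] at hval
      have hxv' : x.val = v.val := congrArg Fin.val hxv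
      have hyv' : y.val ≠ v.val := fun hh => hyv (Fin.ext hh)
      split_ifs at hval <;> omega
  · by_cases hyv : y = v
    · rw [if_pos hyv, if_neg hxv] at hval
      have hyv' : y.val = v.val := congrArg Fin.val hyv
      have hxv' : x.val ≠ v.val := fun hh => hxv (Fin.ext hh)
      split_ifs at hval <;> omega
    · rw [if_neg hxv, if_neg hyv] at hval
      have hxv' : x.val ≠ v.val := fun hh => hxv (Fin.ext hh)
      have hyv' : y.val ≠ v.val := fun hh => hyv (Fin.ext hh)
      split_ifs at hval <;> omega

lemma rhoF_v_eq_u (m : ℕ) (u v : Fin (m + 1)) (huv : u ≠ v) :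
    rhoF m u v huv v = rhoF m u v huv u := by
  apply Fin.ext
  simp [rhoF, huv]

noncomputable def theMap (m : ℕ) (u v : Fin (m + 1)) (huv : u ≠ v) (cA : Bool) (w : Fin m)
    (hw : w ≠ rhoF m u v huv u) : (Fin (m + 1) ⊕ SV (m + 1)) → Fin m ⊕ SV m := fun z =>
  match z with
  | Sum.inl x => Sum.inl (rhoF m u v huv x)
  | Sum.inr p =>
    if h1 : ends p = (u, v) then
      Sum.inr (if cA then Pv w (rhoF m u v huv u) hw else Pv (rhoF m u v huv u) w hw.symm)
    else if h2 : ends p = (v, u) then Sum.inr (Pv (rhoF m u v huv u) w hw.symm)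
    else Sum.inr (Pv (rhoF m u v huv (ends p).1) (rhoF m u v huv (ends p).2)
      (rhoF_inj m u v huv _ _ (ends_ne p)
        (fun hh => h1 (Prod.ext hh.1 hh.2)) (fun hh => h2 (Prod.ext hh.1 hh.2))))

lemma theMap_inl (m : ℕ) (u v : Fin (m + 1)) (huv : u ≠ v) (cA : Bool) (w : Fin m)
    (hw : w ≠ rhoF m u v huv u) (x : Fin (m + 1)) :
    theMap m u v huv cA w hw (Sum.inl x) = Sum.inl (rhoF m u v huv x) := rfl

lemma theMap_uv (m : ℕ) (u v : Fin (m + 1)) (huv : u ≠ v) (cA : Bool) (w : Fin m)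
    (hw : w ≠ rhoF m u v huv u) (h' : u ≠ v) :
    theMap m u v huv cA w hw (Sum.inr (Pv u v h')) =
      Sum.inr (if cA then Pv w (rhoF m u v huv u) hw else Pv (rhoF m u v huv u) w hw.symm) := by
  simp [theMap, ends_Pv]

lemma theMap_vu (m : ℕ) (u v : Fin (m + 1)) (huv : u ≠ v) (cA : Bool) (w : Fin m)
    (hw : w ≠ rhoF m u v huv u) (h' : v ≠ u) :
    theMap m u v huv cA w hw (Sum.inr (Pv v u h')) =
      Sum.inr (Pv (rhoF m u v huv u) w hw.symm) := by
  simp [theMap, ends_Pv, Prod.ext_iff, huv, huv.symm]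

lemma theMap_gen (m : ℕ) (u v : Fin (m + 1)) (huv : u ≠ v) (cA : Bool) (w : Fin m)
    (hw : w ≠ rhoF m u v huv u) (x y : Fin (m + 1)) (hxy : x ≠ y)
    (h1 : ¬(x = u ∧ y = v)) (h2 : ¬(x = v ∧ y = u)) :
    theMap m u v huv cA w hw (Sum.inr (Pv x y hxy)) =
      Sum.inr (Pv (rhoF m u v huv x) (rhoF m u v huv y) (rhoF_inj m u v huv x y hxy h1 h2)) := by
  simp only [theMap, ends_Pv]
  rw [dif_neg (fun hh : (x, y) = (u, v) => h1 ⟨(Prod.ext_iff.mp hh).1, (Prod.ext_iff.mp hh).2⟩),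
    dif_neg (fun hh : (x, y) = (v, u) => h2 ⟨(Prod.ext_iff.mp hh).1, (Prod.ext_iff.mp hh).2⟩)]

lemma hom_del (m : ℕ) (hm : 2 ≤ m) (u v : Fin (m + 1)) (huv : u ≠ v) (cA : Bool) :
    Nonempty ((subdiv (⊤ : SimpleGraph (Fin (m + 1))) 3).deleteEdges
      {if cA then Sym2.mk (Sum.inl u : Fin (m + 1) ⊕ SV (m + 1)) (Sum.inr (Pv u v huv))
        else Sym2.mk (Sum.inr (Pv u v huv) : Fin (m + 1) ⊕ SV (m + 1)) (Sum.inr (Pv v u huv.symm))} →g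
      subdiv (⊤ : SimpleGraph (Fin m)) 3) := by
  classical
  have hwb : (if (rhoF m u v huv u).val = 0 then 1 else 0) < m := by split <;> omega
  set w : Fin m := ⟨if (rhoF m u v huv u).val = 0 then 1 else 0, hwb⟩ with hwdef
  have hw : w ≠ rhoF m u v huv u := by
    intro hh
    have h2 := congrArg Fin.val hh
    rw [hwdef] at h2
    simp only at h2
    split at h2 <;> omega
  refine ⟨⟨theMap m u v huv cA w hw, ?_⟩⟩
  intro a b hab
  rw [SimpleGraph.deleteEdges_adj] at hab
  obtain ⟨hadj, hne⟩ := hab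
  rcases adj_cases hadj with ⟨x, y, hxy, rfl, rfl⟩ | ⟨x, y, hxy, rfl, rfl⟩ | ⟨x, y, hxy, rfl, rfl⟩
  · by_cases hc1 : x = u ∧ y = v
    · obtain ⟨rfl, rfl⟩ := hc1
      cases cA
      · rw [theMap_inl, theMap_uv]
        simp only [Bool.false_eq_true, if_false]
        exact adj_inl_Pv _ _ hw.symm
      · rw [if_pos rfl] at hne
        exact absurd rfl hne
    · by_cases hc2 : x = v ∧ y = u
      · obtain ⟨rfl, rfl⟩ := hc2
        rw [theMap_inl, theMap_vu, rhoF_v_eq_u]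
        exact adj_inl_Pv _ _ hw.symm
      · rw [theMap_inl, theMap_gen m u v huv cA w hw x y hxy hc1 hc2]
        exact adj_inl_Pv _ _ _
  · by_cases hc1 : x = u ∧ y = v
    · obtain ⟨rfl, rfl⟩ := hc1
      cases cA
      · rw [theMap_inl, theMap_uv]
        simp only [Bool.false_eq_true, if_false]
        exact (adj_inl_Pv _ _ hw.symm).symm
      · rw [if_pos rfl] at hne
        exact absurd Sym2.eq_swap hne
    · by_cases hc2 : x = v ∧ y = u
      · obtain ⟨rfl, rfl⟩ := hc2
        rw [theMap_inl, theMap_vu, rhoF_v_eq_u]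
        exact (adj_inl_Pv _ _ hw.symm).symm
      · rw [theMap_inl, theMap_gen m u v huv cA w hw x y hxy hc1 hc2]
        exact (adj_inl_Pv _ _ _).symm
  · by_cases hc1 : x = u ∧ y = v
    · obtain ⟨rfl, rfl⟩ := hc1
      cases cA
      · rw [if_neg (by simp)] at hne
        exact absurd rfl hne
      · rw [theMap_uv, theMap_vu]
        simp only [if_true]
        exact adj_Pv_Pv _ _ hw
    · by_cases hc2 : x = v ∧ y = u
      · obtain ⟨rfl, rfl⟩ := hc2
        cases cA
        · rw [if_neg (by simp)] at hne
          exact absurd Sym2.eq_swap hne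
        · rw [theMap_vu, theMap_uv]
          simp only [if_true]
          exact adj_Pv_Pv _ _ hw.symm
      · rw [theMap_gen m u v huv cA w hw x y hxy hc1 hc2,
          theMap_gen m u v huv cA w hw y x hxy.symm
            (fun hh => hc2 ⟨hh.2, hh.1⟩) (fun hh => hc1 ⟨hh.2, hh.1⟩)]
        exact adj_Pv_Pv _ _ _


/-- For every positive integer `k` and every edge `e` of `K_{3k+1}^{1/3}`, there is a
homomorphism from `K_{3k+1}^{1/3} - e` to `K_{3k}^{1/3}`; consequently every proper subgraph
`H` of `K_{3k+1}^{1/3}` satisfies `χ_c(H) ≤ 9k/(3k+1)`. -/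
theorem stmt_9 (k : ℕ) (hk : 0 < k) :
    (∀ e ∈ (subdiv (⊤ : SimpleGraph (Fin (3 * k + 1))) 3).edgeSet,
      Nonempty ((subdiv (⊤ : SimpleGraph (Fin (3 * k + 1))) 3).deleteEdges {e} →g
        subdiv (⊤ : SimpleGraph (Fin (3 * k))) 3)) ∧
    ∀ H : (subdiv (⊤ : SimpleGraph (Fin (3 * k + 1))) 3).Subgraph, H ≠ ⊤ →
      circChrom H.coe ≤ (9 * k : ℝ) / (3 * k + 1) := by
  have hm2 : 2 ≤ 3 * k := by omega
  have part1 : ∀ e ∈ (subdiv (⊤ : SimpleGraph (Fin (3 * k + 1))) 3).edgeSet,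
      Nonempty ((subdiv (⊤ : SimpleGraph (Fin (3 * k + 1))) 3).deleteEdges {e} →g
        subdiv (⊤ : SimpleGraph (Fin (3 * k))) 3) := by
    intro e
    induction e using Sym2.ind with
    | _ a b =>
      intro he
      rw [SimpleGraph.mem_edgeSet] at he
      rcases adj_cases he with ⟨u, v, huv, rfl, rfl⟩ | ⟨u, v, huv, rfl, rfl⟩ | ⟨u, v, huv, rfl, rfl⟩
      · have h := hom_del (3 * k) hm2 u v huv true
        rw [if_pos rfl] at h
        exact h
      · have h := hom_del (3 * k) hm2 u v huv true
        rw [if_pos rfl] at h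
        rw [Sym2.eq_swap]
        exact h
      · have h := hom_del (3 * k) hm2 u v huv false
        rw [if_neg (by simp)] at h
        exact h
  refine ⟨part1, ?_⟩
  intro H hH
  have key : ∃ e ∈ (subdiv (⊤ : SimpleGraph (Fin (3 * k + 1))) 3).edgeSet,
      ∀ x y, H.Adj x y → Sym2.mk x y ≠ e := by
    by_cases hv : H.verts = Set.univ
    · have hex : ∃ x y, (subdiv (⊤ : SimpleGraph (Fin (3 * k + 1))) 3).Adj x y ∧ ¬H.Adj x y := by
        by_contra hcon
        push_neg at hcon
        apply hH
        refine SimpleGraph.Subgraph.ext (by rw [hv]; rfl) ?_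
        funext x y
        exact propext ⟨fun h => by simpa using H.adj_sub h, fun h => hcon x y (by simpa using h)⟩
      obtain ⟨x0, y0, hadj0, hnadj⟩ := hex
      refine ⟨Sym2.mk x0 y0, hadj0, ?_⟩
      intro x y hxy heq
      rw [Sym2.eq_iff] at heq
      rcases heq with ⟨rfl, rfl⟩ | ⟨rfl, rfl⟩
      · exact hnadj hxy
      · exact hnadj hxy.symm
    · obtain ⟨z, hz⟩ : ∃ z, z ∉ H.verts := by
        by_contra h; push_neg at h; exact hv (Set.eq_univ_iff_forall.mpr h)
      have hex : ∃ z', (subdiv (⊤ : SimpleGraph (Fin (3 * k + 1))) 3).Adj z z' := by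
        rcases z with x | p
        · have hx2 : ∃ y : Fin (3 * k + 1), y ≠ x := by
            refine ⟨⟨if x.val = 0 then 1 else 0, by split <;> omega⟩, ?_⟩
            intro hh
            have h3 := congrArg Fin.val hh
            simp only at h3
            split at h3 <;> omega
          obtain ⟨y, hyx⟩ := hx2
          exact ⟨Sum.inr (Pv x y hyx.symm), adj_inl_Pv x y hyx.symm⟩
        · have hp : p = Pv (ends p).1 (ends p).2 (ends_ne p) := Subtype.ext (ends_spec p)
          refine ⟨Sum.inl (ends p).1, ?_⟩
          nth_rewrite 1 [hp]
          exact (adj_inl_Pv _ _ (ends_ne p)).symm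
      obtain ⟨z', hzz'⟩ := hex
      refine ⟨Sym2.mk z z', hzz', ?_⟩
      intro x y hxy heq
      rw [Sym2.eq_iff] at heq
      rcases heq with ⟨rfl, rfl⟩ | ⟨rfl, rfl⟩
      · exact hz (H.edge_vert hxy)
      · exact hz (H.edge_vert hxy.symm)
  obtain ⟨e, heE, hgood⟩ := key
  have φ : H.coe →g (subdiv (⊤ : SimpleGraph (Fin (3 * k + 1))) 3).deleteEdges {e} := by
    refine ⟨fun x => x.1, ?_⟩
    intro a b hab
    rw [SimpleGraph.deleteEdges_adj]
    refine ⟨H.adj_sub hab, ?_⟩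
    rw [Set.mem_singleton_iff]
    exact hgood a.1 b.1 hab
  obtain ⟨χh⟩ := hom_circ (3 * k) hm2
  obtain ⟨ψ⟩ := part1 e heE
  have htot : Nonempty (H.coe →g circKG (3 * (3 * k)) (3 * k + 1)) := ⟨χh.comp (ψ.comp φ)⟩
  rw [show 3 * (3 * k) = 9 * k from by ring] at htot
  unfold circChrom
  refine csInf_le ⟨0, ?_⟩ ?_
  · rintro x ⟨n, d, hd, hn, _, rfl⟩
    positivity
  · exact ⟨9 * k, 3 * k + 1, by omega, by omega, htot, by push_cast; ring⟩
end

section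
/- For integers d ≥ 2 and n ≥ 3, the independence number of the graph H_d(K_n) equals d. -/
open SimpleGraph

/-- The graph `H_d(K_n)` obtained by the Hajós construction from `d` copies of `K_n`:
the vertices are `0, 1, ..., d(n-1)`; the `i`-th copy (for `0 ≤ i < d`) is the complete
graph on the block `{i(n-1), ..., (i+1)(n-1)}` (so consecutive copies share a vertex,
realizing the identification `w_i = v_{i+1}` with `v_{i+1} = i(n-1)`, `w_{i+1} = (i+1)(n-1)`),
with the edge `v_{i+1} w_{i+1}` between the two block endpoints deleted in each copy, and
with the extra edge joining `v_1 = 0` and `w_d = d(n-1)`. -/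
def hajosK (d n : ℕ) : SimpleGraph (Fin (d * (n - 1) + 1)) :=
  SimpleGraph.fromRel fun a b =>
    (∃ i : ℕ, i < d ∧
      i * (n - 1) ≤ a.val ∧ a.val ≤ (i + 1) * (n - 1) ∧
      i * (n - 1) ≤ b.val ∧ b.val ≤ (i + 1) * (n - 1) ∧
      ¬(a.val = i * (n - 1) ∧ b.val = (i + 1) * (n - 1)) ∧
      ¬(b.val = i * (n - 1) ∧ a.val = (i + 1) * (n - 1))) ∨
    (a.val = 0 ∧ b.val = d * (n - 1))

/-- The independence number: the largest size of a set of pairwise non-adjacent vertices. -/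
noncomputable def indepNumber {V : Type*} (G : SimpleGraph V) : ℕ :=
  sSup {k : ℕ | ∃ t : Finset V, t.card = k ∧ ∀ a ∈ t, ∀ b ∈ t, a ≠ b → ¬ G.Adj a b}

/-- For `d ≥ 2` and `n ≥ 3`, the independence number of `H_d(K_n)` equals `d`. -/
theorem stmt_11 (d n : ℕ) (hd : 2 ≤ d) (hn : 3 ≤ n) :
    indepNumber (hajosK d n) = d := by
  have hm : 2 ≤ n - 1 := by omega
  have hm0 : 0 < n - 1 := by omega
  have hadj : ∀ a b : Fin (d * (n - 1) + 1), (hajosK d n).Adj a b ↔ a ≠ b ∧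
      (((∃ i : ℕ, i < d ∧ i * (n - 1) ≤ a.val ∧ a.val ≤ (i + 1) * (n - 1) ∧
        i * (n - 1) ≤ b.val ∧ b.val ≤ (i + 1) * (n - 1) ∧
        ¬(a.val = i * (n - 1) ∧ b.val = (i + 1) * (n - 1)) ∧
        ¬(b.val = i * (n - 1) ∧ a.val = (i + 1) * (n - 1))) ∨
        (a.val = 0 ∧ b.val = d * (n - 1))) ∨
      ((∃ i : ℕ, i < d ∧ i * (n - 1) ≤ b.val ∧ b.val ≤ (i + 1) * (n - 1) ∧
        i * (n - 1) ≤ a.val ∧ a.val ≤ (i + 1) * (n - 1) ∧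
        ¬(b.val = i * (n - 1) ∧ a.val = (i + 1) * (n - 1)) ∧
        ¬(a.val = i * (n - 1) ∧ b.val = (i + 1) * (n - 1))) ∨
        (b.val = 0 ∧ a.val = d * (n - 1)))) := by
    intro a b
    exact SimpleGraph.fromRel_adj _ a b
  -- Upper bound
  have hub : ∀ k ∈ {k : ℕ | ∃ t : Finset (Fin (d * (n - 1) + 1)), t.card = k ∧
      ∀ a ∈ t, ∀ b ∈ t, a ≠ b → ¬ (hajosK d n).Adj a b}, k ≤ d := by
    rintro k ⟨t, rfl, hind⟩
    by_cases h0 : (⟨0, by omega⟩ : Fin (d * (n - 1) + 1)) ∈ t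
    · -- 0 ∈ t, so d*(n-1) ∉ t; use v ↦ v/(n-1)
      have hne0top : (⟨0, by omega⟩ : Fin (d * (n - 1) + 1)) ≠ ⟨d * (n - 1), by omega⟩ := by
        simp only [ne_eq, Fin.mk.injEq]
        have : 0 < d * (n - 1) := by positivity
        omega
      have htop : (⟨d * (n - 1), by omega⟩ : Fin (d * (n - 1) + 1)) ∉ t := by
        intro htop
        refine hind _ h0 _ htop hne0top ?_
        rw [hadj]
        exact ⟨hne0top, Or.inl (Or.inr ⟨rfl, rfl⟩)⟩
      have hlt : ∀ v ∈ t, v.val < d * (n - 1) := by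
        intro v hv
        have h1 := v.isLt
        by_contra h
        apply htop
        have : v = ⟨d * (n - 1), by omega⟩ := by apply Fin.ext; simp; omega
        rwa [this] at hv
      set f : Fin (d * (n - 1) + 1) → Fin d :=
        fun v => ⟨min (v.val / (n - 1)) (d - 1), by omega⟩ with hf
      have hfval : ∀ v ∈ t, (f v).val = v.val / (n - 1) := by
        intro v hv
        have : v.val / (n - 1) < d := (Nat.div_lt_iff_lt_mul hm0).2 (by exact hlt v hv)
        simp only [hf]; omega
      have hinj : Set.InjOn f t := by
        intro u hu v hv heq
        by_contra hne
        have hne' : u ≠ v := hne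
        have hvals : u.val ≠ v.val := fun h => hne (Fin.ext h)
        have hiu : u.val / (n - 1) < d :=
          (Nat.div_lt_iff_lt_mul hm0).2 (by exact hlt u hu)
        have hvd : v.val / (n - 1) = u.val / (n - 1) := by
          have := hfval u hu; have := hfval v hv
          rw [heq] at *; omega
        have hu1 : (u.val / (n - 1)) * (n - 1) ≤ u.val := Nat.div_mul_le_self _ _
        have hu2 : u.val < (u.val / (n - 1) + 1) * (n - 1) :=
          (Nat.div_lt_iff_lt_mul hm0).1 (Nat.lt_succ_self _)
        have hv1 : (u.val / (n - 1)) * (n - 1) ≤ v.val := by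
          rw [← hvd]; exact Nat.div_mul_le_self _ _
        have hv2 : v.val < (u.val / (n - 1) + 1) * (n - 1) := by
          rw [← hvd]; exact (Nat.div_lt_iff_lt_mul hm0).1 (Nat.lt_succ_self _)
        have hstep : (u.val / (n - 1) + 1) * (n - 1) = (u.val / (n - 1)) * (n - 1) + (n - 1) := by
          ring
        refine hind u hu v hv hne' ?_
        rw [hadj]
        exact ⟨hne', Or.inl (Or.inl ⟨u.val / (n - 1), hiu, hu1, by omega, hv1, by omega,
          by omega, by omega⟩)⟩
      calc t.card ≤ (Finset.univ : Finset (Fin d)).card :=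
            Finset.card_le_card_of_injOn f (fun a _ => Finset.mem_univ _) hinj
        _ = d := by simp
    · -- 0 ∉ t; use v ↦ (v-1)/(n-1)
      have hge1 : ∀ v ∈ t, 1 ≤ v.val := by
        intro v hv
        by_contra h
        apply h0
        have : v = ⟨0, by omega⟩ := by apply Fin.ext; show v.val = 0; omega
        rwa [this] at hv
      set f : Fin (d * (n - 1) + 1) → Fin d :=
        fun v => ⟨min ((v.val - 1) / (n - 1)) (d - 1), by omega⟩ with hf
      have hfval : ∀ v ∈ t, (f v).val = (v.val - 1) / (n - 1) := by
        intro v hv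
        have hvle := v.isLt
        have : (v.val - 1) / (n - 1) < d := by
          apply (Nat.div_lt_iff_lt_mul hm0).2
          have : 0 < d * (n - 1) := by positivity
          omega
        simp only [hf]; omega
      have hinj : Set.InjOn f t := by
        intro u hu v hv heq
        by_contra hne
        have hne' : u ≠ v := hne
        have hvals : u.val ≠ v.val := fun h => hne (Fin.ext h)
        have hug : 1 ≤ u.val := hge1 u hu
        have hvg : 1 ≤ v.val := hge1 v hv
        have hiu : (u.val - 1) / (n - 1) < d := by
          apply (Nat.div_lt_iff_lt_mul hm0).2
          have hvle := u.isLt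
          have : 0 < d * (n - 1) := by positivity
          omega
        have hvd : (v.val - 1) / (n - 1) = (u.val - 1) / (n - 1) := by
          have := hfval u hu; have := hfval v hv
          rw [heq] at *; omega
        have hu1 : ((u.val - 1) / (n - 1)) * (n - 1) ≤ u.val - 1 := Nat.div_mul_le_self _ _
        have hu2 : u.val - 1 < ((u.val - 1) / (n - 1) + 1) * (n - 1) :=
          (Nat.div_lt_iff_lt_mul hm0).1 (Nat.lt_succ_self _)
        have hv1 : ((u.val - 1) / (n - 1)) * (n - 1) ≤ v.val - 1 := by
          rw [← hvd]; exact Nat.div_mul_le_self _ _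
        have hv2 : v.val - 1 < ((u.val - 1) / (n - 1) + 1) * (n - 1) := by
          rw [← hvd]; exact (Nat.div_lt_iff_lt_mul hm0).1 (Nat.lt_succ_self _)
        have hstep : ((u.val - 1) / (n - 1) + 1) * (n - 1)
            = ((u.val - 1) / (n - 1)) * (n - 1) + (n - 1) := by ring
        refine hind u hu v hv hne' ?_
        rw [hadj]
        exact ⟨hne', Or.inl (Or.inl ⟨(u.val - 1) / (n - 1), hiu, by omega, by omega,
          by omega, by omega, by omega, by omega⟩)⟩
      calc t.card ≤ (Finset.univ : Finset (Fin d)).card :=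
            Finset.card_le_card_of_injOn f (fun a _ => Finset.mem_univ _) hinj
        _ = d := by simp
  -- Lower bound : the set {(i+1)(n-1) : i < d} is independent of size d
  have hmem : d ∈ {k : ℕ | ∃ t : Finset (Fin (d * (n - 1) + 1)), t.card = k ∧
      ∀ a ∈ t, ∀ b ∈ t, a ≠ b → ¬ (hajosK d n).Adj a b} := by
    set g : ℕ → Fin (d * (n - 1) + 1) :=
      fun i => ⟨min ((i + 1) * (n - 1)) (d * (n - 1)), by omega⟩ with hg
    have hgval : ∀ i < d, (g i).val = (i + 1) * (n - 1) := by
      intro i hi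
      have : (i + 1) * (n - 1) ≤ d * (n - 1) := Nat.mul_le_mul_right _ (by omega)
      simp only [hg]; omega
    refine ⟨(Finset.range d).image g, ?_, ?_⟩
    · rw [Finset.card_image_of_injOn, Finset.card_range]
      intro i hi j hj hij
      simp only [Finset.coe_range, Set.mem_Iio] at hi hj
      have h1 := hgval i hi
      have h2 := hgval j hj
      have : (g i).val = (g j).val := by rw [hij]
      rw [h1, h2] at this
      exact Nat.eq_of_mul_eq_mul_right hm0 this |> fun h => by omega
    · -- independence
      have key : ∀ i j : ℕ, i < d → j < d → i ≠ j →
          ¬ ((∃ l : ℕ, l < d ∧ l * (n - 1) ≤ (g i).val ∧ (g i).val ≤ (l + 1) * (n - 1) ∧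
            l * (n - 1) ≤ (g j).val ∧ (g j).val ≤ (l + 1) * (n - 1) ∧
            ¬((g i).val = l * (n - 1) ∧ (g j).val = (l + 1) * (n - 1)) ∧
            ¬((g j).val = l * (n - 1) ∧ (g i).val = (l + 1) * (n - 1))) ∨
            ((g i).val = 0 ∧ (g j).val = d * (n - 1))) := by
        intro i j hi hj hij h
        have hgi := hgval i hi
        have hgj := hgval j hj
        rcases h with ⟨l, hl, h1, h2, h3, h4, h5, h6⟩ | ⟨h1, h2⟩
        · rw [hgi] at h1 h2
          rw [hgj] at h3 h4
          have e1 : l ≤ i + 1 := Nat.le_of_mul_le_mul_right h1 hm0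
          have e2 : i + 1 ≤ l + 1 := Nat.le_of_mul_le_mul_right h2 hm0
          have e3 : l ≤ j + 1 := Nat.le_of_mul_le_mul_right h3 hm0
          have e4 : j + 1 ≤ l + 1 := Nat.le_of_mul_le_mul_right h4 hm0
          -- i+1 ∈ {l, l+1}, j+1 ∈ {l, l+1}, i ≠ j
          rcases (by omega : i + 1 = l ∨ i + 1 = l + 1) with hil | hil <;>
            rcases (by omega : j + 1 = l ∨ j + 1 = l + 1) with hjl | hjl
          · omega
          · exact h5 ⟨by rw [hgi, hil], by rw [hgj, hjl]⟩
          · exact h6 ⟨by rw [hgj, hjl], by rw [hgi, hil]⟩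
          · omega
        · rw [hgi] at h1
          have : 0 < (i + 1) * (n - 1) := by positivity
          omega
      intro a ha b hb hab hAdj
      simp only [Finset.mem_image, Finset.mem_range] at ha hb
      obtain ⟨i, hi, rfl⟩ := ha
      obtain ⟨j, hj, rfl⟩ := hb
      have hij : i ≠ j := fun h => hab (by rw [h])
      rw [hadj] at hAdj
      rcases hAdj.2 with h | h
      · exact key i j hi hj hij h
      · -- h is the reversed relation
        refine key j i hj hi (Ne.symm hij) ?_
        rcases h with ⟨l, hl, h1, h2, h3, h4, h5, h6⟩ | ⟨h1, h2⟩
        · exact Or.inl ⟨l, hl, h1, h2, h3, h4, h5, h6⟩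
        · exact Or.inr ⟨h1, h2⟩
  -- conclude
  unfold indepNumber
  apply le_antisymm
  · exact csSup_le ⟨d, hmem⟩ hub
  · exact le_csSup ⟨d, hub⟩ hmem
end

section
/- For integers d ≥ 2 and n ≥ 3, the circular chromatic number of H_d(K_n) equals (d(n−1)+1)/d. -/
open SimpleGraph

namespace Stmt12

open Finset

variable {p : ℕ} [NeZero p]

/-- directed cyclic gap from `u` to `v`. -/
def gp (u v : ZMod p) : ℕ := (v - u).val

lemma gp_cast (u v : ZMod p) : ((gp u v : ℕ) : ZMod p) = v - u := by
  simp [gp, ZMod.natCast_val, ZMod.cast_id]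

omit [NeZero p] in
lemma gp_pos_ne {u v : ZMod p} (h : 0 < gp u v) : u ≠ v := by
  rintro rfl; simp [gp] at h

lemma arc_sum (S : Finset (ZMod p)) (L : ZMod p → ℕ)
    (hle : ∀ u ∈ S, L u ≤ p)
    (hsep : ∀ u ∈ S, ∀ v ∈ S, u ≠ v → L u ≤ gp u v) :
    ∑ u ∈ S, L u ≤ p := by
  classical
  set A : ZMod p → Finset (ZMod p) :=
    fun u => (Finset.range (L u)).image (fun t : ℕ => u + ((t : ℕ) : ZMod p)) with hA
  have hcard : ∀ u ∈ S, (A u).card = L u := by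
    intro u hu
    rw [hA]
    rw [Finset.card_image_of_injOn, Finset.card_range]
    intro t₁ h₁ t₂ h₂ he
    simp only [Finset.coe_range, Set.mem_Iio] at h₁ h₂
    have h3 : ((t₁ : ℕ) : ZMod p) = t₂ := by exact add_left_cancel he
    have h4 := congrArg ZMod.val h3
    rwa [ZMod.val_cast_of_lt (lt_of_lt_of_le h₁ (hle u hu)),
         ZMod.val_cast_of_lt (lt_of_lt_of_le h₂ (hle u hu))] at h4
  have hdis : ∀ u ∈ S, ∀ v ∈ S, u ≠ v → Disjoint (A u) (A v) := by
    intro u hu v hv huv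
    rw [Finset.disjoint_left]
    rintro w hw1 hw2
    simp only [hA, Finset.mem_image, Finset.mem_range] at hw1 hw2
    obtain ⟨t₁, ht₁, rfl⟩ := hw1
    obtain ⟨t₂, ht₂, he⟩ := hw2
    -- he : v + t₂ = u + t₁
    rcases lt_trichotomy t₁ t₂ with h | h | h
    · have h1 : u - v = ((t₂ - t₁ : ℕ) : ZMod p) := by
        rw [Nat.cast_sub h.le]; linear_combination -he
      have h2 : gp v u = t₂ - t₁ := by
        rw [gp, h1, ZMod.val_cast_of_lt
          (lt_of_le_of_lt (Nat.sub_le _ _) (lt_of_lt_of_le ht₂ (hle v hv)))]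
      have := hsep v hv u hu huv.symm
      omega
    · apply huv
      rw [h] at he
      exact (add_right_cancel he).symm
    · have h1 : v - u = ((t₁ - t₂ : ℕ) : ZMod p) := by
        rw [Nat.cast_sub h.le]; linear_combination he
      have h2 : gp u v = t₁ - t₂ := by
        rw [gp, h1, ZMod.val_cast_of_lt
          (lt_of_le_of_lt (Nat.sub_le _ _) (lt_of_lt_of_le ht₁ (hle u hu)))]
      have := hsep u hu v hv huv
      omega
  calc ∑ u ∈ S, L u = ∑ u ∈ S, (A u).card := (Finset.sum_congr rfl hcard).symm
    _ = (S.biUnion A).card := (Finset.card_biUnion hdis).symm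
    _ ≤ (Finset.univ : Finset (ZMod p)).card := Finset.card_le_univ _
    _ = p := by rw [Finset.card_univ, ZMod.card]

lemma gp_add_gp {u v : ZMod p} (h : u ≠ v) : gp u v + gp v u = p := by
  have h1 : v - u ≠ 0 := sub_ne_zero.mpr (Ne.symm h)
  have h2 : u - v = -(v - u) := by ring
  rw [gp, gp, h2, ZMod.neg_val, if_neg h1]
  have := ZMod.val_lt (v - u)
  omega

lemma gp_pos {u v : ZMod p} (h : u ≠ v) : 0 < gp u v := by
  have h1 : v - u ≠ 0 := sub_ne_zero.mpr (Ne.symm h)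
  have := (ZMod.val_eq_zero (v - u)).not.mpr h1
  rw [gp]; omega



/-- helper: given a finite family of `m+1` distinct points all of whose lengths are `q`
except one special point where length is `a`, arcs separated: `a + m*q ≤ p`. -/
lemma sum_special {m q a : ℕ} (ha : a ≤ q) (hqp : q ≤ p)
    (S : Finset (ZMod p)) (hScard : S.card = m + 1) (v : ZMod p) (hv : v ∈ S)
    (hsep : ∀ u ∈ S, ∀ w ∈ S, u ≠ w → (if u = v then a else q) ≤ gp u w) :
    a + m * q ≤ p := by
  classical
  have h := arc_sum S (fun u => if u = v then a else q)
    (fun u _ => by show (if u = v then a else q) ≤ p; split <;> omega) hsep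
  rw [← Finset.insert_erase hv, Finset.sum_insert (Finset.notMem_erase _ _)] at h
  rw [if_pos rfl] at h
  have h2 : ∑ u ∈ S.erase v, (if u = v then a else q) = m * q := by
    rw [Finset.sum_congr rfl (fun u hu => if_neg (Finset.ne_of_mem_erase hu)),
      Finset.sum_const, Finset.card_erase_of_mem hv, hScard, smul_eq_mul]
    simp
  omega

lemma block {q m : ℕ} (hq : 0 < q) (hm : 2 ≤ m) (hp2 : 2 * q ≤ p) (hpu : p < (m + 1) * q)
    (x : Fin (m + 1) → ZMod p)
    (hadj : ∀ i j : Fin (m + 1), i ≠ j → ¬(i = 0 ∧ j = Fin.last m) →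
      ¬(j = 0 ∧ i = Fin.last m) → q ≤ gp (x i) (x j)) :
    m * q ≤ p ∧ ∃ t : ℤ, x (Fin.last m) = x 0 + (t : ZMod p) ∧ t.natAbs ≤ p - m * q := by
  classical
  have hlast0 : (Fin.last m) ≠ (0 : Fin (m+1)) := by
    intro h; have := congrArg Fin.val h; simp at this; omega
  -- distinctness for non-exceptional pairs
  have hne : ∀ i j : Fin (m + 1), i ≠ j → ¬(i = 0 ∧ j = Fin.last m) →
      ¬(j = 0 ∧ i = Fin.last m) → x i ≠ x j := by
    intro i j h1 h2 h3
    have := hadj i j h1 h2 h3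
    intro hxy
    rw [hxy] at this
    simp [gp] at this
    omega
  -- Part 1 : m * q ≤ p
  have part1 : m * q ≤ p := by
    have hinj : Set.InjOn x (Finset.univ.erase (Fin.last m)) := by
      intro i hi j hj hij
      by_contra h
      exact hne i j h
        (by rintro ⟨-, rfl⟩; exact (Finset.mem_erase.mp hj).1 rfl)
        (by rintro ⟨-, rfl⟩; exact (Finset.mem_erase.mp hi).1 rfl) hij
    have hcard : (Finset.image x (Finset.univ.erase (Fin.last m))).card = m := by
      rw [Finset.card_image_of_injOn hinj, Finset.card_erase_of_mem (Finset.mem_univ _),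
        Finset.card_univ, Fintype.card_fin]
      simp
    have h := arc_sum (Finset.image x (Finset.univ.erase (Fin.last m))) (fun _ => q)
      (fun u _ => by show q ≤ p; omega) ?_
    · rw [Finset.sum_const, hcard, smul_eq_mul] at h; exact h
    · rintro u hu w hw huw
      obtain ⟨i, hi, rfl⟩ := Finset.mem_image.mp hu
      obtain ⟨j, hj, rfl⟩ := Finset.mem_image.mp hw
      have hij : i ≠ j := fun h => huw (by rw [h])
      exact hadj i j hij
        (by rintro ⟨-, rfl⟩; exact (Finset.mem_erase.mp hj).1 rfl)
        (by rintro ⟨-, rfl⟩; exact (Finset.mem_erase.mp hi).1 rfl)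
  refine ⟨part1, ?_⟩
  by_cases h0 : x 0 = x (Fin.last m)
  · exact ⟨0, by simp [h0], by simp⟩
  -- x injective on everything
  have hinj : Function.Injective x := by
    intro i j hij
    by_contra h
    rcases em (i = 0 ∧ j = Fin.last m) with h2 | h2
    · exact h0 (h2.1 ▸ h2.2 ▸ hij)
    rcases em (j = 0 ∧ i = Fin.last m) with h3 | h3
    · exact h0 (h3.1 ▸ h3.2 ▸ hij.symm)
    exact hne i j h h2 h3 hij
  have hScard : (Finset.image x Finset.univ).card = m + 1 := by
    rw [Finset.card_image_of_injective _ hinj, Finset.card_univ, Fintype.card_fin]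
  set g := gp (x 0) (x (Fin.last m)) with hg
  set g' := gp (x (Fin.last m)) (x 0) with hg'
  have hgg' : g + g' = p := gp_add_gp h0
  have hgpos : 0 < g := gp_pos h0
  have hg'pos : 0 < g' := gp_pos (Ne.symm h0)
  have hpu' : p < m * q + q := by
    have h9 : (m + 1) * q = m * q + q := by ring
    omega
  by_cases hq' : q ≤ g'
  · -- small gap in forward direction
    have key : min q g + m * q ≤ p := by
      apply sum_special (min_le_left _ _) (by omega) _ hScard (x 0)
        (Finset.mem_image_of_mem _ (Finset.mem_univ _))
      rintro u hu w hw huw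
      obtain ⟨i, -, rfl⟩ := Finset.mem_image.mp hu
      obtain ⟨j, -, rfl⟩ := Finset.mem_image.mp hw
      have hij : i ≠ j := fun h => huw (by rw [h])
      by_cases hi0 : i = 0
      · subst hi0
        rw [if_pos rfl]
        by_cases hjl : j = Fin.last m
        · subst hjl; rw [← hg]; exact le_trans (min_le_right _ _) le_rfl
        · exact le_trans (min_le_left _ _)
            (hadj 0 j hij (by rintro ⟨-, rfl⟩; exact hjl rfl)
              (by rintro ⟨rfl, -⟩; exact hij rfl))
      · rw [if_neg (fun h => hi0 (hinj h))]
        rcases em (j = 0 ∧ i = Fin.last m) with ⟨rfl, rfl⟩ | h3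
        · rw [← hg']; exact hq'
        · exact hadj i j hij (by rintro ⟨rfl, -⟩; exact hi0 rfl) h3
    have hs : min q g < q := by omega
    have hming : min q g = g := by omega
    refine ⟨(g : ℤ), ?_, by simp; omega⟩
    have := gp_cast (x 0) (x (Fin.last m))
    rw [← hg] at this
    push_cast
    rw [this]; ring
  · -- backward direction small
    push_neg at hq'
    have hqg : q ≤ g := by omega
    have key : min q g' + m * q ≤ p := by
      apply sum_special (min_le_left _ _) (by omega) _ hScard (x (Fin.last m))
        (Finset.mem_image_of_mem _ (Finset.mem_univ _))
      rintro u hu w hw huw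
      obtain ⟨i, -, rfl⟩ := Finset.mem_image.mp hu
      obtain ⟨j, -, rfl⟩ := Finset.mem_image.mp hw
      have hij : i ≠ j := fun h => huw (by rw [h])
      by_cases hil : i = Fin.last m
      · subst hil
        rw [if_pos rfl]
        by_cases hj0 : j = 0
        · subst hj0; rw [← hg']; exact min_le_right _ _
        · exact le_trans (min_le_left _ _)
            (hadj (Fin.last m) j (by exact hij)
              (by rintro ⟨h, -⟩; exact hlast0 h)
              (by rintro ⟨rfl, -⟩; exact hj0 rfl))
      · rw [if_neg (fun h => hil (hinj h))]
        rcases em (i = 0 ∧ j = Fin.last m) with ⟨rfl, rfl⟩ | h3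
        · rw [← hg]; exact hqg
        · exact hadj i j hij h3 (by rintro ⟨-, rfl⟩; exact hil rfl)
    have hs : min q g' < q := by omega
    have hming : min q g' = g' := by omega
    refine ⟨-(g' : ℤ), ?_, by simp; omega⟩
    have := gp_cast (x (Fin.last m)) (x 0)
    rw [← hg'] at this
    push_cast
    rw [this]; ring
lemma gp_of_lt {P : ℕ} [NeZero P] {A B : ℕ} (hBA : B < A) (hA : A < P) :
    gp ((B : ℕ) : ZMod P) ((A : ℕ) : ZMod P) = A - B := by
  rw [gp, ← Nat.cast_sub hBA.le, ZMod.val_cast_of_lt (by omega)]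

lemma gp_of_lt' {P : ℕ} [NeZero P] {A B : ℕ} (hBA : B < A) (hA : A < P) :
    gp ((A : ℕ) : ZMod P) ((B : ℕ) : ZMod P) = P - (A - B) := by
  have h1 : ((B : ℕ) : ZMod P) - A = -(((A : ℕ) : ZMod P) - B) := by ring
  have h2 : ((A : ℕ) : ZMod P) - B = (((A - B : ℕ) : ℕ) : ZMod P) := by
    rw [Nat.cast_sub hBA.le]
  have h3 : (((A - B : ℕ) : ℕ) : ZMod P) ≠ 0 := by
    intro hc
    have := congrArg ZMod.val hc
    rw [ZMod.val_cast_of_lt (by omega), ZMod.val_zero] at this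
    omega
  rw [gp, h1, h2, ZMod.neg_val, if_neg h3, ZMod.val_cast_of_lt (by omega)]

/-- adjacency in `circKG P q` gives the two gap bounds. -/
lemma adj_gp {P q : ℕ} [NeZero P] (hq : 0 < q) {a b : Fin P}
    (h : (SimpleGraph.fromRel fun i j : Fin P =>
      (q : ℤ) ≤ ((i : ℕ) : ℤ) - ((j : ℕ) : ℤ) ∧
      ((i : ℕ) : ℤ) - ((j : ℕ) : ℤ) ≤ (P : ℤ) - (q : ℤ)).Adj a b) :
    q ≤ gp ((a.val : ℕ) : ZMod P) ((b.val : ℕ) : ZMod P) ∧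
    q ≤ gp ((b.val : ℕ) : ZMod P) ((a.val : ℕ) : ZMod P) := by
  rw [fromRel_adj] at h
  have hA : a.val < P := a.isLt
  have hB : b.val < P := b.isLt
  have core : ∀ A B : ℕ, A < P → B < A → B + q ≤ A → A + q ≤ P + B →
      q ≤ gp ((B : ℕ) : ZMod P) ((A : ℕ) : ZMod P) ∧
      q ≤ gp ((A : ℕ) : ZMod P) ((B : ℕ) : ZMod P) := by
    intro A B h1 h2 h3 h4
    rw [gp_of_lt h2 h1, gp_of_lt' h2 h1]
    omega
  obtain ⟨hne, h | h⟩ := h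
  · obtain ⟨h1, h2⟩ := h
    have hlt : b.val < a.val := by omega
    exact ((core a.val b.val hA hlt (by omega) (by omega))).symm
  · obtain ⟨h1, h2⟩ := h
    have hlt : a.val < b.val := by omega
    exact core b.val a.val hB hlt (by omega) (by omega)
lemma circ_adj {N q : ℕ} {x y : Fin N} (hq : 0 < q)
    (h1 : x.val + q ≤ y.val) (h2 : y.val + q ≤ N + x.val) :
    (circKG N q).Adj x y := by
  rw [circKG, fromRel_adj]
  refine ⟨fun hc => ?_, Or.inr ⟨?_, ?_⟩⟩
  · have := congrArg Fin.val hc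
    omega
  · omega
  · omega

lemma upperHom (d n : ℕ) (hd : 2 ≤ d) (hn : 3 ≤ n) :
    Nonempty (hajosK d n →g circKG (d * (n - 1) + 1) d) := by
  set m := n - 1 with hm
  have hm2 : 2 ≤ m := by omega
  set N := d * m + 1 with hN
  have hdm : 2 * d ≤ d * m := by
    have := Nat.mul_le_mul_left d hm2
    omega
  have hN0 : 0 < N := by omega
  set F : Fin N → Fin N := fun a => ⟨d * a.val % N, Nat.mod_lt _ hN0⟩ with hF
  have key : ∀ A B : ℕ, A < N → B < A → A - B ≤ m - 1 →
      (circKG N d).Adj ⟨d * A % N, Nat.mod_lt _ hN0⟩ ⟨d * B % N, Nat.mod_lt _ hN0⟩ := by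
    intro A B hA hBA hABm
    set δ := A - B with hδ
    have hδ1 : 1 ≤ δ := by omega
    have hdδ1 : d ≤ d * δ := by
      calc d = d * 1 := by ring
      _ ≤ d * δ := Nat.mul_le_mul_left d hδ1
    have hdδ2 : d * δ + d + 1 ≤ N := by
      have h1 : d * δ ≤ d * (m - 1) := Nat.mul_le_mul_left d (by omega)
      have h2 : d * (m - 1) + d = d * m := by
        rw [← Nat.mul_succ]
        congr 1
        omega
      omega
    set r := d * B % N with hr
    set k := d * B / N with hk
    have hrk : d * B = N * k + r := (Nat.div_add_mod _ _).symm
    have hAB : A = B + δ := by omega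
    have hdA : d * A = d * B + d * δ := by rw [hAB, Nat.mul_add]
    have hrN : r < N := Nat.mod_lt _ hN0
    by_cases hc : r + d * δ < N
    · have hmod : d * A % N = r + d * δ := by
        rw [hdA, hrk, add_assoc, Nat.mul_add_mod, Nat.mod_eq_of_lt hc]
      have := circ_adj (N := N) (q := d)
        (x := ⟨d * B % N, Nat.mod_lt _ hN0⟩) (y := ⟨d * A % N, Nat.mod_lt _ hN0⟩)
        (by omega)
        (by show d * B % N + d ≤ d * A % N; rw [hmod]; omega)
        (by show d * A % N + d ≤ N + d * B % N; rw [hmod]; omega)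
      exact this.symm
    · push_neg at hc
      have hmod : d * A % N = r + d * δ - N := by
        have he : d * A = N * (k + 1) + (r + d * δ - N) := by
          have h9 : N * (k + 1) = N * k + N := by ring
          omega
        rw [he, Nat.mul_add_mod, Nat.mod_eq_of_lt (by omega)]
      exact circ_adj (by omega)
        (by show d * A % N + d ≤ d * B % N; rw [hmod]; omega)
        (by show d * B % N + d ≤ N + d * A % N; rw [hmod]; omega)
  have main : ∀ a b : Fin N, a.val ≠ b.val →
      (∃ i : ℕ, i < d ∧
        i * m ≤ a.val ∧ a.val ≤ (i + 1) * m ∧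
        i * m ≤ b.val ∧ b.val ≤ (i + 1) * m ∧
        ¬(a.val = i * m ∧ b.val = (i + 1) * m) ∧
        ¬(b.val = i * m ∧ a.val = (i + 1) * m)) →
      (circKG N d).Adj (F a) (F b) := by
    rintro a b hne ⟨i, hi, h1, h2, h3, h4, h5, h6⟩
    have him : (i + 1) * m = i * m + m := by ring
    rcases lt_or_gt_of_ne hne with h | h
    · have hd1 : b.val - a.val ≤ m - 1 := by omega
      exact ((key b.val a.val b.isLt h hd1)).symm
    · have hd1 : a.val - b.val ≤ m - 1 := by omega
      exact key a.val b.val a.isLt h hd1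
  -- the extra edge computation
  have hextra : ∀ a b : Fin N, a.val = 0 → b.val = d * m →
      (circKG N d).Adj (F a) (F b) := by
    intro a b ha0 hbd
    have hFa : (F a).val = 0 := by
      simp only [hF, ha0]
      simp
    have hFb : (F b).val = N - d := by
      simp only [hF, hbd]
      have f1 : N * (d - 1) + N = N * d := by
        rw [← Nat.mul_succ]
        congr 1
        omega
      have f2 : d * (d * m) + d = N * d := by
        rw [hN]; ring
      have he : d * (d * m) = N * (d - 1) + (N - d) := by omega
      rw [he, Nat.mul_add_mod, Nat.mod_eq_of_lt (by omega)]
    exact circ_adj (by omega) (by omega) (by omega)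
  refine ⟨⟨F, ?_⟩⟩
  intro a b hab
  rw [hajosK, fromRel_adj] at hab
  obtain ⟨hne, hab | hab⟩ := hab
  · rcases hab with h | h
    · exact main a b (fun hc => hne (Fin.ext hc)) h
    · exact hextra a b h.1 h.2
  · rcases hab with h | h
    · exact (main b a (fun hc => hne (Fin.ext hc.symm)) h).symm
    · exact (hextra b a h.1 h.2).symm

lemma lowerBound (d n P q : ℕ) (hd : 2 ≤ d) (hn : 3 ≤ n) (hq : 0 < q) (hPq : 2 * q ≤ P)
    (f : hajosK d n →g circKG P q) : (d * (n - 1) + 1) * q ≤ d * P := by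
  by_contra hcon
  push_neg at hcon
  haveI : NeZero P := ⟨by omega⟩
  set m := n - 1 with hm
  have hm2 : 2 ≤ m := by omega
  have hmd : 0 < d * m := by positivity
  have hPu : P < (m + 1) * q := by
    have h1 : d * ((m + 1) * q) = (d * m + d) * q := by ring
    have h2 : (d * m + 1) * q ≤ (d * m + d) * q := by
      apply Nat.mul_le_mul_right; omega
    have h3 : d * P < d * ((m + 1) * q) := by omega
    exact lt_of_mul_lt_mul_left h3 (by omega)
  -- vertex picker
  have hlt : ∀ v : ℕ, min v (d * m) < d * m + 1 := fun v => by omega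
  set ι : ℕ → Fin (d * m + 1) := fun v => ⟨min v (d * m), hlt v⟩ with hι
  have hιval : ∀ v, v ≤ d * m → (ι v).val = v := by
    intro v hv; simp [hι]; omega
  set X : ℕ → ZMod P := fun v => (((f (ι v)).val : ℕ) : ZMod P) with hX
  -- the block step
  have hblock : ∀ i, i < d → m * q ≤ P ∧
      ∃ t : ℤ, X ((i + 1) * m) = X (i * m) + (t : ZMod P) ∧ t.natAbs ≤ P - m * q := by
    intro i hi
    have hbnd : ∀ j : Fin (m + 1), i * m + j.val ≤ d * m := by
      intro j
      have h1 : j.val ≤ m := by omega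
      have h2 : i * m + m ≤ d * m := by
        have : (i + 1) * m ≤ d * m := Nat.mul_le_mul_right m (by omega)
        have h3 : (i + 1) * m = i * m + m := by ring
        omega
      omega
    have hstep := block (p := P) hq hm2 hPq hPu (fun j : Fin (m + 1) => X (i * m + j.val)) ?_
    · obtain ⟨h1, t, h2, h3⟩ := hstep
      refine ⟨h1, t, ?_, h3⟩
      have e1 : i * m + (Fin.last m).val = (i + 1) * m := by simp [Fin.last]; ring
      have e2 : i * m + (0 : Fin (m + 1)).val = i * m := by simp
      rw [e1, e2] at h2
      exact h2
    · intro j k hjk hex1 hex2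
      have hedge : (hajosK d n).Adj (ι (i * m + j.val)) (ι (i * m + k.val)) := by
        rw [hajosK, fromRel_adj]
        simp only [← hm]
        have hvj : (ι (i * m + j.val)).val = i * m + j.val := hιval _ (hbnd j)
        have hvk : (ι (i * m + k.val)).val = i * m + k.val := hιval _ (hbnd k)
        have hjm : j.val ≤ m := by omega
        have hkm : k.val ≤ m := by omega
        have h3 : (i + 1) * m = i * m + m := by ring
        have hex1' : ¬(j.val = 0 ∧ k.val = m) := by
          rintro ⟨h1, h2⟩
          exact hex1 ⟨Fin.ext (by simpa using h1), Fin.ext (by simp [Fin.last]; omega)⟩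
        have hex2' : ¬(k.val = 0 ∧ j.val = m) := by
          rintro ⟨h1, h2⟩
          exact hex2 ⟨Fin.ext (by simpa using h1), Fin.ext (by simp [Fin.last]; omega)⟩
        have hjkv : j.val ≠ k.val := fun h => hjk (Fin.ext h)
        have hbj := hbnd j
        have hbk := hbnd k
        constructor
        · intro hc
          have := congrArg Fin.val hc
          rw [hvj, hvk] at this
          omega
        · left
          left
          exact ⟨i, hi, by omega, by omega, by omega, by omega, by omega, by omega⟩
      have := adj_gp hq (f.map_adj hedge)
      exact this.1
  have hmqP : m * q ≤ P := (hblock 0 (by omega)).1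
  -- chain
  have chain : ∀ k, k ≤ d → ∃ T : ℤ, X (k * m) = X 0 + (T : ZMod P) ∧
      T.natAbs ≤ k * (P - m * q) := by
    intro k
    induction k with
    | zero => intro _; exact ⟨0, by norm_num, by simp⟩
    | succ k ih =>
      intro hk
      obtain ⟨T, hT1, hT2⟩ := ih (by omega)
      obtain ⟨-, t, ht1, ht2⟩ := hblock k (by omega)
      refine ⟨T + t, ?_, ?_⟩
      · rw [ht1, hT1]; push_cast; ring
      · calc (T + t).natAbs ≤ T.natAbs + t.natAbs := Int.natAbs_add_le _ _
          _ ≤ k * (P - m * q) + (P - m * q) := add_le_add hT2 ht2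
          _ = (k + 1) * (P - m * q) := by ring
  obtain ⟨T, hT1, hT2⟩ := chain d le_rfl
  have hTq : T.natAbs < q := by
    have h1 : (d * (P - m * q) : ℤ) = d * P - d * (m * q) := by
      push_cast [Nat.cast_sub hmqP]; ring
    have h2 : (d * P : ℤ) < (d * m + 1) * q := by exact_mod_cast hcon
    have h3 : ((d * (P - m * q) : ℕ) : ℤ) < q := by
      push_cast [Nat.cast_sub hmqP]; nlinarith [h2]
    have h4 : (T.natAbs : ℤ) ≤ (d * (P - m * q) : ℕ) := by exact_mod_cast hT2
    omega
  -- final edge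
  have hedge : (hajosK d n).Adj (ι 0) (ι (d * m)) := by
    rw [hajosK, fromRel_adj]
    simp only [← hm]
    have hv0 : (ι 0).val = 0 := hιval 0 (by omega)
    have hvd : (ι (d * m)).val = d * m := hιval _ le_rfl
    refine ⟨?_, Or.inl (Or.inr ⟨?_, ?_⟩)⟩
    · intro hc
      have := congrArg Fin.val hc
      rw [hv0, hvd] at this
      omega
    · omega
    · omega
  obtain ⟨hgp1, hgp2⟩ := adj_gp hq (f.map_adj hedge)
  rcases le_or_gt 0 T with hT0 | hT0
  · -- gp (X 0) (X (d*m)) = T.toNat < q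
    have e1 : gp (X 0) (X (d * m)) = T.toNat := by
      rw [gp, hT1]
      have h5 : ((T.toNat : ℕ) : ZMod P) = ((T : ℤ) : ZMod P) := by
        rw [← Int.cast_natCast, Int.toNat_of_nonneg hT0]
      have h6 : X 0 + (T : ZMod P) - X 0 = ((T.toNat : ℕ) : ZMod P) := by
        rw [h5]; ring
      have h7 : T.toNat < P := by omega
      rw [h6, ZMod.val_cast_of_lt h7]
    have hfold1 : X 0 = (((f (ι 0)).val : ℕ) : ZMod P) := rfl
    have hfold2 : X (d * m) = (((f (ι (d * m))).val : ℕ) : ZMod P) := rfl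
    rw [← hfold1, ← hfold2, e1] at hgp1
    omega
  · have e1 : gp (X (d * m)) (X 0) = (-T).toNat := by
      rw [gp, hT1]
      have h4 : (((-T).toNat : ℕ) : ℤ) = -T := by omega
      have h5 : (((-T).toNat : ℕ) : ZMod P) = ((-T : ℤ) : ZMod P) := by
        rw [← Int.cast_natCast ((-T).toNat), h4]
      have h6 : X 0 - (X 0 + (T : ZMod P)) = (((-T).toNat : ℕ) : ZMod P) := by
        rw [h5]; push_cast; ring
      have h7 : (-T).toNat < P := by omega
      rw [h6, ZMod.val_cast_of_lt h7]
    have hfold1 : X 0 = (((f (ι 0)).val : ℕ) : ZMod P) := rfl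
    have hfold2 : X (d * m) = (((f (ι (d * m))).val : ℕ) : ZMod P) := rfl
    rw [← hfold1, ← hfold2, e1] at hgp2
    omega
end Stmt12

/-- For `d ≥ 2` and `n ≥ 3`, the circular chromatic number of `H_d(K_n)` equals
`(d(n-1)+1)/d`. -/
theorem stmt_12 (d n : ℕ) (hd : 2 ≤ d) (hn : 3 ≤ n) :
    circChrom (hajosK d n) = ((d * (n - 1) + 1 : ℕ) : ℝ) / (d : ℝ) := by
  have hm2 : 2 ≤ n - 1 := by omega
  have h2dN : 2 * d ≤ d * (n - 1) + 1 := by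
    have := Nat.mul_le_mul_left d hm2
    omega
  have hmem : ((d * (n - 1) + 1 : ℕ) : ℝ) / (d : ℝ) ∈
      {x : ℝ | ∃ n' d' : ℕ, 0 < d' ∧ 2 * d' ≤ n' ∧
        Nonempty (hajosK d n →g circKG n' d') ∧ x = n' / d'} :=
    ⟨d * (n - 1) + 1, d, by omega, h2dN, Stmt12.upperHom d n hd hn, rfl⟩
  have hlow : ∀ x ∈ {x : ℝ | ∃ n' d' : ℕ, 0 < d' ∧ 2 * d' ≤ n' ∧
      Nonempty (hajosK d n →g circKG n' d') ∧ x = n' / d'},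
      ((d * (n - 1) + 1 : ℕ) : ℝ) / (d : ℝ) ≤ x := by
    rintro x ⟨P, q, hq, hPq, ⟨f⟩, rfl⟩
    have hnat : (d * (n - 1) + 1) * q ≤ d * P := Stmt12.lowerBound d n P q hd hn hq hPq f
    rw [div_le_div_iff₀ (by positivity) (by exact_mod_cast hq)]
    have : ((d * (n - 1) + 1) * q : ℕ) ≤ (P * d : ℕ) := by
      calc (d * (n - 1) + 1) * q ≤ d * P := hnat
        _ = P * d := by ring
    exact_mod_cast this
  rw [circChrom]
  exact le_antisymm
    (csInf_le ⟨_, fun x hx => hlow x hx⟩ hmem)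
    (le_csInf ⟨_, hmem⟩ hlow)
end

section
/- Let G be a finite non-bipartite graph and s a non-negative integer. Then the fractional chromatic number of the subdivision G^{1/(2s+1)} satisfies χ_f(G^{1/(2s+1)}) ≤ (2s+1)·χ_f(G) / (s·χ_f(G) + 1). -/
open SimpleGraph

/-- The Kneser graph `KG(m, n)`: vertices are the `n`-element subsets of an `m`-set,
adjacent iff disjoint. -/
def kneserG (m n : ℕ) : SimpleGraph {A : Finset (Fin m) // A.card = n} :=
  SimpleGraph.fromRel fun A B => Disjoint A.1 B.1

/-- The fractional chromatic number: the infimum (in `ℝ`) of `m / n` over all pairs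
`(m, n)` with `0 < n`, `2n ≤ m`, such that `G` admits a homomorphism to `KG(m, n)`. -/
noncomputable def fracChrom {V : Type*} (G : SimpleGraph V) : ℝ :=
  sInf {x : ℝ | ∃ m n : ℕ, 0 < n ∧ 2 * n ≤ m ∧ Nonempty (G →g kneserG m n) ∧ x = m / n}

namespace SubdivAux

open Finset

def BB1 (s : ℕ) : Finset (Fin (2*s+1)) := univ.filter fun j => j.val % 2 = 1 ∨ j.val = 0
def BB0 (s : ℕ) : Finset (Fin (2*s+1)) := univ.filter fun j => j.val % 2 = 0 ∧ j.val ≠ 0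
def RR (s i : ℕ) : Finset (Fin (2*s+1)) :=
  univ.filter fun j => ((i + (2*s+1 - j.val)) % (2*s+1)) % 2 = 1

variable {s i : ℕ}

lemma mem_BB1 {j : Fin (2*s+1)} : j ∈ BB1 s ↔ (j.val % 2 = 1 ∨ j.val = 0) := by simp [BB1]
lemma mem_BB0 {j : Fin (2*s+1)} : j ∈ BB0 s ↔ (j.val % 2 = 0 ∧ j.val ≠ 0) := by simp [BB0]
lemma mem_RR {j : Fin (2*s+1)} :
    j ∈ RR s i ↔ ((i + (2*s+1 - j.val)) % (2*s+1)) % 2 = 1 := by simp [RR]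

lemma BB_disj : Disjoint (BB0 s) (BB1 s) := by
  rw [Finset.disjoint_left]
  intro j h0 h1
  rw [mem_BB0] at h0; rw [mem_BB1] at h1; omega

lemma RR_zero : RR s 0 = BB0 s := by
  ext j
  have hj := j.isLt
  rw [mem_RR, mem_BB0]
  rcases Nat.eq_zero_or_pos j.val with h | h
  · rw [h]
    simp [Nat.mod_self]
  · rw [Nat.zero_add, Nat.mod_eq_of_lt (show 2*s+1 - j.val < 2*s+1 by omega)]
    omega

lemma RR_last : RR s (2*s+1) = BB0 s := by
  ext j
  have hj := j.isLt
  rw [mem_RR, mem_BB0, Nat.add_mod_left]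
  rcases Nat.eq_zero_or_pos j.val with h | h
  · rw [h]
    simp [Nat.mod_self]
  · rw [Nat.mod_eq_of_lt (show 2*s+1 - j.val < 2*s+1 by omega)]
    omega

lemma RR_step {j : Fin (2*s+1)} (h1 : j ∈ RR s i) (h2 : j ∈ RR s (i+1)) : False := by
  rw [mem_RR] at h1 h2
  have he : i + 1 + (2*s+1 - j.val) = (i + (2*s+1 - j.val)) + 1 := by omega
  rw [he, Nat.add_mod (i + (2*s+1 - j.val)) 1] at h2
  rcases Nat.eq_zero_or_pos s with hs | hs
  · subst hs
    simp [Nat.mod_one] at h1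
  · have h1k : 1 % (2*s+1) = 1 := Nat.mod_eq_of_lt (by omega)
    rw [h1k] at h2
    have hlt : (i + (2*s+1 - j.val)) % (2*s+1) < 2*s+1 := Nat.mod_lt _ (by omega)
    set r := (i + (2*s+1 - j.val)) % (2*s+1) with hr
    have hcase : (r+1) % (2*s+1) = if r + 1 = 2*s+1 then 0 else r+1 := by
      split
      · next h => rw [h, Nat.mod_self]
      · exact Nat.mod_eq_of_lt (by omega)
    rw [hcase] at h2
    split at h2 <;> omega

lemma card_BB0 : (BB0 s).card = s := by
  have h : (BB0 s).card = (univ : Finset (Fin s)).card := by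
    exact Finset.card_bij'
      (fun j hj => (⟨j.val / 2 - 1, by
        rw [mem_BB0] at hj; have := j.isLt; omega⟩ : Fin s))
      (fun a _ => (⟨2*a.val + 2, by have := a.isLt; omega⟩ : Fin (2*s+1)))
      (fun a ha => mem_univ _)
      (by
        intro a ha
        rw [mem_BB0]
        simp only [Fin.val_mk]
        omega)
      (by
        intro a ha
        rw [mem_BB0] at ha
        have := a.isLt
        apply Fin.ext
        simp only [Fin.val_mk]
        omega)
      (by
        intro a ha
        have := a.isLt
        apply Fin.ext
        simp only [Fin.val_mk]
        omega)
  simpa using h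

lemma BB1_eq_compl : BB1 s = (BB0 s)ᶜ := by
  ext j
  rw [mem_BB1, Finset.mem_compl, mem_BB0]
  omega

lemma card_BB1 : (BB1 s).card = s + 1 := by
  rw [BB1_eq_compl, Finset.card_compl, card_BB0]
  simp
  omega

lemma invol {j : ℕ} (hj : j < 2*s+1) :
    (i + (2*s+1 - (i + (2*s+1 - j)) % (2*s+1))) % (2*s+1) = j := by
  have hk : 0 < 2*s+1 := by omega
  set t := (i + (2*s+1 - j)) % (2*s+1) with ht
  have htl : t < 2*s+1 := Nat.mod_lt _ hk
  have e1 : ((i + (2*s+1 - t)) % (2*s+1) + t) % (2*s+1) = i % (2*s+1) := by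
    rw [Nat.mod_add_mod]
    have he : i + (2*s+1 - t) + t = i + (2*s+1) := by omega
    rw [he, Nat.add_mod_right]
  have e2 : (j + t) % (2*s+1) = i % (2*s+1) := by
    rw [ht, Nat.add_comm j, Nat.mod_add_mod]
    have he : i + (2*s+1 - j) + j = i + (2*s+1) := by omega
    rw [he, Nat.add_mod_right]
  have e3 : ((i + (2*s+1 - t)) % (2*s+1)) ≡ j [MOD 2*s+1] :=
    Nat.ModEq.add_right_cancel' t (e1.trans e2.symm)
  have e4 : ((i + (2*s+1 - t)) % (2*s+1)) % (2*s+1) = j % (2*s+1) := e3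
  rwa [Nat.mod_eq_of_lt (Nat.mod_lt _ hk), Nat.mod_eq_of_lt hj] at e4

lemma card_RR : (RR s i).card = s := by
  have hk : 0 < 2*s+1 := by omega
  have h : (RR s i).card = (univ.filter fun j : Fin (2*s+1) => j.val % 2 = 1).card := by
    exact Finset.card_bij'
      (fun j _ => (⟨(i + (2*s+1 - j.val)) % (2*s+1), Nat.mod_lt _ hk⟩ : Fin (2*s+1)))
      (fun y _ => (⟨(i + (2*s+1 - y.val)) % (2*s+1), Nat.mod_lt _ hk⟩ : Fin (2*s+1)))
      (by
        intro a ha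
        rw [mem_RR] at ha
        simp only [mem_filter, mem_univ, true_and, Fin.val_mk]
        exact ha)
      (by
        intro y hy
        simp only [mem_filter, mem_univ, true_and] at hy
        rw [mem_RR]
        simp only [Fin.val_mk]
        rw [invol y.isLt]
        exact hy)
      (by
        intro a ha
        apply Fin.ext
        simp only [Fin.val_mk]
        exact invol a.isLt)
      (by
        intro y hy
        apply Fin.ext
        simp only [Fin.val_mk]
        exact invol y.isLt)
  rw [h]
  have h2 : (univ.filter fun j : Fin (2*s+1) => j.val % 2 = 1).card
      = (univ : Finset (Fin s)).card := by
    exact Finset.card_bij'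
      (fun j hj => (⟨j.val / 2, by
        simp only [mem_filter, mem_univ, true_and] at hj
        have := j.isLt; omega⟩ : Fin s))
      (fun a _ => (⟨2*a.val + 1, by have := a.isLt; omega⟩ : Fin (2*s+1)))
      (fun a ha => mem_univ _)
      (by
        intro a ha
        simp only [mem_filter, mem_univ, true_and, Fin.val_mk]
        omega)
      (by
        intro a ha
        simp only [mem_filter, mem_univ, true_and] at ha
        apply Fin.ext
        simp only [Fin.val_mk]
        omega)
      (by
        intro a ha
        apply Fin.ext
        simp only [Fin.val_mk]
        omega)
  rw [h2]
  simp


section Tsets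

open scoped Classical

variable {V : Type*}

noncomputable def Tset (s m : ℕ) (A : V → Finset (Fin m)) (u : V) (i : ℕ) (v : V) :
    Finset (Fin (2*s+1) × Fin m) :=
  ((if i % 2 = 0 then BB1 s else BB0 s) ×ˢ A u) ∪
  ((if i % 2 = 0 then BB0 s else BB1 s) ×ˢ (A v \ A u)) ∪
  ((if WellOrderingRel u v then RR s i else RR s (2*s+1 - i)) ×ˢ (A u ∪ A v)ᶜ)

noncomputable def Sset (s m : ℕ) (A : V → Finset (Fin m)) (u : V) :
    Finset (Fin (2*s+1) × Fin m) :=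
  (BB1 s ×ˢ A u) ∪ (BB0 s ×ˢ (A u)ᶜ)

variable {s m : ℕ} {A : V → Finset (Fin m)} {u v : V} {i : ℕ}

lemma mem_Tset {x : Fin (2*s+1) × Fin m} :
    x ∈ Tset s m A u i v ↔
      (x.1 ∈ (if i % 2 = 0 then BB1 s else BB0 s) ∧ x.2 ∈ A u) ∨
      (x.1 ∈ (if i % 2 = 0 then BB0 s else BB1 s) ∧ x.2 ∈ A v ∧ x.2 ∉ A u) ∨
      (x.1 ∈ (if WellOrderingRel u v then RR s i else RR s (2*s+1 - i)) ∧
        x.2 ∉ A u ∧ x.2 ∉ A v) := by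
  simp [Tset, Finset.mem_union, Finset.mem_product, Finset.mem_sdiff, Finset.mem_compl,
    not_or, and_assoc]

lemma mem_Sset {x : Fin (2*s+1) × Fin m} :
    x ∈ Sset s m A u ↔ (x.1 ∈ BB1 s ∧ x.2 ∈ A u) ∨ (x.1 ∈ BB0 s ∧ x.2 ∉ A u) := by
  simp [Sset, Finset.mem_union, Finset.mem_product, Finset.mem_compl]

lemma Tset_succ_disj (hik : i + 1 ≤ 2*s+1) :
    Disjoint (Tset s m A u i v) (Tset s m A u (i+1) v) := by
  rw [Finset.disjoint_left]
  intro x h1 h2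
  rw [mem_Tset] at h1 h2
  have hB : ∀ {y : Fin (2*s+1)}, y ∈ BB0 s → y ∈ BB1 s → False := by
    intro y hy0 hy1
    exact Finset.disjoint_left.1 BB_disj hy0 hy1
  rcases h1 with ⟨hj1, hc1⟩ | ⟨hj1, hc1, hc1'⟩ | ⟨hj1, hc1, hc1'⟩ <;>
    rcases h2 with ⟨hj2, hc2⟩ | ⟨hj2, hc2, hc2'⟩ | ⟨hj2, hc2, hc2'⟩
  · by_cases hp : i % 2 = 0
    · rw [if_pos hp] at hj1; rw [if_neg (by omega)] at hj2; exact hB hj2 hj1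
    · rw [if_neg hp] at hj1; rw [if_pos (by omega)] at hj2; exact hB hj1 hj2
  · exact hc2' hc1
  · exact hc2 hc1
  · exact hc1' hc2
  · by_cases hp : i % 2 = 0
    · rw [if_pos hp] at hj1; rw [if_neg (by omega)] at hj2; exact hB hj1 hj2
    · rw [if_neg hp] at hj1; rw [if_pos (by omega)] at hj2; exact hB hj2 hj1
  · exact hc2' hc1
  · exact hc1 hc2
  · exact hc1' hc2
  · by_cases hw : WellOrderingRel u v
    · rw [if_pos hw] at hj1 hj2
      exact RR_step hj1 hj2
    · rw [if_neg hw] at hj1 hj2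
      have he : 2*s+1 - i = (2*s+1 - (i+1)) + 1 := by omega
      rw [he] at hj1
      exact RR_step hj2 hj1

lemma Sset_Tset_disj : Disjoint (Sset s m A u) (Tset s m A u 1 v) := by
  rw [Finset.disjoint_left]
  intro x h1 h2
  rw [mem_Sset] at h1
  rw [mem_Tset] at h2
  have hB : ∀ {y : Fin (2*s+1)}, y ∈ BB0 s → y ∈ BB1 s → False := by
    intro y hy0 hy1
    exact Finset.disjoint_left.1 BB_disj hy0 hy1
  rw [if_neg (by omega : ¬ (1:ℕ) % 2 = 0), if_neg (by omega : ¬ (1:ℕ) % 2 = 0)] at h2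
  rcases h1 with ⟨hj1, hc1⟩ | ⟨hj1, hc1⟩ <;>
    rcases h2 with ⟨hj2, hc2⟩ | ⟨hj2, hc2, hc2'⟩ | ⟨hj2, hc2, hc2'⟩
  · exact hB hj2 hj1
  · exact hc2' hc1
  · exact hc2 hc1
  · exact hc1 hc2
  · exact hB hj1 hj2
  · by_cases hw : WellOrderingRel u v
    · rw [if_pos hw] at hj2
      rw [← RR_zero] at hj1
      exact RR_step hj1 hj2
    · rw [if_neg hw] at hj2
      have hj1' : x.1 ∈ RR s ((2*s+1-1)+1) := by
        rw [show (2*s+1-1)+1 = 2*s+1 from by omega]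
        rw [← RR_last] at hj1
        exact hj1
      exact RR_step hj2 hj1' 

lemma Sset_Sset_disj {a b : V} (hAB : Disjoint (A a) (A b)) (hs : s = 0) :
    Disjoint (Sset s m A a) (Sset s m A b) := by
  subst hs
  have hBB0 : BB0 0 = ∅ := by
    ext j
    rw [mem_BB0]
    have := j.isLt
    simp only [Finset.notMem_empty, iff_false]
    omega
  rw [Finset.disjoint_left]
  intro x h1 h2
  rw [mem_Sset] at h1 h2
  rw [hBB0] at h1 h2
  simp at h1 h2
  exact Finset.disjoint_left.1 hAB h1.2 h2.2

lemma Tset_symm (hd : Disjoint (A u) (A v)) (hne : u ≠ v) (hik : i ≤ 2*s+1) :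
    Tset s m A u i v = Tset s m A v (2*s+1-i) u := by
  have hx1 : ∀ c, c ∈ A u → c ∉ A v := fun c hc => Finset.disjoint_left.1 hd hc
  have hx2 : ∀ c, c ∈ A v → c ∉ A u := fun c hc => Finset.disjoint_right.1 hd hc
  ext x
  rw [mem_Tset, mem_Tset]
  rw [show 2*s+1 - (2*s+1-i) = i from by omega]
  have hu1 := hx1 x.2
  have hu2 := hx2 x.2
  rcases trichotomous_of WellOrderingRel u v with hw | hw | hw
  · have hw' : ¬ WellOrderingRel v u := asymm hw
    rw [if_pos hw, if_neg hw']
    by_cases hp : i % 2 = 0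
    · rw [if_pos hp, if_pos hp, if_neg (show ¬ (2*s+1-i) % 2 = 0 by omega),
        if_neg (show ¬ (2*s+1-i) % 2 = 0 by omega)]
      constructor
      · rintro (⟨h1,h2⟩|⟨h1,h2,h3⟩|⟨h1,h2,h3⟩)
        · exact Or.inr (Or.inl ⟨h1,h2,hu1 h2⟩)
        · exact Or.inl ⟨h1,h2⟩
        · exact Or.inr (Or.inr ⟨h1,h3,h2⟩)
      · rintro (⟨h1,h2⟩|⟨h1,h2,h3⟩|⟨h1,h2,h3⟩)
        · exact Or.inr (Or.inl ⟨h1,h2,hu2 h2⟩)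
        · exact Or.inl ⟨h1,h2⟩
        · exact Or.inr (Or.inr ⟨h1,h3,h2⟩)
    · rw [if_neg hp, if_neg hp, if_pos (show (2*s+1-i) % 2 = 0 by omega),
        if_pos (show (2*s+1-i) % 2 = 0 by omega)]
      constructor
      · rintro (⟨h1,h2⟩|⟨h1,h2,h3⟩|⟨h1,h2,h3⟩)
        · exact Or.inr (Or.inl ⟨h1,h2,hu1 h2⟩)
        · exact Or.inl ⟨h1,h2⟩
        · exact Or.inr (Or.inr ⟨h1,h3,h2⟩)
      · rintro (⟨h1,h2⟩|⟨h1,h2,h3⟩|⟨h1,h2,h3⟩)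
        · exact Or.inr (Or.inl ⟨h1,h2,hu2 h2⟩)
        · exact Or.inl ⟨h1,h2⟩
        · exact Or.inr (Or.inr ⟨h1,h3,h2⟩)
  · exact absurd hw hne
  · have hw' : ¬ WellOrderingRel u v := asymm hw
    rw [if_neg hw', if_pos hw]
    by_cases hp : i % 2 = 0
    · rw [if_pos hp, if_pos hp, if_neg (show ¬ (2*s+1-i) % 2 = 0 by omega),
        if_neg (show ¬ (2*s+1-i) % 2 = 0 by omega)]
      constructor
      · rintro (⟨h1,h2⟩|⟨h1,h2,h3⟩|⟨h1,h2,h3⟩)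
        · exact Or.inr (Or.inl ⟨h1,h2,hu1 h2⟩)
        · exact Or.inl ⟨h1,h2⟩
        · exact Or.inr (Or.inr ⟨h1,h3,h2⟩)
      · rintro (⟨h1,h2⟩|⟨h1,h2,h3⟩|⟨h1,h2,h3⟩)
        · exact Or.inr (Or.inl ⟨h1,h2,hu2 h2⟩)
        · exact Or.inl ⟨h1,h2⟩
        · exact Or.inr (Or.inr ⟨h1,h3,h2⟩)
    · rw [if_neg hp, if_neg hp, if_pos (show (2*s+1-i) % 2 = 0 by omega),
        if_pos (show (2*s+1-i) % 2 = 0 by omega)]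
      constructor
      · rintro (⟨h1,h2⟩|⟨h1,h2,h3⟩|⟨h1,h2,h3⟩)
        · exact Or.inr (Or.inl ⟨h1,h2,hu1 h2⟩)
        · exact Or.inl ⟨h1,h2⟩
        · exact Or.inr (Or.inr ⟨h1,h3,h2⟩)
      · rintro (⟨h1,h2⟩|⟨h1,h2,h3⟩|⟨h1,h2,h3⟩)
        · exact Or.inr (Or.inl ⟨h1,h2,hu2 h2⟩)
        · exact Or.inl ⟨h1,h2⟩
        · exact Or.inr (Or.inr ⟨h1,h3,h2⟩)

lemma card_Tset {n : ℕ} (hd : Disjoint (A u) (A v)) (hu : (A u).card = n)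
    (hv : (A v).card = n) (hmn : 2*n ≤ m) :
    (Tset s m A u i v).card = s*m+n := by
  have h1 : A v \ A u = A v := by
    rw [Finset.sdiff_eq_self_iff_disjoint]; exact hd.symm
  rw [Tset, h1]
  have d1 : Disjoint ((if i % 2 = 0 then BB1 s else BB0 s) ×ˢ A u)
      ((if i % 2 = 0 then BB0 s else BB1 s) ×ˢ A v) := by
    rw [Finset.disjoint_left]
    rintro ⟨j, c⟩ hx hy
    rw [Finset.mem_product] at hx hy
    exact Finset.disjoint_left.1 hd hx.2 hy.2
  have d2 : Disjoint ((if i % 2 = 0 then BB1 s else BB0 s) ×ˢ A u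
        ∪ (if i % 2 = 0 then BB0 s else BB1 s) ×ˢ A v)
      ((if WellOrderingRel u v then RR s i else RR s (2*s+1 - i)) ×ˢ (A u ∪ A v)ᶜ) := by
    rw [Finset.disjoint_left]
    rintro ⟨j, c⟩ hx hy
    rw [Finset.mem_union] at hx
    rw [Finset.mem_product, Finset.mem_compl, Finset.mem_union] at hy
    rcases hx with hx | hx <;> rw [Finset.mem_product] at hx
    · exact hy.2 (Or.inl hx.2)
    · exact hy.2 (Or.inr hx.2)
  rw [Finset.card_union_of_disjoint d2, Finset.card_union_of_disjoint d1]
  rw [Finset.card_product, Finset.card_product, Finset.card_product]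
  rw [hu, hv, Finset.card_compl, Finset.card_union_of_disjoint hd, hu, hv]
  have hcR : (if WellOrderingRel u v then RR s i else RR s (2*s+1 - i)).card = s := by
    split <;> exact card_RR
  rw [hcR]
  obtain ⟨t, rfl⟩ : ∃ t, m = 2*n + t := ⟨m - 2*n, by omega⟩
  rw [show Fintype.card (Fin (2*n+t)) = 2*n+t from by simp]
  rw [show 2*n+t - (n+n) = t from by omega]
  by_cases hp : i % 2 = 0
  · rw [if_pos hp, if_pos hp, card_BB1, card_BB0]
    ring
  · rw [if_neg hp, if_neg hp, card_BB1, card_BB0]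
    ring

lemma card_Sset {n : ℕ} (hu : (A u).card = n) (hnm : n ≤ m) :
    (Sset s m A u).card = s*m+n := by
  have d1 : Disjoint (BB1 s ×ˢ A u) (BB0 s ×ˢ (A u)ᶜ) := by
    rw [Finset.disjoint_left]
    rintro ⟨j, c⟩ hx hy
    rw [Finset.mem_product] at hx hy
    rw [Finset.mem_compl] at hy
    exact hy.2 hx.2
  rw [Sset, Finset.card_union_of_disjoint d1, Finset.card_product, Finset.card_product,
    card_BB1, card_BB0, Finset.card_compl, hu]
  obtain ⟨t, rfl⟩ : ∃ t, m = n + t := ⟨m - n, by omega⟩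
  rw [show Fintype.card (Fin (n+t)) = n+t from by simp]
  rw [show n+t - n = t from by omega]
  ring

end Tsets


section Graph

open SimpleGraph

variable {V : Type*} (G : SimpleGraph V)

variable (s m : ℕ) (A : V → Finset (Fin m))

noncomputable def Fmap :
    (V ⊕ {p : Sym2 (V × ℕ) //
      ∃ u v i, G.Adj u v ∧ 0 < i ∧ i < 2*s+1 ∧ p = Sym2.mk (u, i) (v, 2*s+1 - i)}) →
      Finset (Fin (2*s+1) × Fin m)
  | Sum.inl u => Sset s m A u
  | Sum.inr p => Tset s m A p.2.choose p.2.choose_spec.choose_spec.choose p.2.choose_spec.choose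

variable {G s m A}

noncomputable def pU (p : {p : Sym2 (V × ℕ) //
      ∃ u v i, G.Adj u v ∧ 0 < i ∧ i < 2*s+1 ∧ p = Sym2.mk (u, i) (v, 2*s+1 - i)}) : V :=
  p.2.choose

noncomputable def pV (p : {p : Sym2 (V × ℕ) //
      ∃ u v i, G.Adj u v ∧ 0 < i ∧ i < 2*s+1 ∧ p = Sym2.mk (u, i) (v, 2*s+1 - i)}) : V :=
  p.2.choose_spec.choose

noncomputable def pI (p : {p : Sym2 (V × ℕ) //
      ∃ u v i, G.Adj u v ∧ 0 < i ∧ i < 2*s+1 ∧ p = Sym2.mk (u, i) (v, 2*s+1 - i)}) : ℕ :=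
  p.2.choose_spec.choose_spec.choose

lemma pSpec (p : {p : Sym2 (V × ℕ) //
      ∃ u v i, G.Adj u v ∧ 0 < i ∧ i < 2*s+1 ∧ p = Sym2.mk (u, i) (v, 2*s+1 - i)}) :
    G.Adj (pU p) (pV p) ∧ 0 < pI p ∧ pI p < 2*s+1 ∧
      (p : Sym2 (V × ℕ)) = Sym2.mk (pU p, pI p) (pV p, 2*s+1 - pI p) :=
  p.2.choose_spec.choose_spec.choose_spec

lemma Fmap_inr_def (p) : Fmap G s m A (Sum.inr p) = Tset s m A (pU p) (pI p) (pV p) := rfl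

lemma Fmap_inr (hA : ∀ ⦃x y⦄, G.Adj x y → Disjoint (A x) (A y))
    (p : {p : Sym2 (V × ℕ) //
      ∃ u v i, G.Adj u v ∧ 0 < i ∧ i < 2*s+1 ∧ p = Sym2.mk (u, i) (v, 2*s+1 - i)})
    {u v : V} {i : ℕ} (hadj : G.Adj u v) (h1 : 0 < i) (h2 : i < 2*s+1)
    (hp : (p : Sym2 (V × ℕ)) = Sym2.mk (u, i) (v, 2*s+1 - i)) :
    Fmap G s m A (Sum.inr p) = Tset s m A u i v := by
  rw [Fmap_inr_def]
  obtain ⟨hadj0, hi0pos, hi0lt, hp0⟩ := pSpec p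
  rw [hp] at hp0
  rw [Sym2.eq_iff] at hp0
  rcases hp0 with ⟨ha, hb⟩ | ⟨ha, hb⟩
  · obtain ⟨hu, hi⟩ := Prod.mk.inj ha
    obtain ⟨hv, _⟩ := Prod.mk.inj hb
    rw [← hu, ← hi, ← hv]
  · obtain ⟨hu, hi'⟩ := Prod.mk.inj ha
    obtain ⟨hv, hi''⟩ := Prod.mk.inj hb
    subst hu
    subst hv
    rw [← hi'']
    exact (Tset_symm (hA hadj) hadj.ne (by omega)).symm

lemma card_Fmap {n : ℕ} (hA : ∀ ⦃x y⦄, G.Adj x y → Disjoint (A x) (A y))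
    (hcard : ∀ x, (A x).card = n) (hmn : 2*n ≤ m) (x) :
    (Fmap G s m A x).card = s*m+n := by
  match x with
  | Sum.inl u => exact card_Sset (hcard u) (by omega)
  | Sum.inr p =>
    obtain ⟨hadj0, hi0pos, hi0lt, hp0⟩ := p.2.choose_spec.choose_spec.choose_spec
    exact card_Tset (hA hadj0) (hcard _) (hcard _) hmn

lemma disj_Fmap (hA : ∀ ⦃x y⦄, G.Adj x y → Disjoint (A x) (A y))
    {x y} (hxy : (subdiv G (2*s+1)).Adj x y) :
    Disjoint (Fmap G s m A x) (Fmap G s m A y) := by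
  unfold subdiv at hxy
  rw [SimpleGraph.fromRel_adj] at hxy
  obtain ⟨hne, h⟩ := hxy
  rcases x with a | p <;> rcases y with b | q
  · have hs : s = 0 := by rcases h with ⟨h, _⟩ | ⟨h, _⟩ <;> omega
    have hadj : G.Adj a b := by
      rcases h with ⟨_, h⟩ | ⟨_, h⟩
      · exact h
      · exact h.symm
    exact Sset_Sset_disj (hA hadj) hs
  · rcases h with ⟨v, hav, hp⟩ | hfalse
    · rcases Nat.eq_zero_or_pos s with hs | hs
      · exfalso
        obtain ⟨u0, v0, i0, _, hi0, hik0, _⟩ := q.2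
        omega
      · rw [show Fmap G s m A (Sum.inl a) = Sset s m A a from rfl,
          Fmap_inr hA q hav (by omega) (by omega) hp]
        exact Sset_Tset_disj
    · exact hfalse.elim
  · rcases h with hfalse | ⟨v, hav, hp⟩
    · exact hfalse.elim
    · rcases Nat.eq_zero_or_pos s with hs | hs
      · exfalso
        obtain ⟨u0, v0, i0, _, hi0, hik0, _⟩ := p.2
        omega
      · rw [show Fmap G s m A (Sum.inl b) = Sset s m A b from rfl,
          Fmap_inr hA p hav (by omega) (by omega) hp]
        exact Sset_Tset_disj.symm
  · rcases h with ⟨u, v, i, hadj, hi, hik, hp, hq⟩ | ⟨u, v, i, hadj, hi, hik, hq, hp⟩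
    · rw [Nat.sub_sub] at hq
      rw [Fmap_inr hA p hadj hi (by omega) hp,
        Fmap_inr hA q hadj (by omega) (by omega) hq]
      exact Tset_succ_disj (by omega)
    · rw [Nat.sub_sub] at hp
      rw [Fmap_inr hA q hadj hi (by omega) hq,
        Fmap_inr hA p hadj (by omega) (by omega) hp]
      exact (Tset_succ_disj (by omega)).symm

end Graph


section Hom

open SimpleGraph

variable {V : Type*} {G : SimpleGraph V}

noncomputable def subdivHom {m n : ℕ} (hn : 0 < n) (hm : 2*n ≤ m)
    (φ : G →g kneserG m n) (s : ℕ) :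
    subdiv G (2*s+1) →g kneserG ((2*s+1)*m) (s*m+n) := by
  have hA : ∀ ⦃x y⦄, G.Adj x y → Disjoint ((φ x).1) ((φ y).1) := by
    intro x y hxy
    have := φ.map_rel hxy
    unfold kneserG at this
    rw [SimpleGraph.fromRel_adj] at this
    rcases this.2 with h | h
    · exact h
    · exact h.symm
  have hcard : ∀ x, ((φ x).1).card = n := fun x => (φ x).2
  exact
  { toFun := fun x => ⟨(Fmap G s m (fun v => (φ v).1) x).map finProdFinEquiv.toEmbedding, by
      rw [Finset.card_map, card_Fmap hA hcard hm]⟩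
    map_rel' := by
      intro x y hxy
      have hd := disj_Fmap hA hxy
      unfold kneserG
      rw [SimpleGraph.fromRel_adj]
      constructor
      · intro hEq
        have h1 : (Fmap G s m (fun v => (φ v).1) x).map finProdFinEquiv.toEmbedding
            = (Fmap G s m (fun v => (φ v).1) y).map finProdFinEquiv.toEmbedding :=
          congrArg Subtype.val hEq
        have h2 := Finset.map_injective _ h1
        rw [h2] at hd
        have h3 : Fmap G s m (fun v => (φ v).1) y = ∅ := by
          simpa using disjoint_self.1 hd
        have h4 := card_Fmap (s := s) hA hcard hm y
        rw [h3] at h4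
        simp at h4
        omega
      · exact Or.inl ((Finset.disjoint_map _).2 hd) }

noncomputable def colorHom {c : ℕ} (C : G.Coloring (Fin c)) : G →g kneserG c 1 :=
  { toFun := fun v => ⟨{C v}, Finset.card_singleton _⟩
    map_rel' := by
      intro a b hab
      unfold kneserG
      rw [SimpleGraph.fromRel_adj]
      refine ⟨?_, Or.inl ?_⟩
      · intro hEq
        have h1 : ({C a} : Finset (Fin c)) = {C b} := congrArg Subtype.val hEq
        exact C.valid hab (Finset.singleton_injective h1)
      · exact Finset.disjoint_singleton.2 (C.valid hab) }

lemma fc_bdd {W : Type*} (H : SimpleGraph W) :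
    BddBelow {x : ℝ | ∃ m n : ℕ, 0 < n ∧ 2*n ≤ m ∧ Nonempty (H →g kneserG m n) ∧ x = m/n} := by
  refine ⟨0, fun x hx => ?_⟩
  obtain ⟨m, n, hn, hm, _, rfl⟩ := hx
  positivity

end Hom

end SubdivAux

/-- For a finite non-bipartite graph `G` and any non-negative integer `s`,
`χ_f(G^{1/(2s+1)}) ≤ (2s+1)χ_f(G) / (sχ_f(G) + 1)`. -/
theorem stmt_14 {V : Type*} [Fintype V] (G : SimpleGraph V) (hG : ¬ G.Colorable 2) (s : ℕ) :
    fracChrom (subdiv G (2 * s + 1)) ≤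
      (2 * s + 1 : ℝ) * fracChrom G / ((s : ℝ) * fracChrom G + 1) := by
  classical
  have main : ∀ x ∈ {x : ℝ | ∃ m n : ℕ, 0 < n ∧ 2 * n ≤ m ∧
      Nonempty (G →g kneserG m n) ∧ x = m / n},
      fracChrom (subdiv G (2 * s + 1)) ≤ (2*(s:ℝ)+1) * x / ((s:ℝ) * x + 1) := by
    intro x hx
    obtain ⟨m, n, hn, hm, ⟨φ⟩, rfl⟩ := hx
    have hhom : Nonempty (subdiv G (2*s+1) →g kneserG ((2*s+1)*m) (s*m+n)) :=
      ⟨SubdivAux.subdivHom hn hm φ s⟩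
    have hmem : (((2*s+1)*m : ℕ) : ℝ) / ((s*m+n : ℕ) : ℝ) ∈
        {x : ℝ | ∃ M N : ℕ, 0 < N ∧ 2 * N ≤ M ∧
          Nonempty (subdiv G (2*s+1) →g kneserG M N) ∧ x = M / N} := by
      refine ⟨(2*s+1)*m, s*m+n, by omega, by nlinarith, hhom, rfl⟩
    have h1 : fracChrom (subdiv G (2*s+1)) ≤ (((2*s+1)*m : ℕ) : ℝ) / ((s*m+n : ℕ) : ℝ) := by
      unfold fracChrom
      exact csInf_le (SubdivAux.fc_bdd _) hmem
    have hcast : (((2*s+1)*m : ℕ) : ℝ) / ((s*m+n : ℕ) : ℝ)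
        = (2*(s:ℝ)+1) * ((m:ℝ)/(n:ℝ)) / ((s:ℝ) * ((m:ℝ)/(n:ℝ)) + 1) := by
      have hn' : (n:ℝ) ≠ 0 := by positivity
      have hd : (s:ℝ)*m + n ≠ 0 := by positivity
      push_cast
      rw [div_eq_div_iff (by positivity) (by
        have h2 : (0:ℝ) < (s:ℝ) * ((m:ℝ)/(n:ℝ)) + 1 := by positivity
        exact h2.ne')]
      field_simp
      try ring
    rw [hcast] at h1
    convert h1 using 2 <;> push_cast <;> ring
  set SG := {x : ℝ | ∃ m n : ℕ, 0 < n ∧ 2 * n ≤ m ∧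
      Nonempty (G →g kneserG m n) ∧ x = m / n} with hSG
  have hFdef : fracChrom G = sInf SG := rfl
  have hSne : SG.Nonempty := by
    have hcol : G.Colorable (Fintype.card V + 2) :=
      (SimpleGraph.colorable_of_fintype G).mono (by omega)
    obtain ⟨C⟩ := hcol
    exact ⟨((Fintype.card V + 2 : ℕ) : ℝ) / ((1:ℕ) : ℝ), Fintype.card V + 2, 1,
      one_pos, by omega, ⟨SubdivAux.colorHom C⟩, rfl⟩
  have hSbdd : BddBelow SG := SubdivAux.fc_bdd G
  have hF0 : 0 ≤ sInf SG := by
    apply le_csInf hSne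
    intro x hx
    obtain ⟨m, n, hn, hm, _, rfl⟩ := hx
    positivity
  rw [hFdef]
  set F := sInf SG with hF
  apply le_of_forall_pos_le_add
  intro ε hε
  have h2s : (0:ℝ) < 2*(s:ℝ)+1 := by positivity
  set ε' := ε / (2*(s:ℝ)+1) with hε'def
  have hε' : 0 < ε' := by positivity
  obtain ⟨x, hxS, hxlt⟩ := exists_lt_of_csInf_lt hSne (by linarith : sInf SG < F + ε')
  have hxF : F ≤ x := csInf_le hSbdd hxS
  have hx0 : 0 ≤ x := le_trans hF0 hxF
  have hD := main x hxS
  have hsx : (0:ℝ) ≤ (s:ℝ)*x := mul_nonneg (Nat.cast_nonneg s) hx0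
  have hsF : (0:ℝ) ≤ (s:ℝ)*F := mul_nonneg (Nat.cast_nonneg s) hF0
  have ha : (0:ℝ) < (s:ℝ)*x + 1 := by linarith
  have hb : (0:ℝ) < (s:ℝ)*F + 1 := by linarith
  have hprod : (0:ℝ) ≤ ((s:ℝ)*F+1) * ((s:ℝ)*x+1) - 1 := by nlinarith
  have key2 : (2*(s:ℝ)+1)*x/((s:ℝ)*x+1) ≤ (2*(s:ℝ)+1)*F/((s:ℝ)*F+1) + (2*(s:ℝ)+1)*(x - F) := by
    have e : (2*(s:ℝ)+1)*F/((s:ℝ)*F+1) + (2*(s:ℝ)+1)*(x-F)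
        = ((2*(s:ℝ)+1)*F + (2*(s:ℝ)+1)*(x-F)*((s:ℝ)*F+1)) / ((s:ℝ)*F+1) := by
      field_simp
      try ring
    rw [e, div_le_div_iff₀ ha hb]
    nlinarith [mul_nonneg (mul_nonneg h2s.le (sub_nonneg.2 hxF)) hprod]
  have hstep : (2*(s:ℝ)+1)*(x - F) ≤ ε := by
    have hlt : x - F < ε' := by linarith
    calc (2*(s:ℝ)+1)*(x-F) ≤ (2*(s:ℝ)+1)*ε' :=
          mul_le_mul_of_nonneg_left hlt.le h2s.le
      _ = ε := by
          rw [hε'def, mul_div_cancel₀ _ h2s.ne']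
  have goal1 : fracChrom (subdiv G (2*s+1)) ≤ (2*(s:ℝ)+1)*F/((s:ℝ)*F+1) + ε := by
    linarith
  calc fracChrom (subdiv G (2 * s + 1)) ≤ (2*(s:ℝ)+1)*F/((s:ℝ)*F+1) + ε := goal1
    _ = (2 * (s:ℝ) + 1) * F / ((s : ℝ) * F + 1) + ε := rfl
end

section
/- Let G be a graph, let m > 2n be positive integers, and let s be a non-negative integer. If there is a homomorphism from G to the Kneser graph KG(m,n), then there is a homomorphism from G to the generalized Kneser graph KG((2s+1)m, sm+n, (m−2n)s). -/
open SimpleGraph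

/-- The generalized Kneser graph `KG(m, n, t)`: vertices are the `n`-element subsets of
an `m`-set, two distinct ones adjacent iff they intersect in at most `t` elements. -/
def genKneserG (m n t : ℕ) : SimpleGraph {A : Finset (Fin m) // A.card = n} :=
  SimpleGraph.fromRel fun A B => (A.1 ∩ B.1).card ≤ t

namespace Stmt15

/-- The "middle" block indices `1..s` inside `Fin (2s+1)`. -/
def Iset (s : ℕ) : Finset (Fin (2 * s + 1)) :=
  Finset.univ.filter fun i => 1 ≤ i.val ∧ i.val ≤ s

lemma card_Iset (s : ℕ) : (Iset s).card = s := by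
  have h1 : (Iset s).card
      = ((Finset.range (2 * s + 1)).filter fun i => 1 ≤ i ∧ i ≤ s).card := by
    rw [Iset, Finset.card_filter, Finset.card_filter,
      Fin.sum_univ_eq_sum_range (fun i => if 1 ≤ i ∧ i ≤ s then 1 else 0)]
  have h2 : (Finset.range (2 * s + 1)).filter (fun i => 1 ≤ i ∧ i ≤ s)
      = Finset.Icc 1 s := by
    ext i; simp only [Finset.mem_filter, Finset.mem_range, Finset.mem_Icc]; omega
  rw [h1, h2, Nat.card_Icc]; omega

lemma card_Iset_compl (s : ℕ) : (Iset s)ᶜ.card = s + 1 := by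
  rw [Finset.card_compl, card_Iset, Fintype.card_fin]; omega

/-- The blown-up set. -/
def T (m s : ℕ) (A : Finset (Fin m)) : Finset (Fin (2 * s + 1) × Fin m) :=
  (Iset s ×ˢ Aᶜ) ∪ ((Iset s)ᶜ ×ˢ A)

lemma card_T {m n : ℕ} (s : ℕ) (A : Finset (Fin m)) (hA : A.card = n) (hnm : n ≤ m) :
    (T m s A).card = s * m + n := by
  have hdisj : Disjoint (Iset s ×ˢ Aᶜ) ((Iset s)ᶜ ×ˢ A) := by
    rw [Finset.disjoint_left]
    rintro ⟨i, x⟩ h1 h2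
    simp only [Finset.mem_product, Finset.mem_compl] at h1 h2
    exact h2.1 h1.1
  rw [T, Finset.card_union_of_disjoint hdisj, Finset.card_product, Finset.card_product,
    card_Iset, card_Iset_compl, Finset.card_compl, Fintype.card_fin, hA]
  calc s * (m - n) + (s + 1) * n = s * ((m - n) + n) + n := by ring
    _ = s * m + n := by rw [Nat.sub_add_cancel hnm]

lemma T_inter (m s : ℕ) (A B : Finset (Fin m)) :
    T m s A ∩ T m s B = (Iset s ×ˢ (Aᶜ ∩ Bᶜ)) ∪ ((Iset s)ᶜ ×ˢ (A ∩ B)) := by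
  ext ⟨i, x⟩
  simp only [T, Finset.mem_inter, Finset.mem_union, Finset.mem_product, Finset.mem_compl]
  tauto

lemma card_T_inter {m n : ℕ} (s : ℕ) (A B : Finset (Fin m))
    (hA : A.card = n) (hB : B.card = n) (hAB : Disjoint A B) (hm : 2 * n ≤ m) :
    (T m s A ∩ T m s B).card = (m - 2 * n) * s := by
  have hABe : A ∩ B = ∅ := Finset.disjoint_iff_inter_eq_empty.mp hAB
  have hcc : Aᶜ ∩ Bᶜ = (A ∪ B)ᶜ := (Finset.compl_union A B).symm
  have hccc : (Aᶜ ∩ Bᶜ).card = m - 2 * n := by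
    rw [hcc, Finset.card_compl, Fintype.card_fin, Finset.card_union_of_disjoint hAB, hA, hB]
    omega
  have hd2 : Disjoint (Iset s ×ˢ (Aᶜ ∩ Bᶜ)) ((Iset s)ᶜ ×ˢ (A ∩ B)) := by
    rw [Finset.disjoint_left]
    rintro ⟨i, x⟩ h1 h2
    simp only [Finset.mem_product, Finset.mem_compl] at h1 h2
    exact h2.1 h1.1
  rw [T_inter, Finset.card_union_of_disjoint hd2, Finset.card_product, Finset.card_product,
    hABe, Finset.card_empty, card_Iset, hccc]
  ring

end Stmt15

/-- If `m > 2n > 0`, `s ≥ 0`, and there is a homomorphism from `G` to the Kneser graph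
`KG(m, n)`, then there is a homomorphism from `G` to the generalized Kneser graph
`KG((2s+1)m, sm+n, (m-2n)s)`. -/
theorem stmt_15 {V : Type*} (G : SimpleGraph V) (m n s : ℕ) (hn : 0 < n) (hm : 2 * n < m)
    (h : Nonempty (G →g kneserG m n)) :
    Nonempty (G →g genKneserG ((2 * s + 1) * m) (s * m + n) ((m - 2 * n) * s)) := by
  obtain ⟨g⟩ := h
  have hnm : n ≤ m := by omega
  set e : Fin (2 * s + 1) × Fin m ≃ Fin ((2 * s + 1) * m) := finProdFinEquiv with he
  let F : {A : Finset (Fin m) // A.card = n} →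
      {A : Finset (Fin ((2 * s + 1) * m)) // A.card = s * m + n} :=
    fun A => ⟨(Stmt15.T m s A.1).map e.toEmbedding, by
      rw [Finset.card_map]; exact Stmt15.card_T s A.1 A.2 hnm⟩
  have key : ∀ A B : {A : Finset (Fin m) // A.card = n}, Disjoint A.1 B.1 →
      ((F A).1 ∩ (F B).1).card = (m - 2 * n) * s := by
    intro A B hAB
    show ((Stmt15.T m s A.1).map e.toEmbedding ∩ (Stmt15.T m s B.1).map e.toEmbedding).card
      = (m - 2 * n) * s
    rw [← Finset.map_inter, Finset.card_map]
    exact Stmt15.card_T_inter s A.1 B.1 A.2 B.2 hAB (le_of_lt hm)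
  have hlt : (m - 2 * n) * s < s * m + n := by
    have h1 : (m - 2 * n) * s ≤ m * s := Nat.mul_le_mul_right s (Nat.sub_le m (2 * n))
    have h2 : m * s = s * m := Nat.mul_comm m s
    omega
  refine ⟨SimpleGraph.Hom.comp ⟨F, ?_⟩ g⟩
  intro A B hAB
  rw [kneserG, SimpleGraph.fromRel_adj] at hAB
  obtain ⟨hne, hd⟩ := hAB
  have hdisj : Disjoint A.1 B.1 := by
    rcases hd with h | h
    · exact h
    · exact h.symm
  have hcard := key A B hdisj
  rw [genKneserG, SimpleGraph.fromRel_adj]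
  constructor
  · intro hEq
    rw [hEq] at hcard
    rw [Finset.inter_self] at hcard
    have := (F B).2
    omega
  · left; omega
end
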